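/- arXiv:2104.12264 — 6 statements merged into one kernel-verified Lean document; each statement's English description precedes it below -/
import Mathlib

section
/- For every odd prime p, (p-1)! ≡ p·B_{p-1} − p (mod p²), where B_{p-1} is the (p-1)-th Bernoulli number (note p·B_{p-1} is a p-adic integer by Von Staudt–Clausen, so the congruence is between p-adic integers / rationals with denominator prime to p after clearing). -/
/-- `a ≡ b (mod p^n)` as rationals: `p^n` divides the numerator of `a - b`,
the denominator being prime to `p`. -/
def rcong (p n : ℕ) (a b : ℚ) : Prop :=
  a = b ∨ (n : ℤ) ≤ padicValRat p (a - b)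

section GlaisherAux

open Polynomial Finset


lemma ultra_sum {p : ℕ} [Fact p.Prime] {ι : Type*} (s : Finset ι) (f : ι → ℚ_[p]) {C : ℝ}
    (hC : 0 ≤ C) (h : ∀ i ∈ s, ‖f i‖ ≤ C) : ‖∑ i ∈ s, f i‖ ≤ C := by
  induction s using Finset.cons_induction with
  | empty => simpa using hC
  | cons a s ha ih =>
    rw [Finset.sum_cons]
    exact le_trans (Padic.nonarchimedean _ _)
      (max_le (h a (Finset.mem_cons_self _ _))
        (ih fun i hi => h i (Finset.mem_cons_of_mem hi)))

lemma norm_natCast_le_one (p : ℕ) [Fact p.Prime] (n : ℕ) : ‖(n : ℚ_[p])‖ ≤ 1 := by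
  have := Padic.norm_int_le_one (p := p) (n : ℤ)
  push_cast at this; exact this

lemma norm_natCast_eq_one {p : ℕ} [Fact p.Prime] {n : ℕ} (h : ¬ p ∣ n) :
    ‖(n : ℚ_[p])‖ = 1 := by
  have h1 := norm_natCast_le_one p n
  have h2 : ¬ ‖((n : ℤ) : ℚ_[p])‖ < 1 := by
    rw [Padic.norm_intCast_lt_one_iff]; exact_mod_cast h
  push_cast at h2
  exact le_antisymm h1 (not_lt.mp h2)

lemma bern_split (p m : ℕ) :
    (∑ k ∈ range p, (k : ℚ) ^ m) =
      (∑ i ∈ range m, _root_.bernoulli i * ((m + 1).choose i) * (p : ℚ) ^ (m + 1 - i) / (m + 1))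
        + (p : ℚ) * _root_.bernoulli m := by
  rw [sum_range_pow, Finset.sum_range_succ]
  congr 1
  rw [Nat.choose_succ_self_right]
  have h1 : m + 1 - m = 1 := by omega
  rw [h1]
  have : ((m : ℚ) + 1) ≠ 0 := by positivity
  field_simp
  push_cast
  ring

lemma norm_ppow_le {p : ℕ} [hp : Fact p.Prime] (e c : ℕ) (h : c ≤ e) :
    ‖((p : ℚ_[p]) ^ e)‖ ≤ ((p : ℝ))⁻¹ ^ c := by
  have hp1 : (1:ℝ) < p := by exact_mod_cast hp.out.one_lt
  rw [norm_pow, Padic.norm_p]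
  have h0 : (0:ℝ) < (p:ℝ)⁻¹ := by positivity
  have h1 : (p:ℝ)⁻¹ ≤ 1 := inv_le_one_of_one_le₀ hp1.le
  exact pow_le_pow_of_le_one (le_of_lt h0) h1 h

lemma bernoulli_norm_le (p : ℕ) [hp : Fact p.Prime] :
    ∀ m, m + 1 < p → ‖((_root_.bernoulli m : ℚ) : ℚ_[p])‖ ≤ p := by
  intro m
  induction m using Nat.strong_induction_on with
  | _ m IH =>
    intro hm
    have hp1 : (1:ℝ) < p := by exact_mod_cast hp.out.one_lt
    have hx : (0:ℝ) < p := by positivity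
    have key : (p : ℚ) * _root_.bernoulli m = (∑ k ∈ range p, (k : ℚ) ^ m)
        - ∑ i ∈ range m, _root_.bernoulli i * ((m + 1).choose i) * (p : ℚ) ^ (m + 1 - i) / (m + 1) := by
      rw [bern_split]; ring
    have hnorm : ‖(((p : ℚ) * _root_.bernoulli m : ℚ) : ℚ_[p])‖ ≤ 1 := by
      rw [key]
      push_cast
      rw [sub_eq_add_neg]
      refine le_trans (Padic.nonarchimedean _ _) (max_le ?_ ?_)
      · refine ultra_sum _ _ zero_le_one fun k _ => ?_
        rw [norm_pow]
        exact pow_le_one₀ (norm_nonneg _) (norm_natCast_le_one p k)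
      · rw [norm_neg]
        refine ultra_sum _ _ zero_le_one fun i hi => ?_
        rw [Finset.mem_range] at hi
        have h2 : 2 ≤ m + 1 - i := by omega
        rw [norm_div, norm_mul, norm_mul]
        have b1 : ‖((_root_.bernoulli i : ℚ) : ℚ_[p])‖ ≤ p := IH i hi (by omega)
        have b2 : ‖(((m+1).choose i : ℚ_[p]))‖ ≤ 1 := norm_natCast_le_one p ((m+1).choose i)
        have b3 : ‖((p:ℚ_[p]) ^ (m + 1 - i))‖ ≤ ((p:ℝ))⁻¹ ^ 2 := norm_ppow_le _ _ h2
        have b4 : ‖((m : ℚ_[p]) + 1)‖ = 1 := by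
          have hc : ((m : ℚ_[p]) + 1) = ((m + 1 : ℕ) : ℚ_[p]) := by push_cast; ring
          rw [hc]
          exact norm_natCast_eq_one (Nat.not_dvd_of_pos_of_lt (by omega) hm)
        rw [b4, div_one]
        calc ‖((_root_.bernoulli i : ℚ) : ℚ_[p])‖ * ‖(((m+1).choose i : ℚ_[p]))‖ * ‖(p:ℚ_[p]) ^ (m+1-i)‖
            ≤ (p : ℝ) * 1 * ((p:ℝ))⁻¹ ^ 2 := by
              gcongr
          _ ≤ 1 := by
              rw [mul_one, sq, ← mul_assoc, mul_inv_cancel₀ hx.ne', one_mul]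
              exact inv_le_one_of_one_le₀ hp1.le
    push_cast at hnorm
    rw [norm_mul, Padic.norm_p] at hnorm
    have h2 := mul_le_mul_of_nonneg_left hnorm hx.le
    rw [mul_one, ← mul_assoc, mul_inv_cancel₀ hx.ne', one_mul] at h2
    exact h2



lemma norm_natCast_le_of_dvd {p : ℕ} [hp : Fact p.Prime] {k n : ℕ} (h : p ^ n ∣ k) :
    ‖(k : ℚ_[p])‖ ≤ ((p:ℝ))⁻¹ ^ n := by
  have h1 : ‖((k : ℤ) : ℚ_[p])‖ ≤ (p : ℝ) ^ (-n : ℤ) :=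
    (Padic.norm_int_le_pow_iff_dvd _ _).mpr (by exact_mod_cast h)
  push_cast at h1
  rwa [zpow_neg, zpow_natCast, ← inv_pow] at h1

lemma partB (p : ℕ) [hp : Fact p.Prime] (hodd : Odd p) (hp3 : 3 ≤ p) :
    ‖(((∑ k ∈ range p, (k : ℚ) ^ (p - 1)) - (p : ℚ) * _root_.bernoulli (p - 1) : ℚ) : ℚ_[p])‖
      ≤ ((p : ℝ))⁻¹ ^ 2 := by
  have hp1 : (1:ℝ) < p := by exact_mod_cast hp.out.one_lt
  have hinv0 : (0:ℝ) ≤ (p:ℝ)⁻¹ ^ 2 := by positivity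
  have hm : p - 1 + 1 = p := by omega
  have key : (∑ k ∈ range p, (k : ℚ) ^ (p - 1)) - (p : ℚ) * _root_.bernoulli (p - 1)
      = ∑ i ∈ range (p - 1), _root_.bernoulli i * (p.choose i) * (p : ℚ) ^ (p - i) / p := by
    rw [bern_split p (p - 1), hm, add_sub_cancel_right]
    have hd : ((p - 1 : ℕ) : ℚ) + 1 = (p : ℚ) := by exact_mod_cast hm
    rw [hd]
  rw [key]
  push_cast
  refine ultra_sum _ _ hinv0 fun i hi => ?_
  rw [Finset.mem_range] at hi
  rw [norm_div, norm_mul, norm_mul, Padic.norm_p, div_eq_mul_inv, inv_inv]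
  -- goal : ‖B_i‖ * ‖choose‖ * ‖p^(p-i)‖ * p ≤ p⁻¹^2
  rcases Nat.eq_zero_or_pos i with rfl | hi0
  · -- i = 0
    simp only [_root_.bernoulli_zero, Nat.choose_zero_right, Nat.cast_one, Nat.sub_zero,
      Rat.cast_one, norm_one, one_mul]
    have b3 : ‖((p:ℚ_[p]) ^ p)‖ ≤ ((p:ℝ))⁻¹ ^ 3 := norm_ppow_le _ _ hp3
    calc ‖(p:ℚ_[p]) ^ p‖ * p ≤ ((p:ℝ))⁻¹ ^ 3 * p := by gcongr
      _ = (p:ℝ)⁻¹ ^ 2 * ((p:ℝ)⁻¹ * p) := by ring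
      _ = (p:ℝ)⁻¹ ^ 2 := by rw [inv_mul_cancel₀ (by positivity), mul_one]
  · rcases Nat.even_or_odd i with hev | hodd_i
    · -- i even, 1 ≤ i; since p-2 is odd and i < p-1, i ≤ p-3
      have hile : i ≤ p - 3 := by
        rcases hodd with ⟨t, ht⟩
        rcases hev with ⟨s, hs⟩
        omega
      have b1 : ‖((_root_.bernoulli i : ℚ) : ℚ_[p])‖ ≤ p := bernoulli_norm_le p i (by omega)
      have b2 : ‖((p.choose i : ℕ) : ℚ_[p])‖ ≤ ((p:ℝ))⁻¹ ^ 1 :=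
        norm_natCast_le_of_dvd (by simpa using hp.out.dvd_choose_self (by omega) (by omega))
      have b3 : ‖((p:ℚ_[p]) ^ (p - i))‖ ≤ ((p:ℝ))⁻¹ ^ 3 := norm_ppow_le _ _ (by omega)
      calc ‖((_root_.bernoulli i : ℚ) : ℚ_[p])‖ * ‖((p.choose i : ℕ) : ℚ_[p])‖ * ‖(p:ℚ_[p]) ^ (p - i)‖ * p
          ≤ (p:ℝ) * ((p:ℝ))⁻¹ ^ 1 * ((p:ℝ))⁻¹ ^ 3 * p := by gcongr
        _ = (p:ℝ)⁻¹ ^ 2 * (((p:ℝ)⁻¹ * p) * ((p:ℝ)⁻¹ * p)) := by ring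
        _ = (p:ℝ)⁻¹ ^ 2 := by rw [inv_mul_cancel₀ (by positivity)]; ring
    · -- i odd
      rcases Nat.lt_or_ge i 2 with h2 | h2
      · -- i = 1
        have : i = 1 := by omega
        subst this
        rw [_root_.bernoulli_one]
        have hc : (p.choose 1 : ℕ) = p := Nat.choose_one_right p
        rw [hc]
        have b3 : ‖((p:ℚ_[p]) ^ (p - 1))‖ ≤ ((p:ℝ))⁻¹ ^ 2 := norm_ppow_le _ _ (by omega)
        have bhalf : ‖((-1/2 : ℚ) : ℚ_[p])‖ ≤ 1 := by
          rw [show ((-1/2 : ℚ) : ℚ_[p]) = -(((2:ℕ) : ℚ_[p]))⁻¹ by push_cast; ring, norm_neg,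
            norm_inv, norm_natCast_eq_one (Nat.not_dvd_of_pos_of_lt (by omega) (by omega))]
          norm_num
        rw [Padic.norm_p]
        calc ‖((-1/2 : ℚ) : ℚ_[p])‖ * (p:ℝ)⁻¹ * ‖(p:ℚ_[p]) ^ (p - 1)‖ * p
            ≤ 1 * (p:ℝ)⁻¹ * ((p:ℝ)⁻¹ ^ 2) * p := by gcongr
        _ = (p:ℝ)⁻¹ ^ 2 * ((p:ℝ)⁻¹ * p) := by ring
        _ = (p:ℝ)⁻¹ ^ 2 := by rw [inv_mul_cancel₀ (by positivity), mul_one]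
      · -- i odd > 1 : bernoulli i = 0
        have hz : _root_.bernoulli i = 0 := by
          rw [bernoulli_eq_bernoulli'_of_ne_one (by omega)]
          exact bernoulli'_eq_zero_of_odd hodd_i (by omega)
        rw [hz]
        rw [Rat.cast_zero, norm_zero, zero_mul, zero_mul, zero_mul]
        positivity



lemma prod_univ_X_sub_C (p : ℕ) [hp : Fact p.Prime] :
    ∏ a : ZMod p, (X - C a) = X ^ p - X := by
  have hcard : Fintype.card (ZMod p) = p := ZMod.card p
  have hdeg : (X ^ p - X : (ZMod p)[X]).natDegree = p :=
    FiniteField.X_pow_card_sub_X_natDegree_eq _ hp.out.one_lt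
  have hroots : (X ^ p - X : (ZMod p)[X]).roots = Finset.univ.val := by
    have := FiniteField.roots_X_pow_card_sub_X (K := ZMod p)
    rwa [hcard] at this
  have hcount : Multiset.card (X ^ p - X : (ZMod p)[X]).roots
      = (X ^ p - X : (ZMod p)[X]).natDegree := by
    rw [hroots, hdeg]
    simp [hcard]
  have hlead : (X ^ p - X : (ZMod p)[X]).leadingCoeff = 1 := by
    have h1 := hp.out.one_lt
    rw [leadingCoeff, hdeg, coeff_sub, coeff_X_pow, if_pos rfl, Polynomial.coeff_X,
      if_neg (by omega), sub_zero]
  have := C_leadingCoeff_mul_prod_multiset_X_sub_C hcount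
  rw [hlead, map_one, one_mul, hroots] at this
  rw [← this]
  rfl

lemma prod_erase_X_sub_C (p : ℕ) [hp : Fact p.Prime] :
    ∏ a ∈ (Finset.univ.erase (0 : ZMod p)), (X - C a) = X ^ (p - 1) - 1 := by
  have h1 : (X : (ZMod p)[X]) * ∏ a ∈ (Finset.univ.erase (0 : ZMod p)), (X - C a)
      = X * (X ^ (p - 1) - 1) := by
    have hins : (X : (ZMod p)[X]) * ∏ a ∈ (Finset.univ.erase (0 : ZMod p)), (X - C a)
        = ∏ a : ZMod p, (X - C a) := by
      rw [← Finset.prod_erase_mul _ _ (Finset.mem_univ (0 : ZMod p))]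
      rw [map_zero, sub_zero, mul_comm]
    have h2 := hp.out.two_le
    rw [hins, prod_univ_X_sub_C p, mul_sub, mul_one, ← pow_succ']
    congr 2
    omega
  exact mul_left_cancel₀ X_ne_zero h1

lemma map_f_eq (p : ℕ) [hp : Fact p.Prime] :
    (∏ k ∈ range (p - 1), (X - C ((k : ℤ) + 1))).map (Int.castRingHom (ZMod p))
      = X ^ (p - 1) - 1 := by
  rw [Polynomial.map_prod]
  rw [← prod_erase_X_sub_C p]
  refine Finset.prod_nbij' (fun k => ((k + 1 : ℕ) : ZMod p)) (fun a => a.val - 1) ?_ ?_ ?_ ?_ ?_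
  · intro k hk
    rw [Finset.mem_range] at hk
    refine Finset.mem_erase.mpr ⟨?_, Finset.mem_univ _⟩
    intro h0
    have := (ZMod.natCast_eq_zero_iff (k + 1) p).mp h0
    have := Nat.le_of_dvd (by omega) this
    omega
  · intro a ha
    have ha0 : a ≠ 0 := (Finset.mem_erase.mp ha).1
    have hlt : a.val < p := ZMod.val_lt a
    have hv : 1 ≤ a.val := by
      rcases Nat.eq_zero_or_pos a.val with h | h
      · exact absurd (by rw [← ZMod.natCast_rightInverse a, h]; simp) ha0
      · exact h
    exact Finset.mem_range.mpr (by show a.val - 1 < p - 1; omega)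
  · intro k hk
    rw [Finset.mem_range] at hk
    show (((k + 1 : ℕ) : ZMod p)).val - 1 = k
    rw [ZMod.val_cast_of_lt (by omega)]
    omega
  · intro a ha
    have ha0 : a ≠ 0 := (Finset.mem_erase.mp ha).1
    have hv : 1 ≤ a.val := by
      rcases Nat.eq_zero_or_pos a.val with h | h
      · exact absurd (by rw [← ZMod.natCast_rightInverse a, h]; simp) ha0
      · exact h
    show (((a.val - 1) + 1 : ℕ) : ZMod p) = a
    rw [Nat.sub_add_cancel hv]
    exact ZMod.natCast_rightInverse a
  · intro k hk
    rw [Polynomial.map_sub, Polynomial.map_X, Polynomial.map_C]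
    congr 1
    simp only [Int.coe_castRingHom]
    push_cast
    ring



lemma partA (p : ℕ) [hp : Fact p.Prime] (hodd : Odd p) :
    ((p:ℤ)^2) ∣ (((p-1).factorial : ℤ) + p - ∑ k ∈ range p, (k:ℤ)^(p-1)) := by
  have hp2 := hp.out.two_le
  set φ := Int.castRingHom (ZMod p) with hφ
  set f : ℤ[X] := ∏ k ∈ range (p-1), (X - C ((k:ℤ)+1)) with hf
  set h : ℤ[X] := f - (X ^ (p-1) - 1) with hh
  have hmap : h.map φ = 0 := by
    rw [hh, Polynomial.map_sub, map_f_eq p, Polynomial.map_sub, Polynomial.map_pow,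
      Polynomial.map_X, Polynomial.map_one, sub_self]
  have hdvd : C (p:ℤ) ∣ h := by
    rw [Polynomial.C_dvd_iff_dvd_coeff]
    intro n
    have h0 : (h.map φ).coeff n = 0 := by rw [hmap, Polynomial.coeff_zero]
    rw [Polynomial.coeff_map] at h0
    exact_mod_cast (ZMod.intCast_zmod_eq_zero_iff_dvd _ p).mp h0
  obtain ⟨g, hg⟩ := hdvd
  have hfmonic : f.Monic := monic_prod_of_monic _ _ fun k _ => monic_X_sub_C _
  have hfdeg : f.natDegree = p - 1 := by
    rw [hf, natDegree_prod _ _ (fun k _ => X_sub_C_ne_zero _)]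
    simp only [natDegree_X_sub_C]
    rw [Finset.sum_const, Finset.card_range, smul_eq_mul, mul_one]
  have hhdeg : h.natDegree ≤ p - 2 := by
    rw [Polynomial.natDegree_le_iff_coeff_eq_zero]
    intro N hN
    rw [hh, Polynomial.coeff_sub, Polynomial.coeff_sub, Polynomial.coeff_X_pow,
      Polynomial.coeff_one]
    rcases Nat.eq_or_lt_of_le (show p - 1 ≤ N by omega) with hN1 | hN1
    · rw [← hN1, if_pos rfl, if_neg (by omega)]
      have : f.coeff (p-1) = 1 := by
        have := hfmonic.coeff_natDegree
        rwa [hfdeg] at this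
      rw [this]; ring
    · rw [if_neg (by omega), if_neg (by omega)]
      rw [Polynomial.coeff_eq_zero_of_natDegree_lt (by omega : f.natDegree < N)]
      ring
  have hgdeg : g.natDegree ≤ p - 2 := by
    have hne : (p : ℤ) ≠ 0 := by exact_mod_cast hp.out.ne_zero
    have := Polynomial.natDegree_C_mul (p := g) hne
    rw [← hg] at this
    omega
  -- divisibility of the g-sum
  have hgsum : (p:ℤ) ∣ ∑ k ∈ range p, g.eval (k:ℤ) := by
    have hzero : ((∑ k ∈ range p, g.eval (k:ℤ) : ℤ) : ZMod p) = 0 := by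
      push_cast
      have hev : ∀ k : ℕ, ((g.eval (k:ℤ) : ℤ) : ZMod p) = (g.map φ).eval ((k : ℕ) : ZMod p) := by
        intro k
        rw [Polynomial.eval_map]
        have : ((k : ℕ) : ZMod p) = φ (k : ℤ) := by simp [hφ]
        rw [this, Polynomial.eval₂_at_apply]
        rfl
      calc (∑ k ∈ range p, ((g.eval (k:ℤ) : ℤ) : ZMod p))
          = ∑ k ∈ range p, (g.map φ).eval ((k : ℕ) : ZMod p) := by
            exact Finset.sum_congr rfl fun k _ => hev k
        _ = ∑ x : ZMod p, (g.map φ).eval x := by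
            refine Finset.sum_nbij' (fun k => ((k : ℕ) : ZMod p)) (fun a => a.val)
              (fun k _ => Finset.mem_univ _)
              (fun a _ => Finset.mem_range.mpr (ZMod.val_lt a))
              (fun k hk => ZMod.val_cast_of_lt (Finset.mem_range.mp hk))
              (fun a _ => ZMod.natCast_rightInverse a)
              (fun k _ => rfl)
        _ = ∑ x : ZMod p, ∑ i ∈ range ((g.map φ).natDegree + 1), (g.map φ).coeff i * x ^ i := by
            exact Finset.sum_congr rfl fun x _ => Polynomial.eval_eq_sum_range x
        _ = ∑ i ∈ range ((g.map φ).natDegree + 1), ∑ x : ZMod p, (g.map φ).coeff i * x ^ i :=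
            Finset.sum_comm
        _ = 0 := by
            refine Finset.sum_eq_zero fun i hi => ?_
            rw [Finset.mem_range] at hi
            rw [← Finset.mul_sum]
            have hideg : i < Fintype.card (ZMod p) - 1 := by
              have := Polynomial.natDegree_map_le (f := φ) (p := g)
              rw [ZMod.card]
              omega
            rw [FiniteField.sum_pow_lt_card_sub_one _ i hideg, mul_zero]
    exact_mod_cast (ZMod.intCast_zmod_eq_zero_iff_dvd _ p).mp hzero
  -- evaluation of the h-sum
  have hp1 : p - 1 + 1 = p := by omega
  have hfeval0 : f.eval 0 = ((p-1).factorial : ℤ) := by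
    rw [hf, Polynomial.eval_prod]
    have : ∀ k ∈ range (p-1), (X - C ((k:ℤ)+1)).eval 0 = (-1) * ((k:ℤ)+1) := by
      intro k _; simp
    rw [Finset.prod_congr rfl this, Finset.prod_mul_distrib, Finset.prod_const,
      Finset.card_range]
    have heven : Even (p - 1) := Nat.Odd.sub_odd hodd odd_one
    rw [heven.neg_one_pow, one_mul]
    rw [← Finset.prod_range_add_one_eq_factorial (p-1)]
    push_cast
    rfl
  have hEval : ∑ k ∈ range p, h.eval (k:ℤ) =
      ((p-1).factorial : ℤ) + p - ∑ k ∈ range p, (k:ℤ)^(p-1) := by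
    rw [show p = (p-1)+1 from hp1.symm]
    rw [Finset.sum_range_succ', Finset.sum_range_succ' (fun k => (k:ℤ)^((p-1)+1-1))]
    simp only [hp1]
    have hhk : ∀ k ∈ range (p-1), h.eval ((k+1 : ℕ):ℤ) = 1 - ((k+1:ℕ):ℤ)^(p-1) := by
      intro k hk
      rw [hh, Polynomial.eval_sub, Polynomial.eval_sub, Polynomial.eval_pow, Polynomial.eval_X,
        Polynomial.eval_one]
      have hf0 : f.eval ((k+1:ℕ):ℤ) = 0 := by
        rw [hf, Polynomial.eval_prod]
        refine Finset.prod_eq_zero hk ?_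
        simp
      rw [hf0]
      ring
    rw [Finset.sum_congr rfl hhk]
    have hh0 : h.eval 0 = ((p-1).factorial : ℤ) + 1 := by
      rw [hh, Polynomial.eval_sub, Polynomial.eval_sub, Polynomial.eval_pow, Polynomial.eval_X,
        Polynomial.eval_one, hfeval0, zero_pow (by omega : p - 1 ≠ 0)]
      ring
    rw [Nat.cast_zero, hh0]
    rw [Finset.sum_sub_distrib, Finset.sum_const, Finset.card_range, zero_pow (by omega : p - 1 ≠ 0)]
    rw [nsmul_eq_mul, mul_one, Nat.cast_sub (by omega : 1 ≤ p)]
    push_cast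
    ring
  -- combine
  obtain ⟨t, ht⟩ := hgsum
  rw [← hEval, hg]
  have : ∑ k ∈ range p, (C (p:ℤ) * g).eval (k:ℤ) = (p:ℤ) * ∑ k ∈ range p, g.eval (k:ℤ) := by
    rw [Finset.mul_sum]
    exact Finset.sum_congr rfl fun k _ => by rw [Polynomial.eval_mul, Polynomial.eval_C]
  rw [this, ht]
  exact ⟨t, by ring⟩


end GlaisherAux

theorem glaisher_wilson_mod_p_sq (p : ℕ) (hp : p.Prime) (hodd : Odd p) :
    rcong p 2 ((Nat.factorial (p - 1) : ℚ))
      ((p : ℚ) * bernoulli (p - 1) - (p : ℚ)) := by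
  haveI : Fact p.Prime := ⟨hp⟩
  have hp3 : 3 ≤ p := by
    have hodd' := hodd
    rcases hodd' with ⟨t, ht⟩
    have := hp.two_le
    omega
  have hp1R : (1:ℝ) < p := by exact_mod_cast hp.one_lt
  set a : ℚ := (Nat.factorial (p - 1) : ℚ) with ha
  set b : ℚ := (p : ℚ) * bernoulli (p - 1) - (p : ℚ) with hb
  by_cases hab : a = b
  · exact Or.inl hab
  refine Or.inr ?_
  have key : (a - b : ℚ) =
      ((((p-1).factorial : ℤ) + p - ∑ k ∈ Finset.range p, (k:ℤ)^(p-1) : ℤ) : ℚ)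
        + ((∑ k ∈ Finset.range p, (k:ℚ)^(p-1)) - (p:ℚ) * bernoulli (p-1)) := by
    rw [ha, hb]
    push_cast
    ring
  have hnorm : ‖((a - b : ℚ) : ℚ_[p])‖ ≤ ((p:ℝ))⁻¹ ^ 2 := by
    rw [key]
    push_cast
    refine le_trans (Padic.nonarchimedean _ _) (max_le ?_ ?_)
    · have hdvd := partA p hodd
      have h1 : ‖(((((p-1).factorial : ℤ) + p - ∑ k ∈ Finset.range p, (k:ℤ)^(p-1)) : ℤ) : ℚ_[p])‖
          ≤ (p : ℝ) ^ (-(2:ℕ) : ℤ) :=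
        (Padic.norm_int_le_pow_iff_dvd _ _).mpr (by exact_mod_cast hdvd)
      rw [zpow_neg, zpow_natCast, ← inv_pow] at h1
      refine le_trans (le_of_eq ?_) h1
      push_cast
      ring_nf
    · have := partB p hodd hp3
      refine le_trans (le_of_eq ?_) this
      push_cast
      ring_nf
  have hne : a - b ≠ 0 := sub_ne_zero.mpr hab
  have h1 : ‖((a - b : ℚ) : ℚ_[p])‖ = ((padicNorm p (a - b) : ℚ) : ℝ) :=
    Padic.eq_padicNorm _
  rw [padicNorm.eq_zpow_of_nonzero hne] at h1
  rw [h1] at hnorm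
  push_cast at hnorm
  have h2 : ((p:ℝ))⁻¹ ^ 2 = (p:ℝ) ^ (-(2:ℤ)) := by
    rw [zpow_neg, inv_pow]
    norm_cast
  rw [h2] at hnorm
  have h3 := (zpow_le_zpow_iff_right₀ hp1R).mp hnorm
  have : (2:ℤ) ≤ padicValRat p (a - b) := by linarith
  exact_mod_cast this
end

section
/- For every prime p ≥ 5, the harmonic number H_{p-1,1} = Σ_{a=1}^{p-1} 1/a satisfies H_{p-1,1} ≡ 0 (mod p²), and H_{p-1,2} = Σ_{a=1}^{p-1} 1/a² satisfies H_{p-1,2} ≡ 0 (mod p). -/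
open Finset

lemma sumsq_zero (p : ℕ) [hhp : Fact p.Prime] (hge : 5 ≤ p) :
    ∑ x : ZMod p, x ^ 2 = 0 := by
  have hp := hhp.out
  have h2 : (2 : ZMod p) ≠ 0 := by
    have : ((2:ℕ) : ZMod p) ≠ 0 := by
      rw [Ne, ZMod.natCast_eq_zero_iff]
      intro h; have := Nat.le_of_dvd (by norm_num) h; omega
    simpa using this
  have h3 : (3 : ZMod p) ≠ 0 := by
    have : ((3:ℕ) : ZMod p) ≠ 0 := by
      rw [Ne, ZMod.natCast_eq_zero_iff]
      intro h; have := Nat.le_of_dvd (by norm_num) h; omega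
    simpa using this
  have h : ∑ x : ZMod p, (2 * x) ^ 2 = ∑ x : ZMod p, x ^ 2 :=
    Fintype.sum_bijective _ (Equiv.mulLeft₀ (2 : ZMod p) h2).bijective _ _ (fun x => rfl)
  have h4 : ∑ x : ZMod p, (2 * x) ^ 2 = 4 * ∑ x : ZMod p, x ^ 2 := by
    rw [Finset.mul_sum]; congr 1; ext x; ring
  have : (3 : ZMod p) * ∑ x : ZMod p, x ^ 2 = 0 := by
    rw [h4] at h; linear_combination h
  exact (mul_eq_zero.mp this).resolve_left h3

lemma suminvsq_zero (p : ℕ) [hhp : Fact p.Prime] (hge : 5 ≤ p) :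
    ∑ a ∈ Icc 1 (p-1), ((a : ZMod p)⁻¹) ^ 2 = 0 := by
  have hp := hhp.out
  have key : ∑ a ∈ Icc 1 (p-1), ((a : ZMod p)⁻¹) ^ 2
      = ∑ x ∈ (Finset.univ.erase (0 : ZMod p)), (x⁻¹) ^ 2 := by
    apply Finset.sum_bij' (fun (a : ℕ) _ => (a : ZMod p)) (fun x _ => x.val)
    · intro a ha
      simp only [mem_Icc] at ha
      rw [Finset.mem_erase]
      refine ⟨?_, Finset.mem_univ _⟩
      rw [Ne, ZMod.natCast_eq_zero_iff]
      intro h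
      rcases Nat.eq_zero_or_pos a with h0 | h0
      · omega
      · have := Nat.le_of_dvd h0 h; omega
    · intro x hx
      rw [Finset.mem_erase] at hx
      rw [mem_Icc]
      have h1 : x.val < p := ZMod.val_lt x
      have h2 : x.val ≠ 0 := by
        rw [Ne, ZMod.val_eq_zero]; exact hx.1
      omega
    · intro a ha
      simp only [mem_Icc] at ha
      exact ZMod.val_cast_of_lt (by omega)
    · intro x _; exact ZMod.natCast_zmod_val x
    · intro a _; rfl
  rw [key, Finset.sum_erase _ (by simp)]
  have : ∑ x : ZMod p, (x⁻¹) ^ 2 = ∑ x : ZMod p, x ^ 2 :=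
    Fintype.sum_bijective _ (inv_involutive.bijective) _ _ (fun x => rfl)
  rw [this]
  exact sumsq_zero p hge

lemma val_ge (p : ℕ) [hhp : Fact p.Prime] (k : ℕ) (A B : ℕ) (hA : A ≠ 0)
    (hB : ¬ p ∣ B) (hdvd : p ^ k ∣ A) {q : ℚ} (hq : q = (A : ℚ) / B) :
    (k : ℤ) ≤ padicValRat p q := by
  have hB0 : B ≠ 0 := by rintro rfl; exact hB (dvd_zero _)
  have hA' : (A : ℚ) ≠ 0 := Nat.cast_ne_zero.mpr hA
  have hB' : (B : ℚ) ≠ 0 := Nat.cast_ne_zero.mpr hB0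
  rw [hq, padicValRat.div hA' hB']
  have h1 : padicValRat p (B : ℚ) = 0 := by
    rw [show ((B:ℚ)) = ((B:ℤ):ℚ) by push_cast; ring, padicValRat.of_int (p := p),
      padicValInt.eq_zero_of_not_dvd (by exact_mod_cast hB)]; simp
  have h2 : (k : ℤ) ≤ padicValRat p (A : ℚ) := by
    rw [show ((A:ℚ)) = ((A:ℤ):ℚ) by push_cast; ring, padicValRat.of_int (p := p)]
    have := (padicValInt_dvd_iff (p := p) k (A : ℤ)).mp (by exact_mod_cast hdvd)
    rcases this with h | h
    · exact absurd (by exact_mod_cast h) hA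
    · exact_mod_cast h
  omega

theorem wolstenholme (p : ℕ) (hp : p.Prime) (hge : 5 ≤ p) :
    rcong p 2 (∑ a ∈ Finset.Icc 1 (p - 1), 1 / (a : ℚ)) 0 ∧
    rcong p 1 (∑ a ∈ Finset.Icc 1 (p - 1), 1 / (a : ℚ) ^ 2) 0 := by
  haveI := Fact.mk hp
  set n := p - 1 with hn
  set D := Nat.factorial n with hDdef
  have hD0 : 0 < D := Nat.factorial_pos n
  have hpD : ¬ p ∣ D := by
    rw [hp.dvd_factorial]; omega
  -- basic facts for a ∈ Icc 1 n
  have hmem : ∀ a ∈ Icc 1 n, 1 ≤ a ∧ a ≤ n := by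
    intro a ha; rw [mem_Icc] at ha; exact ha
  have hdvd : ∀ a ∈ Icc 1 n, a ∣ D := by
    intro a ha; obtain ⟨h1, h2⟩ := hmem a ha
    exact Nat.dvd_factorial h1 h2
  have hdvd' : ∀ a ∈ Icc 1 n, (p - a) ∣ D := by
    intro a ha; obtain ⟨h1, h2⟩ := hmem a ha
    exact Nat.dvd_factorial (by omega) (by omega)
  have hcastne : ∀ a ∈ Icc 1 n, (a : ℚ) ≠ 0 := by
    intro a ha; obtain ⟨h1, _⟩ := hmem a ha
    exact Nat.cast_ne_zero.mpr (by omega)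
  -- cast of D/a into ZMod p
  have hzcast : ∀ a ∈ Icc 1 n, ((D / a : ℕ) : ZMod p) = (D : ZMod p) * ((a : ZMod p)⁻¹) := by
    intro a ha; obtain ⟨h1, h2⟩ := hmem a ha
    have hane : (a : ZMod p) ≠ 0 := by
      rw [Ne, ZMod.natCast_eq_zero_iff]
      intro h; have := Nat.le_of_dvd (by omega) h; omega
    have key : (a : ZMod p) * ((D / a : ℕ) : ZMod p) = (D : ZMod p) := by
      rw [← Nat.cast_mul, Nat.mul_div_cancel' (hdvd a ha)]
    field_simp
    linear_combination key
  -- cast of p - a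
  have hpa : ∀ a ∈ Icc 1 n, (((p - a : ℕ)) : ZMod p) = -(a : ZMod p) := by
    intro a ha; obtain ⟨h1, h2⟩ := hmem a ha
    rw [Nat.cast_sub (by omega), ZMod.natCast_self]; ring
  -- PART 2
  have part2 : rcong p 1 (∑ a ∈ Finset.Icc 1 (p - 1), 1 / (a : ℚ) ^ 2) 0 := by
    set M₂ := ∑ a ∈ Icc 1 n, (D / a) ^ 2 with hM₂def
    have hM₂z : ((M₂ : ℕ) : ZMod p) = 0 := by
      push_cast [hM₂def]
      rw [Finset.sum_congr rfl (fun a ha => by rw [hzcast a ha])]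
      have : ∑ a ∈ Icc 1 n, ((D : ZMod p) * (a : ZMod p)⁻¹) ^ 2
          = (D : ZMod p) ^ 2 * ∑ a ∈ Icc 1 n, ((a : ZMod p)⁻¹) ^ 2 := by
        rw [Finset.mul_sum]; exact Finset.sum_congr rfl (fun a _ => by ring)
      rw [this, suminvsq_zero p hge, mul_zero]
    have hM₂dvd : p ∣ M₂ := (ZMod.natCast_eq_zero_iff _ _).mp hM₂z
    have hM₂pos : 0 < M₂ := by
      apply Finset.sum_pos
      · intro a ha
        obtain ⟨ha1, ha2⟩ := hmem a ha
        have := Nat.div_pos (Nat.le_of_dvd hD0 (hdvd a ha)) (by omega : 0 < a)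
        positivity
      · exact ⟨1, by rw [mem_Icc]; omega⟩
    have hq : ∑ a ∈ Finset.Icc 1 (p - 1), 1 / (a : ℚ) ^ 2 = (M₂ : ℚ) / ((D^2 : ℕ) : ℚ) := by
      rw [eq_div_iff (by positivity : ((D^2:ℕ):ℚ) ≠ 0), Finset.sum_mul, hM₂def]
      push_cast
      refine Finset.sum_congr rfl (fun a ha => ?_)
      rw [Nat.cast_div (hdvd a ha) (hcastne a ha)]
      have := hcastne a ha
      field_simp
    right
    rw [sub_zero]
    exact val_ge p 1 M₂ (D^2) hM₂pos.ne' (fun h => hpD (hp.dvd_of_dvd_pow h)) (by simpa using hM₂dvd) hq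
  refine ⟨?_, part2⟩
  -- PART 1
  set M₁ := ∑ a ∈ Icc 1 n, (D / a) * (D / (p - a)) with hM₁def
  have hM₁z : ((M₁ : ℕ) : ZMod p) = 0 := by
    push_cast [hM₁def]
    have h1 : ∀ a ∈ Icc 1 n, ((D/a : ℕ) : ZMod p) * ((D/(p-a) : ℕ) : ZMod p)
        = -((D : ZMod p)^2 * ((a : ZMod p)⁻¹)^2) := by
      intro a ha
      have hpamem : (p - a) ∈ Icc 1 n := by
        obtain ⟨ha1, ha2⟩ := hmem a ha; rw [mem_Icc]; omega
      rw [hzcast a ha, hzcast (p-a) hpamem, hpa a ha, inv_neg]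
      ring
    rw [Finset.sum_congr rfl h1, Finset.sum_neg_distrib, ← Finset.mul_sum,
      suminvsq_zero p hge, mul_zero, neg_zero]
  have hM₁dvd : p ∣ M₁ := (ZMod.natCast_eq_zero_iff _ _).mp hM₁z
  have hM₁pos : 0 < M₁ := by
    apply Finset.sum_pos
    · intro a ha
      obtain ⟨ha1, ha2⟩ := hmem a ha
      have hpamem : (p - a) ∈ Icc 1 n := by rw [mem_Icc]; omega
      have t1 := Nat.div_pos (Nat.le_of_dvd hD0 (hdvd a ha)) (by omega : 0 < a)
      have t2 := Nat.div_pos (Nat.le_of_dvd hD0 (hdvd' a ha)) (by omega : 0 < p - a)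
      positivity
    · exact ⟨1, by rw [mem_Icc]; omega⟩
  have hrefl : ∑ a ∈ Icc 1 n, (1:ℚ)/((p - a : ℕ):ℚ) = ∑ a ∈ Icc 1 n, 1/(a:ℚ) := by
    apply Finset.sum_bij' (fun (a:ℕ) _ => p - a) (fun (a:ℕ) _ => p - a)
    · intro a ha; obtain ⟨h1, h2⟩ := hmem a ha; rw [mem_Icc]; omega
    · intro a ha; obtain ⟨h1, h2⟩ := hmem a ha; rw [mem_Icc]; omega
    · intro a ha; obtain ⟨h1, h2⟩ := hmem a ha; omega
    · intro a ha; obtain ⟨h1, h2⟩ := hmem a ha; omega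
    · intro a ha; rfl
  have hkey : (∑ a ∈ Icc 1 n, 1/(a:ℚ)) * ((2 * D^2 : ℕ) : ℚ) = ((p * M₁ : ℕ) : ℚ) := by
    have step1 : (∑ a ∈ Icc 1 n, 1/(a:ℚ)) * ((2 * D^2 : ℕ) : ℚ)
        = (∑ a ∈ Icc 1 n, ((1:ℚ)/(a:ℚ) + 1/((p-a:ℕ):ℚ))) * (D^2 : ℚ) := by
      rw [Finset.sum_add_distrib, hrefl]; push_cast; ring
    rw [step1, Finset.sum_mul, hM₁def]
    push_cast
    rw [Finset.mul_sum]
    refine Finset.sum_congr rfl (fun a ha => ?_)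
    obtain ⟨ha1, ha2⟩ := hmem a ha
    have hpamem : (p - a) ∈ Icc 1 n := by rw [mem_Icc]; omega
    rw [Nat.cast_div (hdvd a ha) (hcastne a ha), Nat.cast_div (hdvd' a ha) (hcastne _ hpamem)]
    have hb : ((p - a : ℕ) : ℚ) = (p:ℚ) - (a:ℚ) := by
      rw [Nat.cast_sub (by omega : a ≤ p)]
    have ha0 : (a:ℚ) ≠ 0 := hcastne a ha
    have hb0 : (p:ℚ) - (a:ℚ) ≠ 0 := by rw [← hb]; exact hcastne _ hpamem
    rw [hb]
    field_simp
    try ring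
    try tauto
  have hq1 : (∑ a ∈ Icc 1 n, 1/(a:ℚ)) = ((p * M₁ : ℕ) : ℚ) / ((2 * D^2 : ℕ) : ℚ) := by
    rw [eq_div_iff (by positivity : ((2 * D^2 : ℕ) : ℚ) ≠ 0)]
    exact hkey
  right
  rw [sub_zero]
  refine val_ge p 2 (p * M₁) (2 * D^2) (by positivity) ?_ ?_ hq1
  · intro h
    rcases (Nat.Prime.dvd_mul hp).mp h with h | h
    · have := Nat.le_of_dvd (by norm_num) h; omega
    · exact hpD (hp.dvd_of_dvd_pow h)
  · rw [pow_two]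
    exact mul_dvd_mul_left p hM₁dvd
end

section
/- For every prime p > 3, Σ_{a=1}^{p-1} 1/a^{p-2} ≡ −(2 + p·B_{p-1})·p + (5/2)·p² (mod p³). -/
open Finset

namespace SunAux

/-- `x` is `p^k` times a `p`-integral rational. -/
def good (p k : ℕ) (x : ℚ) : Prop :=
  ∃ a b : ℤ, ¬ (p : ℤ) ∣ b ∧ x * b = (p : ℚ) ^ k * a

variable {p : ℕ}

lemma intPrime (hp : p.Prime) : Prime (p : ℤ) := Nat.prime_iff_prime_int.mp hp

lemma not_dvd_one (hp : p.Prime) : ¬ (p : ℤ) ∣ (1 : ℤ) := (intPrime hp).not_dvd_one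

lemma good_zero (hp : p.Prime) (k : ℕ) : good p k 0 :=
  ⟨0, 1, not_dvd_one hp, by simp⟩

lemma good_add {k : ℕ} {x y : ℚ} (hp : p.Prime) (hx : good p k x) (hy : good p k y) :
    good p k (x + y) := by
  obtain ⟨a, b, hb, he⟩ := hx
  obtain ⟨c, d, hd, hf⟩ := hy
  refine ⟨a * d + c * b, b * d, fun h => ((intPrime hp).dvd_mul.mp h).elim hb hd, ?_⟩
  push_cast
  linear_combination (d : ℚ) * he + (b : ℚ) * hf

lemma good_neg {k : ℕ} {x : ℚ} (hx : good p k x) : good p k (-x) := by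
  obtain ⟨a, b, hb, he⟩ := hx
  exact ⟨-a, b, hb, by push_cast; linear_combination -he⟩

lemma good_sub {k : ℕ} {x y : ℚ} (hp : p.Prime) (hx : good p k x) (hy : good p k y) :
    good p k (x - y) := by
  have := good_add hp hx (good_neg hy); simpa [sub_eq_add_neg] using this

lemma good_mul {j k : ℕ} {x y : ℚ} (hp : p.Prime) (hx : good p j x) (hy : good p k y) :
    good p (j + k) (x * y) := by
  obtain ⟨a, b, hb, he⟩ := hx
  obtain ⟨c, d, hd, hf⟩ := hy
  refine ⟨a * c, b * d, fun h => ((intPrime hp).dvd_mul.mp h).elim hb hd, ?_⟩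
  push_cast
  rw [pow_add]
  linear_combination (y * (d : ℚ)) * he + ((p : ℚ) ^ j * (a : ℚ)) * hf

lemma good_int (hp : p.Prime) (n : ℤ) : good p 0 (n : ℚ) :=
  ⟨n, 1, not_dvd_one hp, by simp⟩

lemma good_nat (hp : p.Prime) (n : ℕ) : good p 0 (n : ℚ) := by
  simpa using good_int hp (n : ℤ)

lemma good_ofDvd (hp : p.Prime) {k : ℕ} {n : ℤ} (h : (p : ℤ) ^ k ∣ n) : good p k (n : ℚ) := by
  obtain ⟨c, rfl⟩ := h
  exact ⟨c, 1, not_dvd_one hp, by push_cast; ring⟩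

lemma good_mono {j k : ℕ} {x : ℚ} (h : j ≤ k) (hx : good p k x) : good p j x := by
  obtain ⟨a, b, hb, he⟩ := hx
  refine ⟨(p : ℤ) ^ (k - j) * a, b, hb, ?_⟩
  rw [show k = j + (k - j) by omega, pow_add] at he
  push_cast
  linear_combination he

lemma good_div_int {k : ℕ} {x : ℚ} {d : ℤ} (hp : p.Prime) (hd : ¬ (p : ℤ) ∣ d)
    (hx : good p k x) : good p k (x / (d : ℚ)) := by
  obtain ⟨a, b, hb, he⟩ := hx
  have hd0 : (d : ℚ) ≠ 0 := by
    simp only [ne_eq, Int.cast_eq_zero]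
    exact fun h => hd (by simp [h])
  refine ⟨a, b * d, fun h => ((intPrime hp).dvd_mul.mp h).elim hb hd, ?_⟩
  push_cast
  field_simp
  linear_combination he

lemma good_div_nat {k : ℕ} {x : ℚ} {d : ℕ} (hp : p.Prime) (hd : ¬ p ∣ d)
    (hx : good p k x) : good p k (x / (d : ℚ)) := by
  have : ¬ (p : ℤ) ∣ (d : ℤ) := by exact_mod_cast fun h => hd (Int.ofNat_dvd.mp h)
  simpa using good_div_int hp this hx

lemma good_p_pow (hp : p.Prime) (j : ℕ) : good p j ((p : ℚ) ^ j) :=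
  ⟨1, 1, not_dvd_one hp, by simp⟩

lemma good_div_p {k : ℕ} {x : ℚ} (hp : p.Prime) (hx : good p (k + 1) x) :
    good p k (x / (p : ℚ)) := by
  obtain ⟨a, b, hb, he⟩ := hx
  have hp0 : (p : ℚ) ≠ 0 := by exact_mod_cast hp.ne_zero
  refine ⟨a, b, hb, ?_⟩
  field_simp
  linear_combination he

lemma good_unp {k : ℕ} {x : ℚ} (hp : p.Prime) (h : good p (k + 1) ((p : ℚ) * x)) :
    good p k x := by
  obtain ⟨a, b, hb, he⟩ := h
  have hp0 : (p : ℚ) ≠ 0 := by exact_mod_cast hp.ne_zero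
  refine ⟨a, b, hb, mul_left_cancel₀ hp0 ?_⟩
  linear_combination he

lemma good_sum {k : ℕ} {ι : Type*} (hp : p.Prime) (s : Finset ι) (f : ι → ℚ)
    (h : ∀ i ∈ s, good p k (f i)) : good p k (∑ i ∈ s, f i) := by
  classical
  induction s using Finset.induction_on with
  | empty => simpa using good_zero hp k
  | insert _ _ hni ih =>
    rw [Finset.sum_insert hni]
    exact good_add hp (h _ (Finset.mem_insert_self _ _))
      (ih fun i hi => h i (Finset.mem_insert_of_mem hi))

lemma rcong_of_good {x y : ℚ} (hp : p.Prime) (h : good p 3 (x - y)) :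
    x = y ∨ (3 : ℤ) ≤ padicValRat p (x - y) := by
  rcases eq_or_ne x y with h' | h'
  · exact Or.inl h'
  right
  haveI : Fact p.Prime := ⟨hp⟩
  obtain ⟨a, b, hb, he⟩ := h
  have hxy : x - y ≠ 0 := sub_ne_zero.mpr h'
  have hb0 : (b : ℚ) ≠ 0 := by
    simp only [ne_eq, Int.cast_eq_zero]
    exact fun hh => hb (by simp [hh])
  have hp0 : (p : ℚ) ≠ 0 := by exact_mod_cast hp.ne_zero
  have ha : (a : ℚ) ≠ 0 := by
    intro h0
    rw [h0, mul_zero] at he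
    exact hxy ((mul_eq_zero.mp he).resolve_right hb0)
  have ha' : a ≠ 0 := by exact_mod_cast ha
  have hval := congrArg (padicValRat p) he
  rw [padicValRat.mul hxy hb0, padicValRat.mul (pow_ne_zero _ hp0) ha,
    padicValRat.pow (p : ℚ), padicValRat.self hp.one_lt] at hval
  have hvb : padicValRat p (b : ℚ) = 0 := by
    rw [padicValRat.of_int, padicValInt.eq_zero_of_not_dvd hb]; simp
  have hva : (0 : ℤ) ≤ padicValRat p (a : ℚ) := by
    rw [padicValRat.of_int]; exact Int.natCast_nonneg _
  push_cast at hval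
  omega

def T (p n : ℕ) : ℚ := ∑ a ∈ Finset.range p, (a : ℚ) ^ n

def Tz (p n : ℕ) : ℤ := ∑ a ∈ Finset.Icc 1 (p - 1), (a : ℤ) ^ n

lemma range_eq_insert (h1 : 1 ≤ p) : Finset.range p = insert 0 (Finset.Icc 1 (p - 1)) := by
  ext a
  simp only [Finset.mem_range, Finset.mem_insert, Finset.mem_Icc]
  omega

lemma T_eq_Icc (h1 : 1 ≤ p) {n : ℕ} (hn : 1 ≤ n) :
    T p n = ∑ a ∈ Finset.Icc 1 (p - 1), (a : ℚ) ^ n := by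
  rw [T, range_eq_insert h1, Finset.sum_insert (by simp)]
  rw [Nat.cast_zero, zero_pow (by omega : n ≠ 0), zero_add]

lemma T_eq_Tz (h1 : 1 ≤ p) {n : ℕ} (hn : 1 ≤ n) : T p n = (Tz p n : ℚ) := by
  rw [T_eq_Icc h1 hn, Tz]
  push_cast
  rfl

lemma not_dvd_mem (hp : p.Prime) {a : ℕ} (ha : a ∈ Finset.Icc 1 (p - 1)) : ¬ p ∣ a := by
  simp only [Finset.mem_Icc] at ha
  intro h
  have h2 := Nat.le_of_dvd (by omega) h
  have := hp.two_le
  omega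

lemma fermat_dvd (hp : p.Prime) {a : ℕ} (ha : a ∈ Finset.Icc 1 (p - 1)) :
    (p : ℤ) ∣ (a : ℤ) ^ (p - 1) - 1 := by
  haveI : Fact p.Prime := ⟨hp⟩
  have h0 : (a : ZMod p) ≠ 0 := by
    rw [Ne, ZMod.natCast_eq_zero_iff]
    exact not_dvd_mem hp ha
  have h1 : (a : ZMod p) ^ (p - 1) = 1 := ZMod.pow_card_sub_one_eq_one h0
  have h2 : (((a : ℤ) ^ (p - 1) - 1 : ℤ) : ZMod p) = 0 := by
    push_cast
    rw [h1]
    ring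
  exact_mod_cast (ZMod.intCast_zmod_eq_zero_iff_dvd _ p).mp h2

lemma sum_univ_pow (hp : p.Prime) [NeZero p] {r : ℕ} (hr1 : 1 ≤ r) :
    ∑ a ∈ Finset.Icc 1 (p - 1), ((a : ZMod p)) ^ r = ∑ x : ZMod p, x ^ r := by
  haveI : Fact p.Prime := ⟨hp⟩
  have h1 : 1 ≤ p := hp.one_lt.le
  have hrange : ∑ a ∈ Finset.range p, ((a : ZMod p)) ^ r = ∑ x : ZMod p, x ^ r := by
    refine Finset.sum_nbij' (i := fun a => ((a : ZMod p))) (j := fun x => x.val) ?_ ?_ ?_ ?_ ?_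
    · intro a _
      exact Finset.mem_univ _
    · intro x _
      exact Finset.mem_range.mpr (ZMod.val_lt x)
    · intro a ha
      exact ZMod.val_cast_of_lt (Finset.mem_range.mp ha)
    · intro x _
      exact ZMod.natCast_rightInverse x
    · intro a _
      rfl
  rw [← hrange, range_eq_insert h1, Finset.sum_insert (by simp)]
  rw [Nat.cast_zero, zero_pow (by omega : r ≠ 0), zero_add]

lemma Tz_dvd (hp : p.Prime) (h5 : 5 ≤ p) {n : ℕ} (hn1 : 1 ≤ n) (hn2 : n ≤ 2 * p - 3)
    (hne : n ≠ p - 1) : (p : ℤ) ∣ Tz p n := by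
  haveI : Fact p.Prime := ⟨hp⟩
  rw [← ZMod.intCast_zmod_eq_zero_iff_dvd]
  have hcast : ((Tz p n : ℤ) : ZMod p) = ∑ a ∈ Finset.Icc 1 (p - 1), ((a : ZMod p)) ^ n := by
    rw [Tz]
    push_cast
    rfl
  rw [hcast]
  by_cases hc : n ≤ p - 2
  · rw [sum_univ_pow hp hn1]
    apply FiniteField.sum_pow_lt_card_sub_one
    rw [ZMod.card]
    omega
  · have hstep : ∀ a ∈ Finset.Icc 1 (p - 1), ((a : ZMod p)) ^ n = ((a : ZMod p)) ^ (n - (p - 1)) := by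
      intro a ha
      have h0 : (a : ZMod p) ≠ 0 := by
        rw [Ne, ZMod.natCast_eq_zero_iff]
        exact not_dvd_mem hp ha
      calc ((a : ZMod p)) ^ n = ((a : ZMod p)) ^ ((p - 1) + (n - (p - 1))) := by congr 1; omega
        _ = ((a : ZMod p)) ^ (n - (p - 1)) := by
            rw [pow_add, ZMod.pow_card_sub_one_eq_one h0, one_mul]
    rw [Finset.sum_congr rfl hstep, sum_univ_pow hp (by omega)]
    apply FiniteField.sum_pow_lt_card_sub_one
    rw [ZMod.card]
    omega

lemma Tz_fermat (hp : p.Prime) (h5 : 5 ≤ p) : (p : ℤ) ∣ Tz p (p - 1) - (p - 1) := by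
  have hcard : (Finset.Icc 1 (p - 1)).card = p - 1 := by
    rw [Nat.card_Icc]
    omega
  have key : Tz p (p - 1) - (p - 1) = ∑ a ∈ Finset.Icc 1 (p - 1), ((a : ℤ) ^ (p - 1) - 1) := by
    rw [Finset.sum_sub_distrib, Finset.sum_const, hcard, Tz]
    push_cast [show ((p : ℤ) - 1) = ((p - 1 : ℕ) : ℤ) by push_cast [Nat.cast_sub (by omega : 1 ≤ p)]; ring]
    ring
  rw [key]
  exact Finset.dvd_sum fun a ha => fermat_dvd hp ha

lemma Tz_sq (hp : p.Prime) (h5 : 5 ≤ p) :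
    (p : ℤ) ^ 2 ∣ Tz p (2 * p - 2) - 2 * Tz p (p - 1) + (p - 1) := by
  have hcard : (Finset.Icc 1 (p - 1)).card = p - 1 := by
    rw [Nat.card_Icc]
    omega
  have hpow : ∀ a : ℤ, a ^ (2 * p - 2) = (a ^ (p - 1)) ^ 2 := by
    intro a
    rw [← pow_mul]
    congr 1
    omega
  have key : Tz p (2 * p - 2) - 2 * Tz p (p - 1) + (p - 1)
      = ∑ a ∈ Finset.Icc 1 (p - 1), ((a : ℤ) ^ (p - 1) - 1) ^ 2 := by
    have expand : ∀ a ∈ Finset.Icc 1 (p - 1),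
        ((a : ℤ) ^ (p - 1) - 1) ^ 2 = (a : ℤ) ^ (2 * p - 2) - 2 * (a : ℤ) ^ (p - 1) + 1 := by
      intro a _
      rw [hpow]
      ring
    rw [Finset.sum_congr rfl expand]
    rw [Finset.sum_add_distrib, Finset.sum_sub_distrib, Finset.sum_const, hcard, Tz, Tz]
    simp only [nsmul_eq_mul, mul_one, ← Finset.mul_sum]
    push_cast [Nat.cast_sub (by omega : 1 ≤ p)]
    ring
  rw [key]
  exact Finset.dvd_sum fun a ha => pow_dvd_pow_of_dvd (fermat_dvd hp ha) 2

lemma faul (p n : ℕ) :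
    T p n = ∑ i ∈ Finset.range (n + 1),
      bernoulli i * ((n + 1).choose i) * (p : ℚ) ^ (n + 1 - i) / (n + 1) :=
  sum_range_pow p n

lemma bodd {n : ℕ} (hn : Odd n) (h1 : 1 < n) : bernoulli n = 0 := by
  rw [bernoulli_eq_bernoulli'_of_ne_one (by omega)]
  exact bernoulli'_eq_zero_of_odd hn h1

lemma faul_peel (p n : ℕ) :
    (p : ℚ) * bernoulli n =
      T p n - ∑ i ∈ Finset.range n,
        bernoulli i * ((n + 1).choose i) * (p : ℚ) ^ (n + 1 - i) / (n + 1) := by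
  have h := faul p n
  rw [Finset.sum_range_succ] at h
  have hc : (((n + 1).choose n : ℕ) : ℚ) = (n : ℚ) + 1 := by
    rw [Nat.choose_succ_self_right]
    push_cast
    ring
  have he : n + 1 - n = 1 := by omega
  rw [he, pow_one, hc] at h
  have hnz : ((n : ℚ) + 1) ≠ 0 := by positivity
  have hterm : bernoulli n * ((n : ℚ) + 1) * (p : ℚ) / ((n : ℚ) + 1) = (p : ℚ) * bernoulli n := by
    field_simp
  rw [hterm] at h
  linarith [h]

lemma not_dvd_two (hp : p.Prime) (h5 : 5 ≤ p) : ¬ (p : ℤ) ∣ 2 := by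
  intro h
  have := Int.le_of_dvd (by norm_num) h
  omega

lemma bint (hp : p.Prime) (h5 : 5 ≤ p) :
    ∀ n, n ≤ 2 * p - 3 →
      (n ≠ p - 1 → good p 0 (bernoulli n)) ∧ good p 0 ((p : ℚ) * bernoulli n) := by
  intro n
  induction n using Nat.strong_induction_on with
  | _ n IH =>
    intro hn
    rcases Nat.lt_or_ge n 2 with h2 | h2
    · interval_cases n
      · refine ⟨fun _ => ?_, ?_⟩
        · rw [bernoulli_zero]
          simpa using good_nat hp 1
        · rw [bernoulli_zero, mul_one]
          exact good_nat hp p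
      · have hb : good p 0 (bernoulli 1) := by
          rw [bernoulli_one]
          have : (-1 / 2 : ℚ) = (-1 : ℤ) / ((2 : ℤ) : ℚ) := by norm_num
          rw [this]
          exact good_div_int hp (not_dvd_two hp h5) (good_int hp (-1))
        exact ⟨fun _ => hb, by simpa using good_mul hp (good_nat hp p) hb⟩
    rcases Nat.even_or_odd n with heven | hodd
    swap
    · have hb : good p 0 (bernoulli n) := by
        rw [bodd hodd (by omega)]
        exact good_zero hp 0
      exact ⟨fun _ => hb, by simpa using good_mul hp (good_nat hp p) hb⟩
    -- main case: n even, 2 ≤ n ≤ 2p - 3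
    by_cases hpe : n = p - 1
    · -- n = p - 1 : show good p 0 (p * bernoulli n)
      refine ⟨fun h => absurd hpe h, ?_⟩
      rw [faul_peel p n]
      have hT : good p 0 (T p n) := by
        rw [T_eq_Tz (by omega) (by omega)]
        exact good_int hp _
      refine good_sub hp hT (good_mono (k := 1) (by omega) (good_sum hp _ _ ?_))
      intro i hi
      have hi' := Finset.mem_range.mp hi
      have hden : ((n : ℚ) + 1) = (p : ℚ) := by
        rw [hpe]
        push_cast [Nat.cast_sub (by omega : 1 ≤ p)]
        ring
      rw [hden, show n + 1 - i = (n - i) + 1 from by omega]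
      have hB : good p 0 (bernoulli i) := (IH i hi' (by omega)).1 (by omega)
      have hgood : good p ((n - i) + 1) (bernoulli i * (((n + 1).choose i : ℕ) : ℚ)
          * (p : ℚ) ^ ((n - i) + 1)) := by
        simpa using good_mul hp (good_mul hp hB (good_nat hp ((n + 1).choose i)))
          (good_p_pow hp ((n - i) + 1))
      exact good_mono (by omega) (good_div_p hp hgood)
    · -- n ≠ p - 1 : show good p 1 (p * bernoulli n), both components follow
      have key : good p 1 ((p : ℚ) * bernoulli n) := by
        rw [faul_peel p n]
        have hT : good p 1 (T p n) := by
          rw [T_eq_Tz (by omega) (by omega)]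
          exact good_ofDvd hp (by simpa using Tz_dvd hp h5 (by omega) hn hpe)
        refine good_sub hp hT (good_sum hp _ _ ?_)
        intro i hi
        have hi' := Finset.mem_range.mp hi
        have hnd : ¬ p ∣ (n + 1) := by
          intro hd
          obtain ⟨c, hc⟩ := hd
          rcases Nat.lt_or_ge c 2 with hc2 | hc2
          · interval_cases c <;> omega
          · have hge : p * 2 ≤ p * c := Nat.mul_le_mul_left p hc2
            omega
        rw [show ((n : ℚ) + 1) = ((n + 1 : ℕ) : ℚ) from by push_cast; ring]
        by_cases hip : i = p - 1
        · -- use good p 0 (p * bernoulli i)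
          have hpB : good p 0 ((p : ℚ) * bernoulli i) := (IH i hi' (by omega)).2
          have hrw : bernoulli i * (((n + 1).choose i : ℕ) : ℚ) * (p : ℚ) ^ (n + 1 - i) / (((n + 1 : ℕ) : ℕ) : ℚ)
              = ((p : ℚ) * bernoulli i) * (((n + 1).choose i : ℕ) : ℚ) * (p : ℚ) ^ (n - i) / (((n + 1 : ℕ) : ℕ) : ℚ) := by
            rw [show n + 1 - i = 1 + (n - i) by omega, pow_add, pow_one]
            ring
          rw [hrw]
          have hni : 1 ≤ n - i := by omega
          refine good_div_nat hp hnd (good_mono hni ?_)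
          simpa using good_mul hp (good_mul hp hpB (good_nat hp ((n + 1).choose i)))
            (good_p_pow hp (n - i))
        · have hB : good p 0 (bernoulli i) := (IH i hi' (by omega)).1 hip
          refine good_div_nat hp hnd (good_mono (by omega : 1 ≤ n + 1 - i) ?_)
          simpa using good_mul hp (good_mul hp hB (good_nat hp ((n + 1).choose i)))
            (good_p_pow hp (n + 1 - i))
      have hB : good p 0 (bernoulli n) := good_unp hp (good_mono (by omega) key)
      exact ⟨fun _ => hB, good_mono (by omega) key⟩

lemma good_mul3 (hp : p.Prime) {x y z : ℚ} {a b c m : ℕ} (hx : good p a x) (hy : good p b y)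
    (hz : good p c z) (hm : m ≤ a + b + c) : good p m (x * y * z) :=
  good_mono hm (good_mul hp (good_mul hp hx hy) hz)

lemma good_choose_p (hp : p.Prime) {i : ℕ} (h0 : i ≠ 0) (hlt : i < p) :
    good p 1 (((p.choose i : ℕ) : ℚ)) := by
  apply good_ofDvd hp
  rw [pow_one]
  exact_mod_cast hp.dvd_choose_self h0 hlt

lemma good_p1 (hp : p.Prime) : good p 1 ((p : ℚ)) := by
  simpa using good_p_pow hp 1

lemma faul2 (p n m : ℕ) (hm : m = n + 1) :
    T p n = (∑ i ∈ Finset.range m,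
      bernoulli i * ((m.choose i : ℕ) : ℚ) * (p : ℚ) ^ (m - i)) / ((m : ℕ) : ℚ) := by
  subst hm
  rw [faul p n, Finset.sum_div]
  apply Finset.sum_congr rfl
  intro i hi
  push_cast
  ring

lemma not_dvd_between (h5 : 5 ≤ p) {d : ℕ} (h1 : p < d) (h2 : d < 2 * p) : ¬ p ∣ d := by
  intro h
  obtain ⟨c, hc⟩ := h
  rcases Nat.lt_or_ge c 2 with hc2 | hc2
  · interval_cases c <;> omega
  · have := Nat.mul_le_mul_left p hc2
    omega

lemma good_pber (hp : p.Prime) (h5 : 5 ≤ p) : good p 0 ((p : ℚ) * bernoulli (p - 1)) :=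
  (bint hp h5 (p - 1) (by omega)).2

lemma good_ber (hp : p.Prime) (h5 : 5 ≤ p) {i : ℕ} (hi : i ≤ 2 * p - 3) (hip : i ≠ p - 1) :
    good p 0 (bernoulli i) :=
  (bint hp h5 i hi).1 hip

lemma TL6 (hp : p.Prime) (h5 : 5 ≤ p) :
    good p 3 (T p (p - 1) - (p : ℚ) * bernoulli (p - 1)) := by
  obtain ⟨k, rfl⟩ : ∃ k, p = k + 5 := ⟨p - 5, by omega⟩
  have hodd : Odd (k + 5) := hp.odd_of_ne_two (by omega)
  have hke : k % 2 = 0 := by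
    rw [Nat.odd_iff] at hodd
    omega
  have hfa := faul2 (k + 5) (k + 4) (k + 5) (by omega)
  rw [Finset.sum_range_succ, Finset.sum_range_succ] at hfa
  rw [bodd (Nat.odd_iff.mpr (by omega)) (by omega : 1 < k + 3)] at hfa
  rw [Nat.choose_succ_self_right, show k + 5 - (k + 4) = 1 from by omega, pow_one] at hfa
  have hne : ((k + 5 : ℕ) : ℚ) ≠ 0 := by positivity
  have heq : T (k + 5) (k + 5 - 1) - ((k + 5 : ℕ) : ℚ) * bernoulli (k + 5 - 1)
      = (∑ i ∈ Finset.range (k + 3),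
          bernoulli i * (((k + 5).choose i : ℕ) : ℚ) * ((k + 5 : ℕ) : ℚ) ^ (k + 5 - i))
        / ((k + 5 : ℕ) : ℚ) := by
    rw [show k + 5 - 1 = k + 4 from by omega, hfa]
    push_cast
    field_simp
    ring
  rw [heq]
  refine good_div_p hp (k := 3) (good_sum hp _ _ ?_)
  intro i hi
  have hi' := Finset.mem_range.mp hi
  have hB := good_ber hp h5 (show i ≤ 2 * (k + 5) - 3 by omega) (show i ≠ (k + 5) - 1 by omega)
  rcases Nat.eq_zero_or_pos i with h0 | h0
  · subst h0
    exact good_mul3 hp hB (good_nat hp _) (good_p_pow hp (k + 5 - 0)) (by omega)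
  · exact good_mul3 hp hB (good_choose_p hp (by omega) (by omega)) (good_p_pow hp (k + 5 - i))
      (by omega)

lemma TL8 (hp : p.Prime) (h5 : 5 ≤ p) : good p 1 ((p : ℚ) * bernoulli (p - 1) + 1) := by
  have h1 : good p 1 (T p (p - 1) + 1) := by
    rw [T_eq_Tz (by omega) (by omega)]
    have hdvd : (p : ℤ) ^ 1 ∣ Tz p (p - 1) + 1 := by
      rw [pow_one]
      have h2 := Tz_fermat hp h5
      have h3 : Tz p (p - 1) + 1 = (Tz p (p - 1) - ((p : ℤ) - 1)) + p := by ring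
      rw [h3]
      exact dvd_add h2 dvd_rfl
    have := good_ofDvd hp hdvd
    have hcast : (((Tz p (p - 1) + 1 : ℤ)) : ℚ) = ((Tz p (p - 1) : ℤ) : ℚ) + 1 := by push_cast; ring
    rwa [hcast] at this
  have h2 := good_neg (good_mono (by omega : 1 ≤ 3) (TL6 hp h5))
  have h3 := good_add hp h2 h1
  have : -(T p (p - 1) - (p : ℚ) * bernoulli (p - 1)) + (T p (p - 1) + 1)
      = (p : ℚ) * bernoulli (p - 1) + 1 := by ring
  rwa [this] at h3

lemma TL7 (hp : p.Prime) (h5 : 5 ≤ p) : good p 3 (T p p + (p : ℚ) ^ 2 / 2) := by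
  have h8 := TL8 hp h5
  obtain ⟨k, rfl⟩ : ∃ k, p = k + 5 := ⟨p - 5, by omega⟩
  have hodd : Odd (k + 5) := hp.odd_of_ne_two (by omega)
  have hke : k % 2 = 0 := by
    rw [Nat.odd_iff] at hodd
    omega
  have hfa := faul2 (k + 5) (k + 5) (k + 6) (by omega)
  rw [Finset.sum_range_succ, Finset.sum_range_succ] at hfa
  rw [bodd (Nat.odd_iff.mpr (by omega)) (by omega : 1 < k + 5)] at hfa
  rw [show (k + 6).choose (k + 4) = (k + 6).choose 2 from by
      rw [show k + 4 = k + 6 - 2 from by omega]; exact Nat.choose_symm (by omega),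
    show k + 6 - (k + 4) = 2 from by omega] at hfa
  rw [Nat.cast_choose_two] at hfa
  have hne : ((k + 6 : ℕ) : ℚ) ≠ 0 := by positivity
  have hne5 : ((k + 5 : ℕ) : ℚ) ≠ 0 := by positivity
  have heq : T (k + 5) (k + 5) + ((k + 5 : ℕ) : ℚ) ^ 2 / 2
      = (∑ i ∈ Finset.range (k + 4),
          bernoulli i * (((k + 6).choose i : ℕ) : ℚ) * ((k + 5 : ℕ) : ℚ) ^ (k + 6 - i))
        / ((k + 6 : ℕ) : ℚ)
        + (((k + 5 : ℕ) : ℚ) ^ 2 * (((k + 5 : ℕ) : ℚ) * bernoulli (k + 4) + 1)) / 2 := by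
    rw [hfa]
    push_cast
    field_simp
    ring
  rw [heq]
  refine good_add hp ?_ ?_
  · apply good_div_nat hp (not_dvd_between h5 (by omega) (by omega))
    apply good_sum hp _ _ ?_
    intro i hi
    have hi' := Finset.mem_range.mp hi
    have hB := good_ber hp h5 (show i ≤ 2 * (k + 5) - 3 by omega) (show i ≠ (k + 5) - 1 by omega)
    exact good_mul3 hp hB (good_nat hp _) (good_p_pow hp (k + 6 - i)) (by omega)
  · apply good_div_int hp (not_dvd_two hp h5)
    have := good_mul hp (good_p_pow hp 2) (show good (k + 5) 1 _ from h8)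
    exact good_mono (by omega) this

lemma TL9 (hp : p.Prime) (h5 : 5 ≤ p) :
    good p 2 ((p : ℚ) * bernoulli (2 * p - 2)
      - (2 * ((p : ℚ) * bernoulli (p - 1)) - (p : ℚ) + 1)) := by
  have h6 := TL6 hp h5
  -- (a) : T (2p-2) ≡ p * B (2p-2) mod p^3
  have ha : good p 3 (T p (2 * p - 2) - (p : ℚ) * bernoulli (2 * p - 2)) := by
    obtain ⟨k, rfl⟩ : ∃ k, p = k + 5 := ⟨p - 5, by omega⟩
    have hodd : Odd (k + 5) := hp.odd_of_ne_two (by omega)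
    have hke : k % 2 = 0 := by
      rw [Nat.odd_iff] at hodd
      omega
    have hfa := faul2 (k + 5) (2 * k + 8) (2 * k + 9) (by omega)
    rw [Finset.sum_range_succ] at hfa
    rw [Nat.choose_succ_self_right, show 2 * k + 9 - (2 * k + 8) = 1 from by omega, pow_one] at hfa
    have hne : ((2 * k + 9 : ℕ) : ℚ) ≠ 0 := by positivity
    have heq : T (k + 5) (2 * (k + 5) - 2) - ((k + 5 : ℕ) : ℚ) * bernoulli (2 * (k + 5) - 2)
        = (∑ i ∈ Finset.range (2 * k + 8),
            bernoulli i * (((2 * k + 9).choose i : ℕ) : ℚ) * ((k + 5 : ℕ) : ℚ) ^ (2 * k + 9 - i))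
          / ((2 * k + 9 : ℕ) : ℚ) := by
      rw [show 2 * (k + 5) - 2 = 2 * k + 8 from by omega, hfa]
      push_cast
      field_simp
      ring
    rw [heq]
    apply good_div_nat hp (not_dvd_between h5 (by omega) (by omega))
    apply good_sum hp _ _ ?_
    intro i hi
    have hi' := Finset.mem_range.mp hi
    by_cases hip : i = k + 4
    · subst hip
      have hrw : bernoulli (k + 4) * (((2 * k + 9).choose (k + 4) : ℕ) : ℚ)
            * ((k + 5 : ℕ) : ℚ) ^ (2 * k + 9 - (k + 4))
          = (((k + 5 : ℕ) : ℚ) * bernoulli (k + 4)) * (((2 * k + 9).choose (k + 4) : ℕ) : ℚ)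
            * ((k + 5 : ℕ) : ℚ) ^ (k + 4) := by
        rw [show 2 * k + 9 - (k + 4) = 1 + (k + 4) from by omega, pow_add, pow_one]
        ring
      rw [hrw]
      exact good_mul3 hp (good_pber hp h5) (good_nat hp _) (good_p_pow hp (k + 4)) (by omega)
    · by_cases hoddi : i % 2 = 1 ∧ 1 < i
      · rw [bodd (Nat.odd_iff.mpr hoddi.1) hoddi.2]
        simpa using good_zero hp 3
      · push_neg at hoddi
        have hB := good_ber hp h5 (show i ≤ 2 * (k + 5) - 3 by omega) (show i ≠ (k + 5) - 1 by omega)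
        exact good_mul3 hp hB (good_nat hp _) (good_p_pow hp (2 * k + 9 - i)) (by omega)
  -- (b)
  have hb : good p 2 (T p (2 * p - 2) - 2 * T p (p - 1) + ((p : ℚ) - 1)) := by
    rw [T_eq_Tz (by omega) (by omega), T_eq_Tz (by omega) (by omega)]
    have := good_ofDvd hp (Tz_sq hp h5)
    have hcast : (((Tz p (2 * p - 2) - 2 * Tz p (p - 1) + ((p : ℤ) - 1) : ℤ)) : ℚ)
        = ((Tz p (2 * p - 2) : ℤ) : ℚ) - 2 * ((Tz p (p - 1) : ℤ) : ℚ) + ((p : ℚ) - 1) := by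
      push_cast
      ring
    rwa [hcast] at this
  have hcomb := good_add hp (good_add hp (good_neg (good_mono (by omega : 2 ≤ 3) ha)) hb)
    (good_mono (by omega : 2 ≤ 3) (good_mul3 hp (good_int hp 2) h6 (good_nat hp 1) (by omega)))
  have hring : -(T p (2 * p - 2) - (p : ℚ) * bernoulli (2 * p - 2))
        + (T p (2 * p - 2) - 2 * T p (p - 1) + ((p : ℚ) - 1))
        + ((2 : ℤ) : ℚ) * (T p (p - 1) - (p : ℚ) * bernoulli (p - 1)) * ((1 : ℕ) : ℚ)
      = (p : ℚ) * bernoulli (2 * p - 2) - (2 * ((p : ℚ) * bernoulli (p - 1)) - (p : ℚ) + 1) := by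
    push_cast
    ring
  rwa [hring] at hcomb

lemma TL10 (hp : p.Prime) (h5 : 5 ≤ p) :
    good p 3 (T p (2 * p - 1)
      - ((2 * (p : ℚ) - 1) / 2) * (p : ℚ)
        * (2 * ((p : ℚ) * bernoulli (p - 1)) - (p : ℚ) + 1)) := by
  have h9 := TL9 hp h5
  obtain ⟨k, rfl⟩ : ∃ k, p = k + 5 := ⟨p - 5, by omega⟩
  have hodd : Odd (k + 5) := hp.odd_of_ne_two (by omega)
  have hke : k % 2 = 0 := by
    rw [Nat.odd_iff] at hodd
    omega
  have hfa := faul2 (k + 5) (2 * k + 9) (2 * k + 10) (by omega)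
  rw [Finset.sum_range_succ, Finset.sum_range_succ] at hfa
  rw [bodd (Nat.odd_iff.mpr (by omega)) (by omega : 1 < 2 * k + 9)] at hfa
  rw [show (2 * k + 10).choose (2 * k + 8) = (2 * k + 10).choose 2 from by
      rw [show 2 * k + 8 = 2 * k + 10 - 2 from by omega]; exact Nat.choose_symm (by omega),
    show 2 * k + 10 - (2 * k + 8) = 2 from by omega] at hfa
  rw [Nat.cast_choose_two] at hfa
  have hne : ((2 * k + 10 : ℕ) : ℚ) ≠ 0 := by positivity
  have hne5 : ((k + 5 : ℕ) : ℚ) ≠ 0 := by positivity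
  have heq : T (k + 5) (2 * (k + 5) - 1)
        - ((2 * ((k + 5 : ℕ) : ℚ) - 1) / 2) * ((k + 5 : ℕ) : ℚ)
          * (2 * (((k + 5 : ℕ) : ℚ) * bernoulli (k + 5 - 1)) - ((k + 5 : ℕ) : ℚ) + 1)
      = ((∑ i ∈ Finset.range (2 * k + 8),
            bernoulli i * (((2 * k + 10).choose i : ℕ) : ℚ) * ((k + 5 : ℕ) : ℚ) ^ (2 * k + 10 - i))
          / ((k + 5 : ℕ) : ℚ)) / 2
        + (((2 * k + 9 : ℕ) : ℚ) / 2) * ((k + 5 : ℕ) : ℚ)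
          * (((k + 5 : ℕ) : ℚ) * bernoulli (2 * (k + 5) - 2)
            - (2 * (((k + 5 : ℕ) : ℚ) * bernoulli (k + 5 - 1)) - ((k + 5 : ℕ) : ℚ) + 1)) := by
    rw [show 2 * (k + 5) - 1 = 2 * k + 9 from by omega, show 2 * (k + 5) - 2 = 2 * k + 8 from by omega,
      show k + 5 - 1 = k + 4 from by omega, hfa]
    push_cast
    field_simp
    ring
  rw [heq]
  refine good_add hp ?_ ?_
  · apply good_div_int hp (not_dvd_two hp h5)
    refine good_div_p hp (k := 3) (good_sum hp _ _ ?_)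
    intro i hi
    have hi' := Finset.mem_range.mp hi
    by_cases hip : i = k + 4
    · subst hip
      have hrw : bernoulli (k + 4) * (((2 * k + 10).choose (k + 4) : ℕ) : ℚ)
            * ((k + 5 : ℕ) : ℚ) ^ (2 * k + 10 - (k + 4))
          = (((k + 5 : ℕ) : ℚ) * bernoulli (k + 4)) * (((2 * k + 10).choose (k + 4) : ℕ) : ℚ)
            * ((k + 5 : ℕ) : ℚ) ^ (k + 5) := by
        rw [show 2 * k + 10 - (k + 4) = 1 + (k + 5) from by omega, pow_add, pow_one]
        ring
      rw [hrw]
      exact good_mul3 hp (good_pber hp h5) (good_nat hp _) (good_p_pow hp (k + 5)) (by omega)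
    · by_cases hoddi : i % 2 = 1 ∧ 1 < i
      · rw [bodd (Nat.odd_iff.mpr hoddi.1) hoddi.2]
        simpa using good_zero hp 4
      · push_neg at hoddi
        have hB := good_ber hp h5 (show i ≤ 2 * (k + 5) - 3 by omega) (show i ≠ (k + 5) - 1 by omega)
        exact good_mul3 hp hB (good_nat hp _) (good_p_pow hp (2 * k + 10 - i)) (by omega)
  · have hhalf : good (k + 5) 0 (((2 * k + 9 : ℕ) : ℚ) / 2) :=
      good_div_int hp (not_dvd_two hp h5) (good_nat hp _)
    have := good_mul hp (good_mul hp hhalf (good_p1 hp)) h9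
    exact good_mono (by omega) this

lemma alg (u A P t : ℚ) (hu : u ≠ 0) (hy : u * A = 1 + P * t) :
    (1 / u - (3 * A - 3 * (u * A ^ 2) + u ^ 2 * A ^ 3)) * (u * A) = P ^ 3 * (-A * t ^ 3) := by
  have h1 : (1 / u - (3 * A - 3 * (u * A ^ 2) + u ^ 2 * A ^ 3)) * (u * A)
      = A * (1 - u * A) ^ 3 := by
    field_simp
    ring
  rw [h1, hy]
  ring

lemma TL2term (hp : p.Prime) (h5 : 5 ≤ p) {a : ℕ} (ha : a ∈ Finset.Icc 1 (p - 1)) :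
    good p 3 (1 / (a : ℚ) ^ (p - 2)
      - (3 * (a : ℚ) - 3 * (a : ℚ) ^ p + (a : ℚ) ^ (2 * p - 1))) := by
  have hmem := Finset.mem_Icc.mp ha
  have hnd : ¬ p ∣ a := not_dvd_mem hp ha
  have hA : (a : ℚ) ≠ 0 := Nat.cast_ne_zero.mpr (by omega)
  have hu : (a : ℚ) ^ (p - 2) ≠ 0 := pow_ne_zero _ hA
  obtain ⟨t, ht⟩ := fermat_dvd hp ha
  refine ⟨-(a : ℤ) * t ^ 3, (a : ℤ) ^ (p - 1), ?_, ?_⟩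
  · intro hdvd
    have := (intPrime hp).dvd_of_dvd_pow hdvd
    exact hnd (by exact_mod_cast this)
  · have e1 : (a : ℚ) ^ (p - 1) = (a : ℚ) ^ (p - 2) * (a : ℚ) := by
      rw [← pow_succ]
      congr 1
      omega
    have e2 : (a : ℚ) ^ p = (a : ℚ) ^ (p - 2) * (a : ℚ) ^ 2 := by
      rw [← pow_add]
      congr 1
      omega
    have e3 : (a : ℚ) ^ (2 * p - 1) = ((a : ℚ) ^ (p - 2)) ^ 2 * (a : ℚ) ^ 3 := by
      rw [← pow_mul, ← pow_add]
      congr 1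
      omega
    have hy : (a : ℚ) ^ (p - 2) * (a : ℚ) = 1 + (p : ℚ) * (t : ℚ) := by
      have hq : (a : ℚ) ^ (p - 1) - 1 = (p : ℚ) * (t : ℚ) := by exact_mod_cast ht
      rw [e1] at hq
      linarith
    push_cast
    rw [e1, e2, e3]
    exact alg _ _ _ _ hu hy

lemma TL2 (hp : p.Prime) (h5 : 5 ≤ p) :
    good p 3 ((∑ a ∈ Finset.Icc 1 (p - 1), 1 / (a : ℚ) ^ (p - 2))
      - (3 * T p 1 - 3 * T p p + T p (2 * p - 1))) := by
  rw [T_eq_Icc (by omega) (by omega : 1 ≤ 1), T_eq_Icc (by omega) (by omega : 1 ≤ p),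
    T_eq_Icc (by omega) (by omega : 1 ≤ 2 * p - 1)]
  have hcomb : (∑ a ∈ Finset.Icc 1 (p - 1), 1 / (a : ℚ) ^ (p - 2))
      - (3 * (∑ a ∈ Finset.Icc 1 (p - 1), (a : ℚ) ^ 1)
        - 3 * (∑ a ∈ Finset.Icc 1 (p - 1), (a : ℚ) ^ p)
        + (∑ a ∈ Finset.Icc 1 (p - 1), (a : ℚ) ^ (2 * p - 1)))
      = ∑ a ∈ Finset.Icc 1 (p - 1),
          (1 / (a : ℚ) ^ (p - 2) - (3 * (a : ℚ) - 3 * (a : ℚ) ^ p + (a : ℚ) ^ (2 * p - 1))) := by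
    rw [Finset.mul_sum, Finset.mul_sum, ← Finset.sum_sub_distrib, ← Finset.sum_add_distrib,
      ← Finset.sum_sub_distrib]
    apply Finset.sum_congr rfl
    intro a _
    rw [pow_one]
  rw [hcomb]
  exact good_sum hp _ _ fun a ha => TL2term hp h5 ha

lemma hT1 (h1 : 1 ≤ p) : T p 1 = (p : ℚ) * ((p : ℚ) - 1) / 2 := by
  have h := Finset.sum_range_id_mul_two p
  rw [T]
  simp only [pow_one]
  have hq := congrArg (fun z : ℕ => (z : ℚ)) h
  push_cast [Nat.cast_sub h1] at hq
  linarith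

theorem main_thm (p : ℕ) (hp : p.Prime) (hgt : 3 < p) :
    (∑ a ∈ Finset.Icc 1 (p - 1), 1 / (a : ℚ) ^ (p - 2))
        = (-(2 + (p : ℚ) * bernoulli (p - 1)) * (p : ℚ) + (5 / 2) * (p : ℚ) ^ 2)
      ∨ (3 : ℤ) ≤ padicValRat p ((∑ a ∈ Finset.Icc 1 (p - 1), 1 / (a : ℚ) ^ (p - 2))
        - (-(2 + (p : ℚ) * bernoulli (p - 1)) * (p : ℚ) + (5 / 2) * (p : ℚ) ^ 2)) := by
  have h5 : 5 ≤ p := by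
    rcases Nat.lt_or_ge p 5 with h | h
    · have hp4 : p = 4 := by omega
      rw [hp4] at hp
      norm_num at hp
    · exact h
  apply rcong_of_good hp
  have tl2 := TL2 hp h5
  rw [hT1 (by omega)] at tl2
  have tl7 := TL7 hp h5
  have tl10 := TL10 hp h5
  have tl8 := TL8 hp h5
  have hkey : (∑ a ∈ Finset.Icc 1 (p - 1), 1 / (a : ℚ) ^ (p - 2))
        - (-(2 + (p : ℚ) * bernoulli (p - 1)) * (p : ℚ) + (5 / 2) * (p : ℚ) ^ 2)
      = ((∑ a ∈ Finset.Icc 1 (p - 1), 1 / (a : ℚ) ^ (p - 2))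
          - (3 * ((p : ℚ) * ((p : ℚ) - 1) / 2) - 3 * T p p + T p (2 * p - 1)))
        + ((3 : ℤ) : ℚ) * (T p p + (p : ℚ) ^ 2 / 2) * ((-1 : ℤ) : ℚ)
        + (T p (2 * p - 1)
          - ((2 * (p : ℚ) - 1) / 2) * (p : ℚ)
            * (2 * ((p : ℚ) * bernoulli (p - 1)) - (p : ℚ) + 1))
        + (p : ℚ) ^ 2 * (((2 : ℤ) : ℚ) * ((p : ℚ) * bernoulli (p - 1) + 1) - (p : ℚ)) := by
    push_cast
    ring
  rw [hkey]
  refine good_add hp (good_add hp (good_add hp tl2 ?_) tl10) ?_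
  · exact good_mul3 hp (good_int hp 3) tl7 (good_int hp (-1)) (by omega)
  · have hin : good p 1 (((2 : ℤ) : ℚ) * ((p : ℚ) * bernoulli (p - 1) + 1) - (p : ℚ)) :=
      good_sub hp (by simpa using good_mul hp (good_int hp 2) tl8) (good_p1 hp)
    exact good_mono (by omega) (good_mul hp (good_p_pow hp 2) hin)

end SunAux

theorem sun_harmonic_p_sub_two (p : ℕ) (hp : p.Prime) (hgt : 3 < p) :
    rcong p 3 (∑ a ∈ Finset.Icc 1 (p - 1), 1 / (a : ℚ) ^ (p - 2))
      (-(2 + (p : ℚ) * bernoulli (p - 1)) * (p : ℚ) + (5 / 2) * (p : ℚ) ^ 2) :=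
  SunAux.main_thm p hp hgt
end

section
/- For every prime p > 3, Σ_{a=1}^{p-1} 1/a^{p-3} ≡ (1/2 − 3·B_{p+1})·p − (4/3)·p² (mod p³). -/
namespace SunAux

variable (p : ℕ)

/-- `q` is `p`-integral. -/
def pint (q : ℚ) : Prop := q = 0 ∨ 0 ≤ padicValRat p q

variable {p}

theorem pint_zero : pint p 0 := Or.inl rfl

theorem pint_intCast (z : ℤ) : pint p (z : ℚ) := by
  rcases eq_or_ne z 0 with h | h
  · exact Or.inl (by simp [h])
  · right
    rw [padicValRat.of_int]
    positivity

theorem pint_natCast (n : ℕ) : pint p (n : ℚ) := by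
  simpa using pint_intCast (p := p) (n : ℤ)

theorem pint_one : pint p 1 := by simpa using pint_natCast (p := p) 1

theorem pint_neg {q : ℚ} (h : pint p q) : pint p (-q) := by
  rcases h with h | h
  · exact Or.inl (by simp [h])
  · right; rwa [padicValRat.neg]

theorem pint_mul [Fact p.Prime] {a b : ℚ} (ha : pint p a) (hb : pint p b) : pint p (a * b) := by
  rcases eq_or_ne a 0 with h | h; · exact Or.inl (by simp [h])
  rcases eq_or_ne b 0 with h' | h'; · exact Or.inl (by simp [h'])
  rcases ha with h0 | ha; · exact absurd h0 h
  rcases hb with h0 | hb; · exact absurd h0 h'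
  right
  rw [padicValRat.mul h h']
  omega

theorem pint_add [hp : Fact p.Prime] {a b : ℚ} (ha : pint p a) (hb : pint p b) :
    pint p (a + b) := by
  rcases eq_or_ne (a + b) 0 with h | h; · exact Or.inl h
  right
  refine le_trans ?_ (padicValRat.min_le_padicValRat_add (p := p) h)
  rcases eq_or_ne a 0 with h0 | h0
  · rcases eq_or_ne b 0 with h1 | h1
    · simp [h0, h1] at h
    · rcases hb with h2 | h2; · exact absurd h2 h1
      simp [h0, padicValRat.zero, h2, le_min_iff]
  rcases ha with h2 | h2; · exact absurd h2 h0
  rcases eq_or_ne b 0 with h1 | h1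
  · simp [h1, padicValRat.zero, h2, le_min_iff]
  rcases hb with h3 | h3; · exact absurd h3 h1
  exact le_min h2 h3

theorem pint_sub [Fact p.Prime] {a b : ℚ} (ha : pint p a) (hb : pint p b) :
    pint p (a - b) := by
  rw [sub_eq_add_neg]; exact pint_add ha (pint_neg hb)

theorem pint_pow [Fact p.Prime] {a : ℚ} (ha : pint p a) (n : ℕ) : pint p (a ^ n) := by
  induction n with
  | zero => simpa using pint_one
  | succ n ih => rw [pow_succ]; exact pint_mul ih ha

theorem pint_sum [Fact p.Prime] {ι : Type*} {s : Finset ι} {f : ι → ℚ}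
    (h : ∀ i ∈ s, pint p (f i)) : pint p (∑ i ∈ s, f i) := by
  classical
  induction s using Finset.induction with
  | empty => simpa using pint_zero
  | insert _ _ hx ih =>
    rw [Finset.sum_insert hx]
    exact pint_add (h _ (Finset.mem_insert_self _ _))
      (ih fun i hi => h i (Finset.mem_insert_of_mem hi))

theorem pint_div_int [hp : Fact p.Prime] (a b : ℤ) (hb : ¬ (p : ℤ) ∣ b) :
    pint p ((a : ℚ) / (b : ℚ)) := by
  rcases eq_or_ne a 0 with h | h; · exact Or.inl (by simp [h])
  have hb0 : b ≠ 0 := by rintro rfl; exact hb (dvd_zero _)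
  right
  rw [padicValRat.div (by exact_mod_cast h) (by exact_mod_cast hb0)]
  rw [padicValRat.of_int, padicValRat.of_int,
    padicValInt.eq_zero_of_not_dvd hb]
  simp

theorem pint_inv_nat [hp : Fact p.Prime] (b : ℕ) (hb : ¬ p ∣ b) :
    pint p ((b : ℚ)⁻¹) := by
  have := pint_div_int (p := p) 1 (b : ℤ) (by exact_mod_cast hb)
  simpa [one_div] using this

end SunAux

namespace SunAux

variable {p : ℕ}

/-- congruence mod `p^n` of rationals. -/
def Cg (p n : ℕ) (a b : ℚ) : Prop := pint p ((a - b) / (p : ℚ) ^ n)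

theorem hppos [hp : Fact p.Prime] : (0:ℚ) < (p:ℚ)^3 := by
  have := hp.out.pos; positivity

theorem ppow_ne [hp : Fact p.Prime] (n : ℕ) : ((p:ℚ))^n ≠ 0 := by
  have := hp.out.pos; positivity

theorem Cg_of_sub_eq [Fact p.Prime] {n : ℕ} {a b q : ℚ}
    (h : a - b = (p : ℚ) ^ n * q) (hq : pint p q) : Cg p n a b := by
  unfold Cg
  rw [h, mul_comm, mul_div_assoc, div_self (ppow_ne n), mul_one]
  exact hq

theorem Cg.pint_quot {n : ℕ} {a b : ℚ} (h : Cg p n a b) :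
    pint p ((a - b) / (p : ℚ) ^ n) := h

theorem Cg_of_eq [Fact p.Prime] {n : ℕ} {a b : ℚ} (h : a = b) : Cg p n a b := by
  unfold Cg; rw [h, sub_self, zero_div]; exact pint_zero

theorem Cg.refl [Fact p.Prime] (n : ℕ) (a : ℚ) : Cg p n a a := Cg_of_eq rfl

theorem Cg.symm [Fact p.Prime] {n : ℕ} {a b : ℚ} (h : Cg p n a b) : Cg p n b a := by
  have := pint_neg h
  unfold Cg at *
  rwa [← neg_div, neg_sub] at this

theorem Cg.trans [Fact p.Prime] {n : ℕ} {a b c : ℚ} (h1 : Cg p n a b) (h2 : Cg p n b c) :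
    Cg p n a c := by
  have := pint_add h1 h2
  unfold Cg at *
  rwa [← add_div, sub_add_sub_cancel] at this

theorem Cg.add [Fact p.Prime] {n : ℕ} {a b c d : ℚ} (h1 : Cg p n a b) (h2 : Cg p n c d) :
    Cg p n (a + c) (b + d) := by
  have := pint_add h1 h2
  unfold Cg at *
  rwa [← add_div, show a - b + (c - d) = a + c - (b + d) by ring] at this

theorem Cg.sub [Fact p.Prime] {n : ℕ} {a b c d : ℚ} (h1 : Cg p n a b) (h2 : Cg p n c d) :
    Cg p n (a - c) (b - d) := by
  have := pint_sub h1 h2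
  unfold Cg at *
  rwa [div_sub_div_same, show a - b - (c - d) = a - c - (b - d) by ring] at this

theorem Cg.mul_left [Fact p.Prime] {n : ℕ} {a b : ℚ} (c : ℚ) (hc : pint p c)
    (h : Cg p n a b) : Cg p n (c * a) (c * b) := by
  have := pint_mul hc h
  unfold Cg at *
  rwa [show c * ((a - b) / (p:ℚ)^n) = (c * a - c * b)/(p:ℚ)^n by ring] at this

theorem Cg.sum [Fact p.Prime] {n : ℕ} {ι : Type*} {s : Finset ι} {f g : ι → ℚ}
    (h : ∀ i ∈ s, Cg p n (f i) (g i)) :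
    Cg p n (∑ i ∈ s, f i) (∑ i ∈ s, g i) := by
  classical
  induction s using Finset.induction with
  | empty => exact Cg_of_eq (by simp)
  | insert _ _ hx ih =>
    rw [Finset.sum_insert hx, Finset.sum_insert hx]
    exact Cg.add (h _ (Finset.mem_insert_self _ _))
      (ih fun i hi => h i (Finset.mem_insert_of_mem hi))

theorem Cg.mono [Fact p.Prime] {n m : ℕ} (hmn : m ≤ n) {a b : ℚ} (h : Cg p n a b) :
    Cg p m a b := by
  unfold Cg at *
  have : (a - b) / (p:ℚ)^m = (p:ℚ)^(n - m) * ((a - b)/(p:ℚ)^n) := by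
    rw [mul_comm, div_mul_eq_mul_div, div_eq_div_iff (ppow_ne m) (ppow_ne n),
      mul_assoc, ← pow_add]
    congr 2
    omega
  rw [this]
  exact pint_mul (pint_pow (pint_natCast p) _) h

/-- from integer congruence -/
theorem Cg_of_int_dvd [Fact p.Prime] {n : ℕ} {z w : ℤ} (h : (p:ℤ)^n ∣ z - w) :
    Cg p n (z : ℚ) (w : ℚ) := by
  obtain ⟨k, hk⟩ := h
  refine Cg_of_sub_eq ?_ (pint_intCast k)
  have := congrArg (fun z : ℤ => (z : ℚ)) hk
  push_cast at this
  linarith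

theorem Cg.rcong [hp : Fact p.Prime] {n : ℕ} {a b : ℚ} (h : Cg p n a b) :
    rcong p n a b := by
  rcases eq_or_ne a b with he | he
  · exact Or.inl he
  right
  have hsub : a - b ≠ 0 := sub_ne_zero.mpr he
  rcases h with h0 | h0
  · exact absurd (by rwa [div_eq_zero_iff, or_iff_left (ppow_ne n)] at h0) hsub
  have : a - b = (p:ℚ)^n * ((a - b)/(p:ℚ)^n) := by
    rw [mul_div_assoc', mul_comm, mul_div_assoc, div_self (ppow_ne n), mul_one]
  rw [this, padicValRat.mul (ppow_ne n) (by
      intro hz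
      rw [hz, mul_zero] at this
      exact hsub this)]
  have hv : padicValRat p ((p:ℚ)^n) = n := by
    rw [padicValRat.pow _,
      padicValRat.self hp.out.one_lt]
    simp
  rw [hv]
  omega

end SunAux

namespace SunAux

variable {p : ℕ}

theorem padicValNat_succ_le [hp : Fact p.Prime] (j : ℕ) : padicValNat p (j + 1) ≤ j := by
  have h1 : p ^ padicValNat p (j + 1) ∣ (j + 1) := pow_padicValNat_dvd
  have h2 : p ^ padicValNat p (j + 1) ≤ j + 1 := Nat.le_of_dvd (Nat.succ_pos j) h1
  have h3 : j + 1 ≤ 2 ^ j := Nat.lt_two_pow_self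
  have h4 : (2:ℕ) ^ j ≤ p ^ j := Nat.pow_le_pow_left hp.out.two_le j
  have : p ^ padicValNat p (j + 1) ≤ p ^ j := le_trans h2 (le_trans h3 h4)
  exact (Nat.pow_le_pow_iff_right hp.out.one_lt).mp this

theorem pint_ppow_div [hp : Fact p.Prime] (j m : ℕ) (hm : m ≠ 0)
    (hv : padicValNat p m ≤ j) : pint p ((p : ℚ) ^ j / (m : ℚ)) := by
  right
  rw [padicValRat.div (ppow_ne j) (by exact_mod_cast hm)]
  have h1 : padicValRat p ((p:ℚ)^j) = j := by
    rw [padicValRat.pow _, padicValRat.self hp.out.one_lt]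
    simp
  rw [h1, padicValRat.of_nat]
  omega

/-- Faulhaber, rearranged with per-term denominators. -/
theorem faulhaber' (N n : ℕ) :
    (∑ a ∈ Finset.range N, (a : ℚ) ^ n) =
      ∑ k ∈ Finset.range (n + 1),
        bernoulli k * (n.choose k) * (N : ℚ) ^ (n + 1 - k) / ((n + 1 - k : ℕ) : ℚ) := by
  rw [sum_range_pow]
  refine Finset.sum_congr rfl fun k hk => ?_
  have hk' : k ≤ n := Nat.lt_succ_iff.mp (Finset.mem_range.mp hk)
  have key : (n.choose k : ℚ) * (n + 1) = ((n+1).choose k : ℚ) * ((n + 1 - k : ℕ) : ℚ) := by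
    exact_mod_cast congrArg (fun z : ℕ => (z : ℚ)) (Nat.choose_mul_succ_eq n k)
  have h1 : ((n:ℚ) + 1) ≠ 0 := by positivity
  have h2 : ((n + 1 - k : ℕ) : ℚ) ≠ 0 := by
    have : 0 < n + 1 - k := by omega
    exact_mod_cast this.ne'
  rw [div_eq_div_iff h1 h2]
  linear_combination (-(bernoulli k * (N:ℚ)^(n+1-k))) * key

/-- Weak von Staudt–Clausen: `p * B_n` is `p`-integral. -/
theorem wvs [hp : Fact p.Prime] : ∀ n : ℕ, pint p ((p : ℚ) * bernoulli n) := by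
  intro n
  induction n using Nat.strong_induction_on with
  | _ n ih =>
  have key := faulhaber' p n
  rw [Finset.sum_range_succ] at key
  have hterm : bernoulli n * (n.choose n : ℚ) * (p:ℚ)^(n+1-n) / ((n+1-n : ℕ):ℚ)
      = (p:ℚ) * bernoulli n := by
    rw [Nat.choose_self]
    have : n + 1 - n = 1 := by omega
    rw [this]
    push_cast
    ring
  rw [hterm] at key
  have : (p:ℚ) * bernoulli n
      = (∑ a ∈ Finset.range p, (a : ℚ) ^ n)
        - ∑ k ∈ Finset.range n, bernoulli k * (n.choose k : ℚ) * (p:ℚ)^(n+1-k) / ((n+1-k:ℕ):ℚ) := by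
    rw [key]; ring
  rw [this]
  refine pint_sub (pint_sum fun a _ => pint_pow (pint_natCast a) n) (pint_sum fun k hk => ?_)
  have hk' : k < n := Finset.mem_range.mp hk
  have heq : bernoulli k * (n.choose k : ℚ) * (p:ℚ)^(n+1-k) / ((n+1-k:ℕ):ℚ)
      = ((p:ℚ) * bernoulli k) * (n.choose k : ℚ) * ((p:ℚ)^(n-k) / ((n+1-k:ℕ):ℚ)) := by
    have hpow : (p:ℚ)^(n+1-k) = (p:ℚ) * (p:ℚ)^(n-k) := by
      rw [← pow_succ']
      congr 1
      omega
    rw [hpow]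
    ring
  rw [heq]
  refine pint_mul (pint_mul (ih k hk') (pint_natCast _)) ?_
  have h0 : n + 1 - k = (n - k) + 1 := by omega
  refine pint_ppow_div (n - k) (n + 1 - k) (by omega) ?_
  rw [h0]
  exact padicValNat_succ_le (n - k)
end SunAux

namespace SunAux

variable {p : ℕ}

theorem bernoulli_odd_zero {n : ℕ} (hodd : Odd n) (h1 : 1 < n) : bernoulli n = 0 := by
  rw [bernoulli_eq_bernoulli'_of_ne_one (by omega)]
  exact bernoulli'_eq_zero_of_odd hodd h1

theorem add_four_le_pow {q : ℕ} (hq : 5 ≤ q) : ∀ v : ℕ, 1 ≤ v → v + 4 ≤ q ^ v := by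
  intro v hv
  induction v with
  | zero => omega
  | succ v ih =>
    rcases Nat.eq_or_lt_of_le hv with h | h
    · simp [← h]; omega
    · have h1 : 1 ≤ v := by omega
      have := ih h1
      have h2 : q ^ v * 1 ≤ q ^ v * q := Nat.mul_le_mul_left _ (by omega)
      calc v + 1 + 4 ≤ q ^ v + 1 := by omega
        _ ≤ q ^ v * q := by nlinarith [Nat.one_le_two_pow (n := v) ]
        _ = q ^ (v+1) := by rw [pow_succ]
  
/-- For `p ≥ 5` and `m ≥ 4`, `v_p(m) ≤ m - 4`. -/
theorem val_bound [hp : Fact p.Prime] (hp5 : 5 ≤ p) {m : ℕ} (hm : 4 ≤ m) :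
    padicValNat p m + 4 ≤ m := by
  set v := padicValNat p m with hv
  rcases Nat.eq_zero_or_pos v with h | h
  · omega
  have h1 : p ^ v ∣ m := pow_padicValNat_dvd
  have h2 : p ^ v ≤ m := Nat.le_of_dvd (by omega) h1
  have h3 : (5:ℕ) ^ v ≤ p ^ v := Nat.pow_le_pow_left hp5 v
  have := add_four_le_pow (le_refl 5) v h
  omega

/-- generic tail term bound -/
theorem pint_term [hp : Fact p.Prime] (e k r s : ℕ) (hk : k ≤ e)
    (h : s + padicValNat p (e + 1 - k) + 1 ≤ r * (e + 1 - k)) :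
    pint p (bernoulli k * (e.choose k : ℚ) * ((p:ℚ)^r) ^ (e + 1 - k) / ((e + 1 - k : ℕ) : ℚ)
      / (p:ℚ) ^ s) := by
  set t := e + 1 - k with ht
  have htpos : 0 < t := by omega
  have hd : ((t : ℕ) : ℚ) ≠ 0 := by exact_mod_cast htpos.ne'
  have hrt : s + padicValNat p t + 1 ≤ r * t := h
  have key : bernoulli k * (e.choose k : ℚ) * ((p:ℚ)^r) ^ t / ((t : ℕ) : ℚ) / (p:ℚ) ^ s
      = ((p:ℚ) * bernoulli k) * (e.choose k : ℚ) * ((p:ℚ) ^ (r * t - 1 - s) / ((t:ℕ):ℚ)) := by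
    have hT : ((p:ℚ)^r) ^ t = (p:ℚ) * ((p:ℚ) ^ (r * t - 1 - s) * (p:ℚ) ^ s) := by
      rw [← pow_mul, ← pow_add, ← pow_succ']
      congr 1
      omega
    have hpne : (p:ℚ) ≠ 0 := by exact_mod_cast hp.out.pos.ne'
    rw [hT]
    field_simp
  rw [key]
  refine pint_mul (pint_mul (wvs k) (pint_natCast _)) ?_
  exact pint_ppow_div _ _ (by omega) (by omega)

/-- special term `k = e - 2` when `p ∣ C(e,2)` -/
theorem pint_term_special [hp : Fact p.Prime] (e r s : ℕ) (he : 2 ≤ e)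
    (hC : p ∣ e.choose (e - 2)) (hrs : s ≤ 3 * r) (hp3 : ¬ p ∣ 3) :
    pint p (bernoulli (e-2) * (e.choose (e-2) : ℚ) * ((p:ℚ)^r) ^ (e + 1 - (e-2))
      / ((e + 1 - (e-2) : ℕ) : ℚ) / (p:ℚ) ^ s) := by
  obtain ⟨c, hc⟩ := hC
  have h3 : e + 1 - (e - 2) = 3 := by omega
  rw [h3, hc]
  have key : bernoulli (e-2) * ((p * c : ℕ) : ℚ) * ((p:ℚ)^r) ^ 3 / ((3 : ℕ) : ℚ) / (p:ℚ) ^ s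
      = ((p:ℚ) * bernoulli (e-2)) * (c : ℚ) * ((p:ℚ) ^ (3 * r - s) / ((3:ℕ):ℚ)) := by
    have hT : ((p:ℚ)^r) ^ 3 = (p:ℚ) ^ (3 * r - s) * (p:ℚ) ^ s := by
      rw [← pow_mul, ← pow_add]
      congr 1
      omega
    have hpne : (p:ℚ) ≠ 0 := by exact_mod_cast hp.out.pos.ne'
    rw [hT]
    push_cast
    field_simp
  rw [key]
  refine pint_mul (pint_mul (wvs _) (pint_natCast _)) ?_
  refine pint_ppow_div _ _ (by omega) ?_
  rw [padicValNat.eq_zero_of_not_dvd hp3]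
  omega

end SunAux

namespace SunAux

variable {p : ℕ}

theorem sum_cong_main [hp : Fact p.Prime] (e r s : ℕ) (he : 4 ≤ e)
    (hodd : Odd (e - 1)) (hC : p ∣ e.choose (e - 2)) (hrs : s ≤ 3 * r)
    (hp3 : ¬ p ∣ 3)
    (hgen : ∀ k, k + 3 ≤ e → s + padicValNat p (e + 1 - k) + 1 ≤ r * (e + 1 - k)) :
    Cg p s (∑ a ∈ Finset.range (p ^ r), (a : ℚ) ^ e) ((p:ℚ) ^ r * bernoulli e) := by
  have key := faulhaber' (p ^ r) e
  rw [Finset.sum_range_succ] at key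
  have hcast : ((p ^ r : ℕ) : ℚ) = (p : ℚ) ^ r := by push_cast; ring
  rw [hcast] at key
  have hlast : bernoulli e * (e.choose e : ℚ) * ((p:ℚ) ^ r) ^ (e + 1 - e) / ((e + 1 - e : ℕ) : ℚ)
      = (p:ℚ) ^ r * bernoulli e := by
    rw [Nat.choose_self]
    have h1 : e + 1 - e = 1 := by omega
    rw [h1]; push_cast; ring
  rw [hlast] at key
  unfold Cg
  have hdiff : (∑ a ∈ Finset.range (p ^ r), (a : ℚ) ^ e) - (p:ℚ) ^ r * bernoulli e
      = ∑ k ∈ Finset.range e,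
          bernoulli k * (e.choose k : ℚ) * ((p:ℚ) ^ r) ^ (e + 1 - k) / ((e + 1 - k : ℕ) : ℚ) := by
    rw [key]; ring
  rw [hdiff, Finset.sum_div]
  refine pint_sum fun k hk => ?_
  have hk' : k < e := Finset.mem_range.mp hk
  by_cases h1 : k = e - 1
  · have : bernoulli k = 0 := by
      rw [h1]; exact bernoulli_odd_zero hodd (by omega)
    rw [this]
    simpa using pint_zero
  by_cases h2 : k = e - 2
  · rw [h2]
    exact pint_term_special e r s (by omega) hC hrs hp3
  · exact pint_term e k r s (by omega) (hgen k (by omega))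

theorem choose_two_dvd_two_mul (hp2 : 2 ≤ p) : p ∣ (2*p).choose (2*p - 2) := by
  have h1 := Nat.choose_symm (n := 2*p) (k := 2) (by omega)
  rw [h1, Nat.choose_two_right]
  refine ⟨2*p - 1, ?_⟩
  have h2 : 2*p*(2*p-1) = 2*(p*(2*p-1)) := by ring
  rw [h2, Nat.mul_div_cancel_left _ (by norm_num)]

theorem choose_two_dvd_succ (hodd : Odd p) (hp2 : 2 ≤ p) : p ∣ (p+1).choose (p+1-2) := by
  have h1 := Nat.choose_symm (n := p+1) (k := 2) (by omega)
  obtain ⟨m, hm⟩ := hodd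
  rw [h1, Nat.choose_two_right]
  refine ⟨m + 1, ?_⟩
  have h2 : (p+1) * (p+1-1) = 2*((m+1)*p) := by
    rw [show p + 1 - 1 = p by omega, hm]; ring
  rw [h2, Nat.mul_div_cancel_left _ (by norm_num), Nat.mul_comm]

theorem hp3' [hp : Fact p.Prime] (hp5 : 5 ≤ p) : ¬ p ∣ 3 := by
  intro h
  have := Nat.le_of_dvd (by norm_num) h
  omega

theorem B1 [hp : Fact p.Prime] (hp5 : 5 ≤ p) :
    Cg p 3 (∑ a ∈ Finset.range p, (a : ℚ) ^ (2*p)) ((p:ℚ) * bernoulli (2*p)) := by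
  have := sum_cong_main (p := p) (2*p) 1 3 (by omega)
    ⟨p - 1, by omega⟩ (choose_two_dvd_two_mul (by omega)) (by omega) (hp3' hp5)
    (fun k hk => by
      have h4 : 4 ≤ 2*p + 1 - k := by omega
      have := val_bound (p := p) hp5 h4
      omega)
  simpa [pow_one] using this

theorem B2 [hp : Fact p.Prime] (hp5 : 5 ≤ p) :
    Cg p 3 (∑ a ∈ Finset.range p, (a : ℚ) ^ (p+1)) ((p:ℚ) * bernoulli (p+1)) := by
  have hodd : Odd p := hp.out.odd_of_ne_two (by omega)
  have := sum_cong_main (p := p) (p+1) 1 3 (by omega)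
    (by simpa using hodd) (choose_two_dvd_succ hodd (by omega)) (by omega) (hp3' hp5)
    (fun k hk => by
      have h4 : 4 ≤ p + 1 + 1 - k := by omega
      have := val_bound (p := p) hp5 h4
      omega)
  simpa [pow_one] using this

theorem B4 [hp : Fact p.Prime] (hp5 : 5 ≤ p) :
    Cg p 4 (∑ a ∈ Finset.range (p^2), (a : ℚ) ^ (2*p)) ((p:ℚ)^2 * bernoulli (2*p)) := by
  exact sum_cong_main (p := p) (2*p) 2 4 (by omega)
    ⟨p - 1, by omega⟩ (choose_two_dvd_two_mul (by omega)) (by omega) (hp3' hp5)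
    (fun k hk => by
      have h4 : 4 ≤ 2*p + 1 - k := by omega
      have := val_bound (p := p) hp5 h4
      omega)

end SunAux

namespace SunAux

variable {p : ℕ}

theorem int_pow_lin (x r : ℤ) : ∀ m : ℕ, 1 ≤ m →
    x ^ 2 ∣ ((x + r) ^ m - r ^ m - (m : ℤ) * x * r ^ (m - 1)) := by
  intro m
  induction m with
  | zero => omega
  | succ m ih =>
    intro _
    rcases Nat.eq_zero_or_pos m with h0 | h0
    · subst h0
      simp
    obtain ⟨k, hk⟩ := ih h0
    refine ⟨(x + r) * k + (m : ℤ) * r ^ (m - 1), ?_⟩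
    have hr : r ^ m = r * r ^ (m - 1) := by
      rw [← pow_succ']
      congr 1
      omega
    have hsucc : m + 1 - 1 = m := by omega
    rw [hsucc, pow_succ, pow_succ]
    push_cast
    linear_combination (x + r) * hk - (m : ℤ) * x * hr

theorem int_fermat [hp : Fact p.Prime] (z : ℤ) : (p : ℤ) ∣ z ^ (2 * p - 1) - z := by
  have h2 : 2 * p - 1 = p + (p - 1) := by have := hp.out.two_le; omega
  rw [← ZMod.intCast_zmod_eq_zero_iff_dvd]
  push_cast
  rw [sub_eq_zero, h2, pow_add]
  rcases eq_or_ne ((z : ZMod p)) 0 with h | h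
  · rw [h, zero_pow (by have := hp.out.two_le; omega)]
    ring
  · rw [ZMod.pow_card_sub_one_eq_one h, ZMod.pow_card]
    ring

theorem sum_odds (M : ℕ) : (∑ j ∈ Finset.range M, (2 * (j:ℤ) + 1)) = (M:ℤ)^2 := by
  induction M with
  | zero => simp
  | succ M ih =>
    rw [Finset.sum_range_succ, ih]
    push_cast
    ring

/-- reindexing `a ↦ (2a) % N` -/
theorem sum_two_mul_mod (N : ℕ) (hodd : Odd N) (hN : 0 < N) (F : ℕ → ℤ) :
    (∑ a ∈ Finset.range N, F ((2 * a) % N)) = ∑ a ∈ Finset.range N, F a := by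
  obtain ⟨c, hc⟩ : ∃ c, 2 * c = N + 1 := by
    obtain ⟨t, ht⟩ := hodd
    exact ⟨t + 1, by omega⟩
  refine Finset.sum_nbij' (i := fun a => (2 * a) % N) (j := fun b => (c * b) % N) ?_ ?_ ?_ ?_ ?_
  · intro a ha
    exact Finset.mem_range.mpr (Nat.mod_lt _ hN)
  · intro b hb
    exact Finset.mem_range.mpr (Nat.mod_lt _ hN)
  · intro a ha
    have ha' : a < N := Finset.mem_range.mp ha
    have h1 : (c * (2 * a % N)) % N = (c * (2 * a)) % N := by
      conv_lhs => rw [Nat.mul_mod, Nat.mod_mod_of_dvd _ dvd_rfl, ← Nat.mul_mod]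
    have h3 : c * (2 * a) = a + a * N := by
      calc c * (2 * a) = 2 * c * a := by ring
        _ = (N + 1) * a := by rw [hc]
        _ = a + a * N := by ring
    simp only [h1, h3, Nat.add_mul_mod_self_right]
    exact Nat.mod_eq_of_lt ha'
  · intro b hb
    have hb' : b < N := Finset.mem_range.mp hb
    have h1 : (2 * (c * b % N)) % N = (2 * (c * b)) % N := by
      conv_lhs => rw [Nat.mul_mod, Nat.mod_mod_of_dvd _ dvd_rfl, ← Nat.mul_mod]
    have h3 : 2 * (c * b) = b + b * N := by
      calc 2 * (c * b) = 2 * c * b := by ring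
        _ = (N + 1) * b := by rw [hc]
        _ = b + b * N := by ring
    simp only [h1, h3, Nat.add_mul_mod_self_right]
    exact Nat.mod_eq_of_lt hb'
  · intro a ha
    rfl

/-- reindexing the odd part -/
theorem sum_odd_filter (N : ℕ) (hodd : Odd N) (F : ℕ → ℤ) :
    (∑ a ∈ Finset.range N, (if N ≤ 2 * a then F (2 * a - N) else 0))
      = ∑ j ∈ Finset.range ((N - 1) / 2), F (2 * j + 1) := by
  rw [Finset.sum_ite, Finset.sum_const_zero, add_zero]
  set M := (N - 1) / 2 with hM
  set c := N - M with hc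
  obtain ⟨t, ht⟩ := hodd
  have hMt : M = t := by omega
  refine Finset.sum_nbij' (i := fun a => a - c) (j := fun j => j + c) ?_ ?_ ?_ ?_ ?_
  · intro a ha
    simp only [Finset.mem_filter, Finset.mem_range] at ha
    simp only [Finset.mem_range]
    omega
  · intro j hj
    simp only [Finset.mem_range] at hj
    simp only [Finset.mem_filter, Finset.mem_range]
    omega
  · intro a ha
    simp only [Finset.mem_filter, Finset.mem_range] at ha
    beta_reduce
    omega
  · intro j hj
    simp only [Finset.mem_range] at hj
    beta_reduce
    omega
  · intro a ha
    simp only [Finset.mem_filter, Finset.mem_range] at ha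
    beta_reduce
    congr 1
    omega

end SunAux

namespace SunAux

variable {p : ℕ}

theorem hper_lemma [hp : Fact p.Prime] (a : ℕ) (ha : a < p ^ 2) :
    (p:ℤ)^4 ∣ (2*(a:ℤ))^(2*p) - (((2*a) % p^2 : ℕ):ℤ)^(2*p)
      - 2*(p:ℤ)*((p:ℤ)^2) * (if p^2 ≤ 2*a then (((2*a - p^2 : ℕ)):ℤ)^(2*p-1) else 0) := by
  have hp2 := hp.out.two_le
  by_cases h : p^2 ≤ 2*a
  · have hmod : (2*a) % p^2 = 2*a - p^2 := by
      rw [Nat.mod_eq_sub_mod h]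
      exact Nat.mod_eq_of_lt (by omega)
    rw [hmod, if_pos h]
    have hcast : ((2*a - p^2 : ℕ) : ℤ) = 2*(a:ℤ) - (p:ℤ)^2 := by
      push_cast [h]
      ring
    rw [hcast]
    have key := int_pow_lin ((p:ℤ)^2) (2*(a:ℤ) - (p:ℤ)^2) (2*p) (by omega)
    obtain ⟨k, hk⟩ := key
    refine ⟨k, ?_⟩
    have hx : (p:ℤ)^2 + (2*(a:ℤ) - (p:ℤ)^2) = 2*(a:ℤ) := by ring
    rw [hx] at hk
    push_cast at hk
    linear_combination hk
  · have hmod : (2*a) % p^2 = 2*a := Nat.mod_eq_of_lt (by omega)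
    rw [hmod, if_neg h]
    push_cast
    simp

theorem voronoi_dvd [hp : Fact p.Prime] (hp5 : 5 ≤ p) :
    (p:ℤ)^4 ∣ ((2:ℤ)^(2*p) * (∑ a ∈ Finset.range (p^2), (a:ℤ)^(2*p))
      - (∑ a ∈ Finset.range (p^2), (a:ℤ)^(2*p))
      - 2*(p:ℤ)^3 * (∑ j ∈ Finset.range ((p^2-1)/2), ((2*j+1 : ℕ):ℤ)^(2*p-1))) := by
  have hodd : Odd p := hp.out.odd_of_ne_two (by omega)
  have hoddN : Odd (p^2) := hodd.pow
  have hNpos : 0 < p^2 := by positivity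
  have h1 : (p:ℤ)^4 ∣ ∑ a ∈ Finset.range (p^2),
      ((2*(a:ℤ))^(2*p) - (((2*a) % p^2 : ℕ):ℤ)^(2*p)
        - 2*(p:ℤ)*((p:ℤ)^2) * (if p^2 ≤ 2*a then (((2*a - p^2 : ℕ)):ℤ)^(2*p-1) else 0)) :=
    Finset.dvd_sum fun a ha => hper_lemma a (Finset.mem_range.mp ha)
  have h2 : ∑ a ∈ Finset.range (p^2),
      ((2*(a:ℤ))^(2*p) - (((2*a) % p^2 : ℕ):ℤ)^(2*p)
        - 2*(p:ℤ)*((p:ℤ)^2) * (if p^2 ≤ 2*a then (((2*a - p^2 : ℕ)):ℤ)^(2*p-1) else 0))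
      = (2:ℤ)^(2*p) * (∑ a ∈ Finset.range (p^2), (a:ℤ)^(2*p))
        - (∑ a ∈ Finset.range (p^2), (((2*a) % p^2 : ℕ):ℤ)^(2*p))
        - 2*(p:ℤ)^3 * (∑ a ∈ Finset.range (p^2),
            (if p^2 ≤ 2*a then (((2*a - p^2 : ℕ)):ℤ)^(2*p-1) else 0)) := by
    rw [Finset.sum_sub_distrib, Finset.sum_sub_distrib, ← Finset.mul_sum]
    have e1 : ∑ a ∈ Finset.range (p^2), (2*(a:ℤ))^(2*p)
        = (2:ℤ)^(2*p) * ∑ a ∈ Finset.range (p^2), (a:ℤ)^(2*p) := by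
      rw [Finset.mul_sum]
      exact Finset.sum_congr rfl fun a _ => by rw [mul_pow]
    rw [e1]
    ring
  have h3 := sum_two_mul_mod (p^2) hoddN hNpos (fun n => (n:ℤ)^(2*p))
  have h4 := sum_odd_filter (p^2) hoddN (fun n => (n:ℤ)^(2*p-1))
  rw [h2] at h1
  beta_reduce at h3 h4
  rw [h3, h4] at h1
  exact h1

theorem fermat_four [hp : Fact p.Prime] (hp5 : 5 ≤ p) :
    ∃ w : ℤ, (2:ℤ)^(2*p) - 4 = (p:ℤ) * w := by
  have h1 : (p:ℤ) ∣ (4:ℤ)^(p-1) - 1 := by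
    rw [← ZMod.intCast_zmod_eq_zero_iff_dvd]
    push_cast
    rw [sub_eq_zero]
    refine ZMod.pow_card_sub_one_eq_one ?_
    intro hc
    have : (p:ℤ) ∣ 4 := by
      have := (ZMod.intCast_zmod_eq_zero_iff_dvd 4 p).mp (by push_cast; exact hc)
      exact this
    have := Int.le_of_dvd (by norm_num) this
    omega
  obtain ⟨w, hw⟩ := h1
  refine ⟨4 * w, ?_⟩
  obtain ⟨m, hm⟩ : ∃ m, p = m + 1 := ⟨p-1, by omega⟩
  subst hm
  have h2 : (2:ℤ)^(2*(m+1)) = 4 * 4^(m+1-1) := by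
    have h4 : (2:ℤ)^(2*(m+1)) = 4^(m+1) := by
      rw [show (4:ℤ) = 2^2 by norm_num, ← pow_mul]
    rw [h4, Nat.add_sub_cancel, pow_succ']
  rw [h2]
  linear_combination 4 * hw

theorem sodd_cong [hp : Fact p.Prime] (hp5 : 5 ≤ p) :
    ∃ z : ℤ, 4 * (∑ j ∈ Finset.range ((p^2-1)/2), ((2*j+1 : ℕ):ℤ)^(2*p-1)) - 1 = (p:ℤ) * z := by
  set M := (p^2-1)/2 with hM
  have h1 : (p:ℤ) ∣ (∑ j ∈ Finset.range M, ((2*j+1 : ℕ):ℤ)^(2*p-1))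
      - (∑ j ∈ Finset.range M, (2*(j:ℤ)+1)) := by
    rw [← Finset.sum_sub_distrib]
    refine Finset.dvd_sum fun j _ => ?_
    have := int_fermat (p := p) ((2*j+1 : ℕ):ℤ)
    have hc : ((2*j+1 : ℕ):ℤ) = 2*(j:ℤ)+1 := by push_cast; ring
    rwa [hc] at this
  obtain ⟨y, hy⟩ := h1
  rw [sum_odds M] at hy
  have hodd : Odd p := hp.out.odd_of_ne_two (by omega)
  have h2M : 2 * M = p^2 - 1 := by
    obtain ⟨t, ht⟩ := hodd
    have : p^2 = 2*(2*t^2+2*t) + 1 := by rw [ht]; ring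
    omega
  have h2Mz : 2 * (M:ℤ) = (p:ℤ)^2 - 1 := by
    have hple : 1 ≤ p^2 := by nlinarith
    have := congrArg (fun n : ℕ => (n:ℤ)) h2M
    push_cast [hple] at this
    exact_mod_cast this
  refine ⟨4 * y + ((p:ℤ)^3 - 2*(p:ℤ)), ?_⟩
  have h3 : 4 * (M:ℤ)^2 - 1 = (p:ℤ) * ((p:ℤ)^3 - 2*(p:ℤ)) := by
    have : 4 * (M:ℤ)^2 = (2*(M:ℤ))^2 := by ring
    rw [this, h2Mz]
    ring
  linear_combination 4 * hy + h3

end SunAux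

namespace SunAux

variable {p : ℕ}

theorem Cg.mul_p [hp : Fact p.Prime] {n : ℕ} {a b : ℚ} (h : Cg p n a b) :
    Cg p (n+1) ((p:ℚ) * a) ((p:ℚ) * b) := by
  unfold Cg at *
  have hpne : (p:ℚ) ≠ 0 := by exact_mod_cast hp.out.pos.ne'
  have : ((p:ℚ) * a - (p:ℚ) * b) / (p:ℚ)^(n+1) = (a - b) / (p:ℚ)^n := by
    rw [pow_succ']
    field_simp
  rw [this]
  exact h

theorem key_B2p [hp : Fact p.Prime] (hp5 : 5 ≤ p) :
    Cg p 2 (bernoulli (2*p)) ((p:ℚ)/6) := by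
  have hpne : (p:ℚ) ≠ 0 := by exact_mod_cast hp.out.pos.ne'
  obtain ⟨K, hK⟩ := voronoi_dvd (p := p) hp5
  obtain ⟨z, hz⟩ := sodd_cong (p := p) hp5
  obtain ⟨w, hw⟩ := fermat_four (p := p) hp5
  have hB4 := B4 (p := p) hp5
  set B := bernoulli (2*p) with hBdef
  set ε := ((∑ a ∈ Finset.range (p^2), (a:ℚ)^(2*p)) - (p:ℚ)^2 * B) / (p:ℚ)^4 with hεdef
  have hεp : pint p ε := hB4
  have hεe : (∑ a ∈ Finset.range (p^2), (a:ℚ)^(2*p)) - (p:ℚ)^2 * B = (p:ℚ)^4 * ε := by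
    rw [hεdef, mul_comm ((p:ℚ)^4)]
    exact (div_mul_cancel₀ _ (ppow_ne 4)).symm
  have hcastSz : ((∑ a ∈ Finset.range (p^2), (a:ℤ)^(2*p) : ℤ) : ℚ)
      = ∑ a ∈ Finset.range (p^2), (a:ℚ)^(2*p) := by
    push_cast
    rfl
  -- cast the integer facts to ℚ
  have hKQ : (2:ℚ)^(2*p) * (∑ a ∈ Finset.range (p^2), (a:ℚ)^(2*p))
      - (∑ a ∈ Finset.range (p^2), (a:ℚ)^(2*p))
      - 2*(p:ℚ)^3 * ((∑ j ∈ Finset.range ((p^2-1)/2), ((2*j+1:ℕ):ℤ)^(2*p-1) : ℤ) : ℚ)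
      = (p:ℚ)^4 * (K:ℚ) := by
    have := congrArg (fun z : ℤ => (z:ℚ)) hK.symm
    push_cast at this
    rw [← hcastSz]
    push_cast
    linarith [this]
  have hzQ : 4 * ((∑ j ∈ Finset.range ((p^2-1)/2), ((2*j+1:ℕ):ℤ)^(2*p-1) : ℤ) : ℚ) - 1
      = (p:ℚ) * (z:ℚ) := by
    have := congrArg (fun t : ℤ => (t:ℚ)) hz
    push_cast at this
    push_cast
    linarith [this]
  have hwQ : (2:ℚ)^(2*p) - 4 = (p:ℚ) * (w:ℚ) := by
    have := congrArg (fun t : ℤ => (t:ℚ)) hw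
    push_cast at this
    linarith [this]
  set q : ℚ := (K:ℚ) + (z:ℚ)/2 - ((2:ℚ)^(2*p) - 1) * ε with hqdef
  have hqp : pint p q := by
    refine pint_sub (pint_add (pint_intCast K) ?_) (pint_mul ?_ hεp)
    · have := pint_div_int (p := p) z 2 (by
        intro hd
        have := Int.le_of_dvd (by norm_num) hd
        omega)
      simpa using this
    · have h2 : ((2:ℚ)^(2*p) - 1) = (((2^(2*p) - 1 : ℤ)):ℚ) := by push_cast; ring
      rw [h2]
      exact pint_intCast _
  have hq : ((2:ℚ)^(2*p) - 1) * ((p:ℚ)^2 * B) - (p:ℚ)^3/2 = (p:ℚ)^4 * q := by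
    rw [hqdef]
    linear_combination ((p:ℚ)^3/2) * hzQ + hKQ - ((2:ℚ)^(2*p) - 1) * hεe
  -- now solve for B
  have hDne : ((2:ℚ)^(2*p) - 1) ≠ 0 := by
    have h1 : (1:ℚ) < (2:ℚ)^(2*p) := by
      refine one_lt_pow₀ one_lt_two (by omega)
    intro hc
    rw [sub_eq_zero] at hc
    rw [← hc] at h1
    norm_num at h1
  set Dz : ℤ := 2^(2*p) - 1 with hDzdef
  have hDcast : ((Dz : ℤ):ℚ) = (2:ℚ)^(2*p) - 1 := by rw [hDzdef]; push_cast; ring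
  have hDz3 : Dz = (p:ℤ) * w + 3 := by rw [hDzdef]; linear_combination hw
  have hnd : ¬ (p:ℤ) ∣ 6 * Dz := by
    intro hd
    have hpz : Prime (p:ℤ) := Nat.prime_iff_prime_int.mp hp.out
    rcases hpz.dvd_mul.mp hd with h | h
    · have h6 : p ∣ 6 := by exact_mod_cast h
      have hle := Nat.le_of_dvd (by norm_num) h6
      interval_cases p
      · norm_num at h6
      · exact absurd hp.out (by norm_num)
    · rw [hDz3] at h
      have h3 : (p:ℤ) ∣ 3 := (dvd_add_right ⟨w, rfl⟩).mp h
      have h3' : p ∣ 3 := by exact_mod_cast h3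
      have := Nat.le_of_dvd (by norm_num) h3'
      omega
  have hkey2 : (p:ℚ)^2 * (6*((2:ℚ)^(2*p) - 1)*(B - (p:ℚ)/6))
      = (p:ℚ)^2 * ((p:ℚ)^2 * (6*q - (w:ℚ))) := by
    linear_combination 6 * hq - (p:ℚ)^3 * hwQ
  have hkey : 6*((2:ℚ)^(2*p) - 1)*(B - (p:ℚ)/6) = (p:ℚ)^2 * (6*q - (w:ℚ)) :=
    mul_left_cancel₀ (pow_ne_zero 2 hpne) hkey2
  have hXp : pint p ((6*q - (w:ℚ)) * (((1:ℤ):ℚ) / ((6 * Dz : ℤ):ℚ))) := by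
    refine pint_mul (pint_sub (pint_mul ?_ hqp) (pint_intCast w)) (pint_div_int 1 (6*Dz) hnd)
    have := pint_natCast (p := p) 6
    simpa using this
  refine Cg_of_sub_eq ?_ hXp
  have h6D : ((6 * Dz : ℤ):ℚ) = 6 * ((2:ℚ)^(2*p) - 1) := by
    rw [hDzdef]
    push_cast
    ring
  rw [h6D, Int.cast_one]
  have h6Dne : 6 * ((2:ℚ)^(2*p) - 1) ≠ 0 := by
    intro hc
    rcases mul_eq_zero.mp hc with h | h
    · norm_num at h
    · exact hDne h
  have hstep : (p:ℚ)^2 * ((6*q - (w:ℚ)) * (1 / (6 * ((2:ℚ)^(2*p) - 1))))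
      = ((p:ℚ)^2 * (6*q - (w:ℚ))) / (6 * ((2:ℚ)^(2*p) - 1)) := by
    rw [one_div, div_eq_mul_inv, mul_assoc]
  rw [hstep, eq_div_iff h6Dne]
  linear_combination hkey

end SunAux

namespace SunAux

variable {p : ℕ}

theorem sumsq (n : ℕ) :
    (∑ a ∈ Finset.range n, (a:ℚ)^2) = (n:ℚ)^3/3 - (n:ℚ)^2/2 + (n:ℚ)/6 := by
  induction n with
  | zero => simp
  | succ n ih =>
    rw [Finset.sum_range_succ, ih]
    push_cast
    ring

theorem Icc_to_range (hp1 : 1 ≤ p) (f : ℕ → ℚ) (hf : f 0 = 0) :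
    (∑ a ∈ Finset.Icc 1 (p-1), f a) = ∑ a ∈ Finset.range p, f a := by
  have hset : Finset.range p = insert 0 (Finset.Icc 1 (p-1)) := by
    ext x
    simp only [Finset.mem_range, Finset.mem_insert, Finset.mem_Icc]
    omega
  rw [hset, Finset.sum_insert (by simp), hf, zero_add]

theorem stepA [hp : Fact p.Prime] (hp5 : 5 ≤ p) (a : ℕ) (ha : a ∈ Finset.Icc 1 (p-1)) :
    Cg p 3 (1 / (a:ℚ)^(p-3)) ((a:ℚ)^(2*p) - 3*(a:ℚ)^(p+1) + 3*(a:ℚ)^2) := by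
  rw [Finset.mem_Icc] at ha
  have hpa : ¬ p ∣ a := fun h => by
    have := Nat.le_of_dvd (by omega) h
    omega
  have hfer : (p:ℤ) ∣ (a:ℤ)^(p-1) - 1 := by
    rw [← ZMod.intCast_zmod_eq_zero_iff_dvd]
    push_cast
    rw [sub_eq_zero]
    refine ZMod.pow_card_sub_one_eq_one ?_
    intro hc
    exact hpa ((ZMod.natCast_eq_zero_iff a p).mp hc)
  obtain ⟨w, hw⟩ := hfer
  have hwQ : ((a:ℚ))^(p-1) - 1 = (p:ℚ) * (w:ℚ) := by
    have := congrArg (fun t : ℤ => (t:ℚ)) hw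
    push_cast at this
    linarith [this]
  have ha0 : (a:ℚ) ≠ 0 := by
    have : 0 < a := by omega
    positivity
  have hA : (a:ℚ)^(p-3) ≠ 0 := pow_ne_zero _ ha0
  have e1 : (a:ℚ)^(p-3) * (a:ℚ)^(2*p) = ((a:ℚ)^(p-1))^3 := by
    rw [← pow_add, ← pow_mul]
    congr 1
    omega
  have e2 : (a:ℚ)^(p-3) * (a:ℚ)^(p+1) = ((a:ℚ)^(p-1))^2 := by
    rw [← pow_add, ← pow_mul]
    congr 1
    omega
  have e3 : (a:ℚ)^(p-3) * (a:ℚ)^2 = (a:ℚ)^(p-1) := by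
    rw [← pow_add]
    congr 1
    omega
  have hnd : ¬ (p:ℤ) ∣ (a:ℤ)^(p-3) := by
    intro h
    have hpz : Prime (p:ℤ) := Nat.prime_iff_prime_int.mp hp.out
    have := hpz.dvd_of_dvd_pow h
    exact hpa (by exact_mod_cast this)
  have hXp : pint p (((-(w^3) : ℤ):ℚ) / (((a:ℤ)^(p-3) : ℤ):ℚ)) :=
    pint_div_int _ _ hnd
  refine Cg_of_sub_eq ?_ hXp
  have hcast : (((a:ℤ)^(p-3) : ℤ):ℚ) = (a:ℚ)^(p-3) := by push_cast; rfl
  have hcast2 : ((-(w^3) : ℤ):ℚ) = -(w:ℚ)^3 := by push_cast; ring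
  rw [hcast, hcast2]
  rw [div_sub' hA, ← mul_div_assoc]
  congr 1
  linear_combination (-1:ℚ)*e1 + 3*e2 - 3*e3
    - (((a:ℚ)^(p-1) - 1)^2 + ((a:ℚ)^(p-1) - 1)*((p:ℚ)*(w:ℚ)) + ((p:ℚ)*(w:ℚ))^2) * hwQ

end SunAux

open SunAux in
theorem sun_harmonic_p_sub_three (p : ℕ) (hp : p.Prime) (hgt : 3 < p) :
    rcong p 3 (∑ a ∈ Finset.Icc 1 (p - 1), 1 / (a : ℚ) ^ (p - 3))
      ((1 / 2 - 3 * bernoulli (p + 1)) * (p : ℚ) - (4 / 3) * (p : ℚ) ^ 2) := by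
  haveI hfact : Fact p.Prime := ⟨hp⟩
  have hp5 : 5 ≤ p := by
    have h4 : p ≠ 4 := by
      rintro rfl
      norm_num at hp
    omega
  have h1 : Cg p 3 (∑ a ∈ Finset.Icc 1 (p-1), 1/(a:ℚ)^(p-3))
      (∑ a ∈ Finset.Icc 1 (p-1), ((a:ℚ)^(2*p) - 3*(a:ℚ)^(p+1) + 3*(a:ℚ)^2)) :=
    Cg.sum fun a ha => stepA hp5 a ha
  have h2 : (∑ a ∈ Finset.Icc 1 (p-1), ((a:ℚ)^(2*p) - 3*(a:ℚ)^(p+1) + 3*(a:ℚ)^2))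
      = (∑ a ∈ Finset.range p, (a:ℚ)^(2*p)) - 3*(∑ a ∈ Finset.range p, (a:ℚ)^(p+1))
        + 3*(∑ a ∈ Finset.range p, (a:ℚ)^2) := by
    rw [Icc_to_range (by omega) (fun a => ((a:ℚ)^(2*p) - 3*(a:ℚ)^(p+1) + 3*(a:ℚ)^2))
      (by norm_num; omega)]
    rw [Finset.sum_add_distrib, Finset.sum_sub_distrib, ← Finset.mul_sum, ← Finset.mul_sum]
  have hpint3 : pint p (3:ℚ) := by simpa using pint_natCast (p := p) 3
  have h3 : Cg p 3
      ((∑ a ∈ Finset.range p, (a:ℚ)^(2*p)) - 3*(∑ a ∈ Finset.range p, (a:ℚ)^(p+1))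
        + 3*(∑ a ∈ Finset.range p, (a:ℚ)^2))
      ((p:ℚ) * bernoulli (2*p) - 3*((p:ℚ) * bernoulli (p+1))
        + 3*((p:ℚ)^3/3 - (p:ℚ)^2/2 + (p:ℚ)/6)) :=
    ((B1 hp5).sub (Cg.mul_left 3 hpint3 (B2 hp5))).add
      (Cg.mul_left 3 hpint3 (Cg_of_eq (sumsq p)))
  have hmt : Cg p 3 ((p:ℚ) * bernoulli (2*p)) ((p:ℚ) * ((p:ℚ)/6)) :=
    (key_B2p hp5).mul_p
  have h4 : Cg p 3
      ((p:ℚ) * bernoulli (2*p) - 3*((p:ℚ) * bernoulli (p+1))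
        + 3*((p:ℚ)^3/3 - (p:ℚ)^2/2 + (p:ℚ)/6))
      ((p:ℚ) * ((p:ℚ)/6) - 3*((p:ℚ) * bernoulli (p+1))
        + 3*((p:ℚ)^3/3 - (p:ℚ)^2/2 + (p:ℚ)/6)) :=
    (hmt.sub (Cg.refl _ _)).add (Cg.refl _ _)
  have h5 : Cg p 3
      ((p:ℚ) * ((p:ℚ)/6) - 3*((p:ℚ) * bernoulli (p+1))
        + 3*((p:ℚ)^3/3 - (p:ℚ)^2/2 + (p:ℚ)/6))
      ((1 / 2 - 3 * bernoulli (p + 1)) * (p : ℚ) - (4 / 3) * (p : ℚ) ^ 2) := by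
    refine Cg_of_sub_eq ?_ pint_one
    ring
  exact (h1.trans ((Cg_of_eq h2).trans (h3.trans (h4.trans h5)))).rcong
end

section
/- Kummer's congruence: for every odd prime p, every even integer b > 0 with (p−1) ∤ b, and every nonnegative integer k, B_{k(p-1)+b}/(k(p-1)+b) ≡ B_b/b (mod p). -/
open Finset

lemma choose_aux (n i : ℕ) (h : i ≤ n) : (n+1).choose i * (n+1-i) = (n+1) * n.choose i := by
  rw [← Nat.choose_symm (by omega : i ≤ n+1)]
  have := Nat.add_one_mul_choose_eq n (n-i)
  rw [Nat.choose_symm h] at this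
  have h2 : n - i + 1 = n + 1 - i := by omega
  rw [h2] at this
  simpa [Nat.succ_eq_add_one] using this.symm

lemma faulhaberQ (n N : ℕ) :
    (∑ x ∈ range N, (x:ℚ)^n) =
      N * bernoulli n + ∑ i ∈ range n, bernoulli i * (n.choose i) * (N:ℚ)^(n+1-i) / ((n+1-i : ℕ) : ℚ) := by
  rw [sum_range_pow N n, sum_range_succ, Nat.choose_succ_self_right,
    add_comm ((N:ℚ) * bernoulli n) _]
  congr 1
  · apply Finset.sum_congr rfl
    intro i hi
    have hi' : i ≤ n := (Finset.mem_range.mp hi).le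
    have key : ((n+1).choose i : ℚ) * ((n+1-i : ℕ) : ℚ) = ((n+1 : ℕ) : ℚ) * (n.choose i : ℚ) := by
      exact_mod_cast congrArg (Nat.cast : ℕ → ℚ) (choose_aux n i hi')
    have hm : ((n+1-i:ℕ):ℚ) ≠ 0 := by
      have : 0 < n+1-i := by omega
      exact_mod_cast this.ne'
    have hn1 : ((n:ℚ)+1) ≠ 0 := by positivity
    rw [div_eq_div_iff hn1 hm]
    have key2 : ((n+1:ℕ):ℚ) = (n:ℚ)+1 := by push_cast; ring
    rw [key2] at key
    linear_combination (bernoulli i * (N:ℚ)^(n+1-i)) * key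
  · rw [show n+1-n = 1 by omega]
    have hn1 : ((n:ℚ)+1) ≠ 0 := by positivity
    field_simp
    push_cast
    ring
open Finset
variable {p : ℕ} [hp : Fact p.Prime]

lemma ppos : (0:ℝ) < (p:ℝ) := by exact_mod_cast hp.out.pos
lemma pone_lt : (1:ℝ) < (p:ℝ) := by exact_mod_cast hp.out.one_lt

lemma pz_mono {a b : ℤ} (h : a ≤ b) : ((p:ℝ))^a ≤ (p:ℝ)^b :=
  zpow_le_zpow_right₀ (pone_lt (p := p)).le h

lemma pz_pos (a : ℤ) : (0:ℝ) < (p:ℝ)^a := zpow_pos (ppos (p := p)) a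

lemma norm_sub_le_max' (x y : ℚ_[p]) : ‖x - y‖ ≤ max ‖x‖ ‖y‖ := by
  rw [sub_eq_add_neg]
  simpa [norm_neg] using Padic.nonarchimedean x (-y)

lemma normMulLe {x y : ℚ_[p]} {a c : ℤ} (hx : ‖x‖ ≤ (p:ℝ)^a) (hy : ‖y‖ ≤ (p:ℝ)^c) :
    ‖x*y‖ ≤ (p:ℝ)^(a+c) := by
  rw [norm_mul, zpow_add₀ (ne_of_gt (ppos (p := p)))]
  exact mul_le_mul hx hy (norm_nonneg _) (pz_pos a).le

lemma norm_nat_cast_le_one (m : ℕ) : ‖(m:ℚ_[p])‖ ≤ 1 := by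
  have := Padic.norm_int_le_one (p := p) (m : ℤ)
  simpa using this

lemma norm_nat_cast_eq (m : ℕ) (hm : m ≠ 0) :
    ‖(m : ℚ_[p])‖ = (p:ℝ) ^ (-(padicValNat p m : ℤ)) := by
  rw [show ((m:ℚ_[p])) = ((m:ℚ):ℚ_[p]) by push_cast; ring, Padic.eq_padicNorm]
  rw [padicNorm.eq_zpow_of_nonzero (by exact_mod_cast hm)]
  rw [padicValRat.of_nat]
  push_cast
  ring

lemma val_le_of_pow_le (m : ℕ) (hm : m ≠ 0) : (padicValNat p m) < m := by
  have h1 : p ^ (padicValNat p m) ∣ m := pow_padicValNat_dvd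
  have h2 : p ^ (padicValNat p m) ≤ m := Nat.le_of_dvd (Nat.pos_of_ne_zero hm) h1
  have h3 : padicValNat p m < 2 ^ (padicValNat p m) := Nat.lt_two_pow_self
  have h4 : 2 ^ (padicValNat p m) ≤ p ^ (padicValNat p m) :=
    Nat.pow_le_pow_left hp.out.two_le _
  omega

lemma norm_nat_inv_le (m : ℕ) (hm : m ≠ 0) :
    ‖((m : ℚ_[p]))⁻¹‖ ≤ (p:ℝ) ^ ((padicValNat p m : ℤ)) := by
  rw [norm_inv, norm_nat_cast_eq m hm]
  rw [← zpow_neg, neg_neg]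

-- the rational cast ring hom
noncomputable abbrev qp : ℚ →+* ℚ_[p] := Rat.castHom ℚ_[p]

lemma bernoulli_norm_le_s13 (j : ℕ) : ‖((qp (p := p)) (bernoulli j))‖ ≤ (p:ℝ)^(1:ℤ) := by
  induction j using Nat.strong_induction_on with
  | _ j ih =>
    have key := congrArg (qp (p := p)) (faulhaberQ j p)
    rw [map_add, map_sum, map_sum, map_mul] at key
    -- derive bound on p * B j
    have hS : ‖∑ x ∈ range p, (qp (p:=p)) ((x:ℚ)^j)‖ ≤ (p:ℝ)^(0:ℤ) := by
      apply IsUltrametricDist.norm_sum_le_of_forall_le_of_nonneg (by positivity)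
      intro i _
      rw [map_pow]
      have : ‖(qp (p:=p)) (i:ℚ)‖ ≤ 1 := by
        simpa using norm_nat_cast_le_one (p := p) i
      calc ‖(qp (p:=p)) (i:ℚ) ^ j‖ = ‖(qp (p:=p)) (i:ℚ)‖^j := by rw [norm_pow]
        _ ≤ 1 := pow_le_one₀ (norm_nonneg _) this
        _ = (p:ℝ)^(0:ℤ) := by norm_num
    have hT : ‖∑ i ∈ range j, (qp (p:=p)) (bernoulli i * (j.choose i) * (p:ℚ)^(j+1-i) / ((j+1-i:ℕ):ℚ))‖ ≤ (p:ℝ)^(0:ℤ) := by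
      apply IsUltrametricDist.norm_sum_le_of_forall_le_of_nonneg (by positivity)
      intro i hi
      have hij : i < j := Finset.mem_range.mp hi
      set m : ℕ := j + 1 - i with hm
      have hm1 : 1 ≤ m := by omega
      have hvm : (padicValNat p m : ℤ) ≤ (m:ℤ) - 1 := by
        have := val_le_of_pow_le (p := p) m (by omega)
        omega
      rw [div_eq_mul_inv, map_mul, map_mul, map_mul, map_inv₀, map_pow]
      have h1 : ‖(qp (p:=p)) (bernoulli i)‖ ≤ (p:ℝ)^(1:ℤ) := ih i hij
      have h2 : ‖(qp (p:=p)) ((j.choose i : ℕ):ℚ)‖ ≤ (p:ℝ)^(0:ℤ) := by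
        simpa using norm_nat_cast_le_one (p := p) (j.choose i)
      have h3 : ‖(qp (p:=p)) ((p:ℚ))^m‖ = (p:ℝ)^(-(m:ℤ)) := by
        have : (qp (p:=p)) ((p:ℚ)) = (p : ℚ_[p]) := by simp
        rw [this, ← Padic.norm_p_pow]
      have h4 : ‖((qp (p:=p)) (((m:ℕ):ℚ)))⁻¹‖ ≤ (p:ℝ)^((padicValNat p m:ℤ)) := by
        have : (qp (p:=p)) (((m:ℕ):ℚ)) = ((m:ℕ) : ℚ_[p]) := by simp
        rw [this]
        exact norm_nat_inv_le m (by omega)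
      calc ‖(qp (p:=p)) (bernoulli i) * (qp (p:=p)) ((j.choose i:ℕ):ℚ) * (qp (p:=p)) ((p:ℚ))^m * ((qp (p:=p)) (((m:ℕ):ℚ)))⁻¹‖
          ≤ (p:ℝ)^((1:ℤ) + 0 + -(m:ℤ) + (padicValNat p m:ℤ)) := by
            apply normMulLe (normMulLe (normMulLe h1 h2) h3.le) h4
        _ ≤ (p:ℝ)^(0:ℤ) := pz_mono (by omega)
    have key2 : (qp (p:=p)) ((p:ℚ)) * (qp (p:=p)) (bernoulli j)
        = (∑ x ∈ range p, (qp (p:=p)) ((x:ℚ)^j)) -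
          ∑ i ∈ range j, (qp (p:=p)) (bernoulli i * (j.choose i) * (p:ℚ)^(j+1-i) / ((j+1-i:ℕ):ℚ)) :=
      eq_sub_of_add_eq key.symm
    have hnorm : ‖(qp (p:=p)) ((p:ℚ)) * (qp (p:=p)) (bernoulli j)‖ ≤ (p:ℝ)^(0:ℤ) := by
      rw [key2]
      exact le_trans (norm_sub_le_max' _ _) (max_le hS hT)
    rw [norm_mul, show (qp (p:=p)) ((p:ℚ)) = (p:ℚ_[p]) by simp, Padic.norm_p] at hnorm
    have hp0 : ((p:ℝ))⁻¹ = (p:ℝ)^(-1:ℤ) := by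
      rw [zpow_neg, zpow_one]
    rw [hp0] at hnorm
    have := mul_le_mul_of_nonneg_left hnorm (le_of_lt (pz_pos (p:=p) 1))
    calc ‖(qp (p:=p)) (bernoulli j)‖
        = (p:ℝ)^(1:ℤ) * ((p:ℝ)^(-1:ℤ) * ‖(qp (p:=p)) (bernoulli j)‖) := by
          rw [← mul_assoc, ← zpow_add₀ (ne_of_gt (ppos (p:=p)))]
          norm_num
      _ ≤ (p:ℝ)^(1:ℤ) * (p:ℝ)^(0:ℤ) := this
      _ = (p:ℝ)^(1:ℤ) := by norm_num
open Finset

lemma binom_trunc {R : Type*} [CommRing R] (x c : R) (h : c*c = 0) (e : ℕ) :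
    (x + c)^(e+1) = x^(e+1) + (e+1 : ℕ) * x^e * c := by
  induction e with
  | zero => push_cast; ring
  | succ e IH =>
    have : (x+c)^(e+1+1) = (x+c) * (x+c)^(e+1) := by ring
    rw [this, IH]
    push_cast
    linear_combination (((e:R)+1) * x^e) * h

lemma sum_mod_bij {M : Type*} [AddCommMonoid M] (N a : ℕ) (hN : 1 < N)
    (hc : Nat.Coprime a N) (f : ℕ → M) :
    ∑ m ∈ range N, f (m*a % N) = ∑ m ∈ range N, f m := by
  obtain ⟨a', -, ha'⟩ := Nat.exists_mul_mod_eq_one_of_coprime hc hN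
  have key : ∀ m < N, (m * a % N) * a' % N = m := by
    intro m hm
    rw [Nat.mod_mul_mod, mul_assoc, Nat.mul_mod, ha', mul_one, Nat.mod_mod_of_dvd _ dvd_rfl]
    exact Nat.mod_eq_of_lt hm |>.trans rfl
  have key2 : ∀ m < N, (m * a' % N) * a % N = m := by
    intro m hm
    rw [Nat.mod_mul_mod, mul_assoc, mul_comm a' a, Nat.mul_mod, ha', mul_one,
      Nat.mod_mod_of_dvd _ dvd_rfl]
    exact Nat.mod_eq_of_lt hm |>.trans rfl
  apply Finset.sum_nbij' (i := fun m => m * a % N) (j := fun m => m * a' % N)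
  · intro m hm
    exact Finset.mem_range.mpr (Nat.mod_lt _ (by omega))
  · intro m hm
    exact Finset.mem_range.mpr (Nat.mod_lt _ (by omega))
  · intro m hm
    exact key m (Finset.mem_range.mp hm)
  · intro m hm
    exact key2 m (Finset.mem_range.mp hm)
  · intro m hm
    rfl

lemma voronoi (N a e : ℕ) (Q : ℕ → ℕ) (hQ : ∀ m, m*a % N + N * Q m = m*a)
    (hN : 1 < N) (hc : Nat.Coprime a N) :
    ((N:ℤ)^2) ∣ ((a:ℤ)^(e+1) - 1) * (∑ m ∈ range N, (m:ℤ)^(e+1))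
      - (e+1) * N * (a:ℤ)^e * (∑ m ∈ range N, (m:ℤ)^e * (Q m : ℤ)) := by
  have hcast : ((N:ℤ)^2) = ((N^2 : ℕ) : ℤ) := by push_cast; ring
  rw [hcast, ← ZMod.intCast_zmod_eq_zero_iff_dvd]
  have hNN : ((N : ZMod (N^2)) * (N : ZMod (N^2)) = 0) := by
    have : ((N^2 : ℕ) : ZMod (N^2)) = 0 := ZMod.natCast_self _
    push_cast at this
    linear_combination this
  have main : ∑ m ∈ range N, ((m : ZMod (N^2)))^(e+1)
      = (a : ZMod (N^2))^(e+1) * (∑ m ∈ range N, ((m : ZMod (N^2)))^(e+1))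
        - (e+1 : ℕ) * N * (a : ZMod (N^2))^e *
          (∑ m ∈ range N, ((m : ZMod (N^2)))^e * ((Q m : ℕ) : ZMod (N^2))) := by
    have bij := sum_mod_bij N a hN hc (fun x => ((x : ZMod (N^2)))^(e+1))
    conv_lhs => rw [← bij]
    rw [Finset.mul_sum, Finset.mul_sum, ← Finset.sum_sub_distrib]
    apply Finset.sum_congr rfl
    intro m _
    have hsplit : ((m*a % N : ℕ) : ZMod (N^2))
        = (m : ZMod (N^2)) * a + (-((N : ZMod (N^2)) * ((Q m : ℕ) : ZMod (N^2)))) := by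
      have := congrArg (fun x : ℕ => (x : ZMod (N^2))) (hQ m)
      push_cast at this
      linear_combination this
    rw [hsplit, binom_trunc _ _ (by linear_combination (((Q m : ℕ) : ZMod (N^2)))^2 * hNN) e]
    push_cast
    ring
  push_cast
  push_cast at main
  linear_combination -main

lemma five_pow_ge (s : ℕ) (hs : 1 ≤ s) : s + 3 ≤ 5^s := by
  induction s, hs using Nat.le_induction with
  | base => norm_num
  | succ s hs IH =>
    have : 5^(s+1) = 5 * 5^s := by ring
    omega

lemma arith2 {p r m s : ℕ} (hr : 1 ≤ r) (hm : 3 ≤ m) (hp5 : 5 ≤ p) (hdvd : p^s ∣ m) :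
    s + 1 + 2*r ≤ r*m := by
  have hle : p^s ≤ m := Nat.le_of_dvd (by omega) hdvd
  rcases Nat.eq_zero_or_pos s with hs | hs
  · subst hs
    have h3 : r*3 ≤ r*m := Nat.mul_le_mul_left r hm
    omega
  · have h5 : 5^s ≤ p^s := Nat.pow_le_pow_left hp5 s
    have hs3 : s + 3 ≤ 5^s := five_pow_ge s hs
    have h3 : r*(s+3) ≤ r*m := Nat.mul_le_mul_left r (by omega)
    have h4 : 1*s ≤ r*s := Nat.mul_le_mul_right s hr
    nlinarith

lemma bernoulli_approx {p : ℕ} [hp : Fact p.Prime] (n r : ℕ) (hne : Even n) (hn2 : 2 ≤ n)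
    (hr : 1 ≤ r) (hp5 : 5 ≤ p) :
    ‖(qp (p:=p)) (∑ x ∈ range (p^r), (x:ℚ)^n) -
      (qp (p:=p)) (((p^r : ℕ):ℚ)) * (qp (p:=p)) (bernoulli n)‖ ≤ (p:ℝ)^(-(2*(r:ℤ))) := by
  have key := congrArg (qp (p := p)) (faulhaberQ n (p^r))
  rw [map_add, map_sum, map_sum, map_mul] at key
  have key2 : (qp (p:=p)) (∑ x ∈ range (p^r), (x:ℚ)^n) -
      (qp (p:=p)) (((p^r : ℕ):ℚ)) * (qp (p:=p)) (bernoulli n)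
      = ∑ i ∈ range n, (qp (p:=p)) (bernoulli i * (n.choose i) * ((p^r : ℕ):ℚ)^(n+1-i) / ((n+1-i:ℕ):ℚ)) := by
    rw [map_sum, key]; ring
  rw [key2]
  apply IsUltrametricDist.norm_sum_le_of_forall_le_of_nonneg (by positivity)
  intro i hi
  have hij : i < n := Finset.mem_range.mp hi
  set m : ℕ := n + 1 - i with hm
  have hm2 : 2 ≤ m := by omega
  -- norm of N^m part
  have h3 : ‖(qp (p:=p)) (((p^r:ℕ):ℚ))^m‖ = (p:ℝ)^(-((r*m : ℕ):ℤ)) := by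
    have : (qp (p:=p)) (((p^r:ℕ):ℚ)) = (p : ℚ_[p])^r := by
      rw [Nat.cast_pow, map_pow]; simp
    rw [this, ← pow_mul, ← Padic.norm_p_pow]
  have h2 : ‖(qp (p:=p)) ((n.choose i : ℕ):ℚ)‖ ≤ (p:ℝ)^(0:ℤ) := by
    simpa using norm_nat_cast_le_one (p := p) (n.choose i)
  have h4 : ‖((qp (p:=p)) (((m:ℕ):ℚ)))⁻¹‖ ≤ (p:ℝ)^((padicValNat p m:ℤ)) := by
    have : (qp (p:=p)) (((m:ℕ):ℚ)) = ((m:ℕ) : ℚ_[p]) := by simp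
    rw [this]
    exact norm_nat_inv_le m (by omega)
  rw [div_eq_mul_inv, map_mul, map_mul, map_mul, map_inv₀, map_pow]
  by_cases hi1 : i = n - 1
  · -- m = 2 case
    have hmm : m = 2 := by omega
    rcases Nat.lt_or_ge n 4 with hn4 | hn4
    · -- n = 2, i = 1
      have hnn : n = 2 := by
        rcases hne with ⟨w, hw⟩; omega
      have hii : i = 1 := by omega
      have h1 : ‖(qp (p:=p)) (bernoulli i)‖ ≤ (p:ℝ)^(0:ℤ) := by
        rw [hii, bernoulli_one]
        have : ((-1)/2 : ℚ) = -((2:ℚ)⁻¹) := by norm_num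
        rw [this, map_neg, map_inv₀, norm_neg]
        have h2eq : (qp (p:=p)) ((2:ℚ)) = ((2:ℕ) : ℚ_[p]) := by norm_num
        rw [h2eq]
        have hv2 : padicValNat p 2 = 0 := by
          apply padicValNat.eq_zero_of_not_dvd
          intro hdv
          have := Nat.le_of_dvd (by norm_num) hdv
          omega
        have := norm_nat_inv_le (p := p) 2 (by omega)
        rw [hv2] at this
        exact_mod_cast this
      have hs0 : (padicValNat p m : ℤ) = 0 := by
        rw [hmm]
        norm_cast
        apply padicValNat.eq_zero_of_not_dvd
        intro hdv
        have := Nat.le_of_dvd (by norm_num) hdv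
        omega
      calc ‖(qp (p:=p)) (bernoulli i) * (qp (p:=p)) ((n.choose i:ℕ):ℚ) * (qp (p:=p)) (((p^r:ℕ):ℚ))^m * ((qp (p:=p)) (((m:ℕ):ℚ)))⁻¹‖
          ≤ (p:ℝ)^((0:ℤ) + 0 + -((r*m:ℕ):ℤ) + (padicValNat p m:ℤ)) :=
            normMulLe (normMulLe (normMulLe h1 h2) h3.le) h4
        _ ≤ (p:ℝ)^(-(2*(r:ℤ))) := by
            apply pz_mono
            rw [hs0, hmm]
            push_cast
            omega
    · -- n ≥ 4 : bernoulli (n-1) = 0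
      have hodd : Odd i := by
        rcases hne with ⟨w, hw⟩
        refine ⟨w - 1, by omega⟩
      have hbz : bernoulli i = 0 := by
        rw [bernoulli_eq_bernoulli'_of_ne_one (by omega), bernoulli'_eq_zero_of_odd hodd (by omega)]
      rw [hbz, map_zero, zero_mul, zero_mul, zero_mul, norm_zero]
      positivity
  · -- m ≥ 3 case
    have hm3 : 3 ≤ m := by omega
    have h1 : ‖(qp (p:=p)) (bernoulli i)‖ ≤ (p:ℝ)^(1:ℤ) := bernoulli_norm_le_s13 i
    calc ‖(qp (p:=p)) (bernoulli i) * (qp (p:=p)) ((n.choose i:ℕ):ℚ) * (qp (p:=p)) (((p^r:ℕ):ℚ))^m * ((qp (p:=p)) (((m:ℕ):ℚ)))⁻¹‖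
        ≤ (p:ℝ)^((1:ℤ) + 0 + -((r*m:ℕ):ℤ) + (padicValNat p m:ℤ)) :=
          normMulLe (normMulLe (normMulLe h1 h2) h3.le) h4
      _ ≤ (p:ℝ)^(-(2*(r:ℤ))) := by
          apply pz_mono
          have h := arith2 (p := p) (s := padicValNat p m) hr hm3 hp5 pow_padicValNat_dvd
          zify at h
          push_cast at h ⊢
          linarith

lemma norm_int_eq_one_of_not_dvd {p : ℕ} [Fact p.Prime] (X : ℤ) (h : ¬ (p:ℤ) ∣ X) :
    ‖(X:ℚ_[p])‖ = 1 := by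
  refine le_antisymm (Padic.norm_int_le_one X) ?_
  by_contra hlt
  exact h (Padic.norm_intCast_lt_one_iff.mp (by linarith [lt_of_not_ge hlt]))

lemma zmod_pow_congr {p : ℕ} [hp : Fact p.Prime] (x : ZMod p) (e k : ℕ) (he : 1 ≤ e) :
    x^(e + k*(p-1)) = x^e := by
  by_cases hx : x = 0
  · subst hx
    rw [zero_pow (by omega), zero_pow (by omega)]
  · rw [pow_add, mul_comm k (p-1), pow_mul, ZMod.pow_card_sub_one_eq_one hx, one_pow, mul_one]

lemma int_cong_norm {p : ℕ} [Fact p.Prime] (X Y : ℤ) (h : ((X : ZMod p)) = (Y : ZMod p)) :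
    ‖(X:ℚ_[p]) - (Y:ℚ_[p])‖ ≤ (p:ℝ)^(-1:ℤ) := by
  have h0 : ((X - Y : ℤ) : ZMod p) = 0 := by push_cast; rw [h]; ring
  rw [ZMod.intCast_zmod_eq_zero_iff_dvd] at h0
  have := (Padic.norm_int_le_pow_iff_dvd (p:=p) (X-Y) 1).mpr (by simpa using h0)
  rw [show ((X - Y : ℤ) : ℚ_[p]) = (X:ℚ_[p]) - (Y:ℚ_[p]) by push_cast; ring] at this
  simpa using this

lemma step (p : ℕ) [hpf : Fact p.Prime] (hp5 : 5 ≤ p) (a r E : ℕ) (Qf : ℕ → ℕ)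
    (hQ : ∀ m, m*a % (p^r) + (p^r) * Qf m = m*a)
    (hco : Nat.Coprime a (p^r)) (hr1 : 1 ≤ r)
    (hE : 2 ≤ E) (hEe : Even E)
    (hcne : (((a:ℕ) : ZMod p))^E ≠ 1)
    (hrv : padicValNat p E + 1 ≤ r) :
    ‖ (qp (p:=p)) (bernoulli E) / ((E:ℕ):ℚ_[p])
      - ((a:ℚ_[p]))^(E-1) * (∑ m ∈ range (p^r), ((m:ℕ):ℚ_[p])^(E-1) * ((Qf m : ℕ):ℚ_[p]))
        / (((a:ℚ_[p]))^E - 1)‖ ≤ (p:ℝ)^(-1:ℤ) := by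
  set N := p^r with hNdef
  have hN1 : 1 < N := Nat.one_lt_pow (by omega) hpf.out.one_lt
  set SE : ℚ_[p] := ∑ x ∈ range N, ((x:ℕ):ℚ_[p])^E with hSE
  set ΦE : ℚ_[p] := ∑ m ∈ range N, ((m:ℕ):ℚ_[p])^(E-1) * ((Qf m : ℕ):ℚ_[p]) with hΦE
  set cE : ℚ_[p] := ((a:ℚ_[p]))^E - 1 with hcE
  set B₁ : ℚ_[p] := (qp (p:=p)) (bernoulli E) with hB₁
  -- c has norm 1
  have hcd : ¬ (p:ℤ) ∣ ((a:ℤ)^E - 1) := by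
    intro hd
    apply hcne
    have h0 : (((a:ℤ)^E - 1 : ℤ) : ZMod p) = 0 := (ZMod.intCast_zmod_eq_zero_iff_dvd _ _).mpr hd
    push_cast at h0
    linear_combination h0
  have hc1 : ‖cE‖ = 1 := by
    have hrw : cE = (((a:ℤ)^E - 1 : ℤ) : ℚ_[p]) := by rw [hcE]; push_cast; ring
    rw [hrw]
    exact norm_int_eq_one_of_not_dvd _ hcd
  have hcne0 : cE ≠ 0 := by
    intro h; rw [h, norm_zero] at hc1; exact zero_ne_one hc1
  -- voronoi
  have hv := voronoi N a (E-1) Qf (by intro m; exact hQ m) hN1 hco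
  rw [show E-1+1 = E by omega] at hv
  have hNN : ((N:ℤ))^2 = (p:ℤ)^(2*r) := by
    rw [hNdef]; push_cast; rw [← pow_mul]; ring_nf
  rw [hNN] at hv
  have hvn := (Padic.norm_int_le_pow_iff_dvd (p:=p) _ (2*r)).mpr hv
  have hXrw : ((((a:ℤ)^E - 1) * (∑ m ∈ range N, (m:ℤ)^E)
      - ((E-1:ℕ)+1) * (N:ℤ) * (a:ℤ)^(E-1) * (∑ m ∈ range N, (m:ℤ)^(E-1) * (Qf m : ℤ)) : ℤ) : ℚ_[p])
      = cE * SE - (E:ℚ_[p]) * (N:ℚ_[p]) * ((a:ℚ_[p]))^(E-1) * ΦE := by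
    rw [hcE, hSE, hΦE]
    push_cast [show ((E-1:ℕ):ℤ) + 1 = (E:ℤ) by omega]
    ring
  rw [hXrw] at hvn
  -- bernoulli approximation
  have hba := bernoulli_approx (p:=p) E r hEe hE hr1 hp5
  have hqS : (qp (p:=p)) (∑ x ∈ range (p^r), (x:ℚ)^E) = SE := by
    rw [map_sum, hSE]
    apply Finset.sum_congr rfl
    intro x _
    rw [map_pow]
    norm_num
  have hqN : (qp (p:=p)) (((p^r:ℕ):ℚ)) = ((N:ℕ):ℚ_[p]) := by
    rw [hNdef]; norm_num
  rw [hqS, hqN] at hba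
  -- combine
  have hT1 : ‖cE * ((N:ℕ):ℚ_[p]) * B₁ - (E:ℚ_[p]) * (N:ℚ_[p]) * ((a:ℚ_[p]))^(E-1) * ΦE‖
      ≤ (p:ℝ)^(-(2*(r:ℤ))) := by
    have heq : cE * ((N:ℕ):ℚ_[p]) * B₁ - (E:ℚ_[p]) * (N:ℚ_[p]) * ((a:ℚ_[p]))^(E-1) * ΦE
        = (cE * SE - (E:ℚ_[p]) * (N:ℚ_[p]) * ((a:ℚ_[p]))^(E-1) * ΦE)
          - cE * (SE - ((N:ℕ):ℚ_[p]) * B₁) := by ring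
    rw [heq]
    refine le_trans (norm_sub_le_max' _ _) (max_le hvn ?_)
    rw [norm_mul, hc1, one_mul]
    exact hba
  have hNnorm : ‖((N:ℕ):ℚ_[p])‖ = (p:ℝ)^(-(r:ℤ)) := by
    rw [norm_nat_cast_eq N (by omega), hNdef, padicValNat.prime_pow]
  have hNne0 : ((N:ℕ):ℚ_[p]) ≠ 0 := by
    intro h; rw [h, norm_zero] at hNnorm
    exact (pz_pos _).ne' hNnorm.symm
  have hT2 : ‖cE * B₁ - (E:ℚ_[p]) * ((a:ℚ_[p]))^(E-1) * ΦE‖ ≤ (p:ℝ)^(-(r:ℤ)) := by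
    have heq : cE * B₁ - (E:ℚ_[p]) * ((a:ℚ_[p]))^(E-1) * ΦE
        = (cE * ((N:ℕ):ℚ_[p]) * B₁ - (E:ℚ_[p]) * (N:ℚ_[p]) * ((a:ℚ_[p]))^(E-1) * ΦE)
          / ((N:ℕ):ℚ_[p]) := by
      field_simp
    rw [heq, norm_div, hNnorm]
    rw [div_le_iff₀ (pz_pos _)]
    calc ‖cE * ((N:ℕ):ℚ_[p]) * B₁ - (E:ℚ_[p]) * ↑N * ((a:ℚ_[p]))^(E-1) * ΦE‖
        ≤ (p:ℝ)^(-(2*(r:ℤ))) := hT1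
      _ = (p:ℝ)^(-(r:ℤ)) * (p:ℝ)^(-(r:ℤ)) := by
          rw [← zpow_add₀ (ne_of_gt (ppos (p:=p)))]; ring_nf
  -- divide by E and cE
  have hEnorm : ‖((E:ℕ):ℚ_[p])‖ = (p:ℝ)^(-(padicValNat p E:ℤ)) := norm_nat_cast_eq E (by omega)
  have hEne0 : ((E:ℕ):ℚ_[p]) ≠ 0 := by
    intro h; rw [h, norm_zero] at hEnorm
    exact (pz_pos _).ne' hEnorm.symm
  have hfinal : B₁ / ((E:ℕ):ℚ_[p]) - ((a:ℚ_[p]))^(E-1) * ΦE / cE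
      = (cE * B₁ - (E:ℚ_[p]) * ((a:ℚ_[p]))^(E-1) * ΦE) / (((E:ℕ):ℚ_[p]) * cE) := by
    field_simp
  rw [hfinal, norm_div, norm_mul, hEnorm, hc1, mul_one]
  rw [div_le_iff₀ (pz_pos _)]
  calc ‖cE * B₁ - (E:ℚ_[p]) * ((a:ℚ_[p]))^(E-1) * ΦE‖ ≤ (p:ℝ)^(-(r:ℤ)) := hT2
    _ ≤ (p:ℝ)^(-1:ℤ) * (p:ℝ)^(-(padicValNat p E:ℤ)) := by
        rw [← zpow_add₀ (ne_of_gt (ppos (p:=p)))]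
        apply pz_mono
        omega

lemma midstep (p : ℕ) [hpf : Fact p.Prime] (a r : ℕ) (Qf : ℕ → ℕ) (E E' k : ℕ)
    (hE : 2 ≤ E) (hE'def : E' = k*(p-1) + E)
    (hcne : (((a:ℕ) : ZMod p))^E ≠ 1) (hcne' : (((a:ℕ) : ZMod p))^E' ≠ 1) :
    ‖ ((a:ℚ_[p]))^(E'-1) * (∑ m ∈ range (p^r), ((m:ℕ):ℚ_[p])^(E'-1) * ((Qf m : ℕ):ℚ_[p]))
        / (((a:ℚ_[p]))^E' - 1)
      - ((a:ℚ_[p]))^(E-1) * (∑ m ∈ range (p^r), ((m:ℕ):ℚ_[p])^(E-1) * ((Qf m : ℕ):ℚ_[p]))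
        / (((a:ℚ_[p]))^E - 1)‖ ≤ (p:ℝ)^(-1:ℤ) := by
  set N := p^r with hNdef
  have hE2 : 2 ≤ E' := by omega
  -- norms of c's
  have hcd : ∀ F : ℕ, (((a:ℕ) : ZMod p))^F ≠ 1 → ¬ (p:ℤ) ∣ ((a:ℤ)^F - 1) := by
    intro F hne hd
    apply hne
    have h0 : (((a:ℤ)^F - 1 : ℤ) : ZMod p) = 0 := (ZMod.intCast_zmod_eq_zero_iff_dvd _ _).mpr hd
    push_cast at h0
    linear_combination h0
  have hc1 : ‖((a:ℚ_[p]))^E - 1‖ = 1 := by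
    rw [show ((a:ℚ_[p]))^E - 1 = (((a:ℤ)^E - 1 : ℤ) : ℚ_[p]) by push_cast; ring]
    exact norm_int_eq_one_of_not_dvd _ (hcd E hcne)
  have hc1' : ‖((a:ℚ_[p]))^E' - 1‖ = 1 := by
    rw [show ((a:ℚ_[p]))^E' - 1 = (((a:ℤ)^E' - 1 : ℤ) : ℚ_[p]) by push_cast; ring]
    exact norm_int_eq_one_of_not_dvd _ (hcd E' hcne')
  have hcne0 : ((a:ℚ_[p]))^E - 1 ≠ 0 := by
    intro h; rw [h, norm_zero] at hc1; exact zero_ne_one hc1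
  have hcne0' : ((a:ℚ_[p]))^E' - 1 ≠ 0 := by
    intro h; rw [h, norm_zero] at hc1'; exact zero_ne_one hc1'
  -- the integer Y
  set Y : ℤ := (a:ℤ)^(E'-1) * (∑ m ∈ range N, (m:ℤ)^(E'-1) * (Qf m : ℤ)) * ((a:ℤ)^E - 1)
      - (a:ℤ)^(E-1) * (∑ m ∈ range N, (m:ℤ)^(E-1) * (Qf m : ℤ)) * ((a:ℤ)^E' - 1) with hYdef
  have hYz : ((Y : ℤ) : ZMod p) = ((0:ℤ) : ZMod p) := by
    rw [hYdef]
    push_cast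
    have hp1 : ∀ x : ZMod p, x^(E'-1) = x^(E-1) := by
      intro x
      rw [show E'-1 = (E-1) + k*(p-1) by omega]
      exact zmod_pow_congr x (E-1) k (by omega)
    have hp2 : ∀ x : ZMod p, x^E' = x^E := by
      intro x
      rw [show E' = E + k*(p-1) by omega]
      exact zmod_pow_congr x E k (by omega)
    have hΦ : (∑ m ∈ range N, ((m:ℕ) : ZMod p)^(E'-1) * ((Qf m : ℕ) : ZMod p))
        = ∑ m ∈ range N, ((m:ℕ) : ZMod p)^(E-1) * ((Qf m : ℕ) : ZMod p) := by
      apply Finset.sum_congr rfl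
      intro m _
      rw [hp1]
    rw [hΦ, hp1, hp2]
    ring
  have hYn : ‖((Y:ℤ) : ℚ_[p])‖ ≤ (p:ℝ)^(-1:ℤ) := by
    have := int_cong_norm Y 0 (by rw [hYz])
    simpa using this
  -- rewrite the difference
  have heq : ((a:ℚ_[p]))^(E'-1) * (∑ m ∈ range N, ((m:ℕ):ℚ_[p])^(E'-1) * ((Qf m : ℕ):ℚ_[p]))
        / (((a:ℚ_[p]))^E' - 1)
      - ((a:ℚ_[p]))^(E-1) * (∑ m ∈ range N, ((m:ℕ):ℚ_[p])^(E-1) * ((Qf m : ℕ):ℚ_[p]))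
        / (((a:ℚ_[p]))^E - 1)
      = ((Y:ℤ) : ℚ_[p]) / ((((a:ℚ_[p]))^E' - 1) * (((a:ℚ_[p]))^E - 1)) := by
    rw [hYdef]
    push_cast
    field_simp
  rw [heq, norm_div, norm_mul, hc1, hc1', mul_one, div_one]
  exact hYn

theorem kummer_congruence (p : ℕ) (hp : p.Prime) (hodd : Odd p)
    (b : ℕ) (hb : 0 < b) (hbe : Even b) (hnd : ¬ (p - 1) ∣ b) (k : ℕ) :
    rcong p 1 (bernoulli (k * (p - 1) + b) / (k * (p - 1) + b : ℚ))
      (bernoulli b / (b : ℚ)) := by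
  haveI hfp : Fact p.Prime := ⟨hp⟩
  obtain ⟨w, hw⟩ := hbe
  have hbe' : Even b := ⟨w, hw⟩
  have hp3 : p ≠ 3 := by rintro rfl; exact hnd ⟨w, by omega⟩
  have hp5 : 5 ≤ p := by
    rcases hodd with ⟨t, ht⟩
    have h2 := hp.two_le
    omega
  have hb2 : 2 ≤ b := by omega
  set n' := k * (p - 1) + b with hn'def
  have hn'2 : 2 ≤ n' := by omega
  have he' : Even n' := by
    rcases hodd with ⟨t, ht⟩
    refine ⟨k*t + w, ?_⟩
    rw [hn'def, show p - 1 = 2*t by omega, hw]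
    ring
  have hnd' : ¬ (p-1) ∣ n' := by
    intro hdvd
    have hbb : n' - k*(p-1) = b := by omega
    exact hnd (hbb ▸ Nat.dvd_sub hdvd (Dvd.intro_left k rfl))
  -- generator
  obtain ⟨g, hg⟩ := IsCyclic.exists_generator (α := (ZMod p)ˣ)
  have hord : orderOf g = p - 1 := by
    rw [orderOf_eq_card_of_forall_mem_zpowers hg, Nat.card_eq_fintype_card, ZMod.card_units]
  set a := ((g : (ZMod p)ˣ) : ZMod p).val with hadef
  have hacast : ((a:ℕ) : ZMod p) = ((g : (ZMod p)ˣ) : ZMod p) := by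
    rw [hadef]; exact ZMod.natCast_rightInverse _
  have hpow_ne : ∀ E : ℕ, ¬ (p-1) ∣ E → ((a:ℕ) : ZMod p)^E ≠ 1 := by
    intro E hEnd h1
    apply hEnd
    rw [← hord]
    apply orderOf_dvd_of_pow_eq_one
    apply Units.ext
    rw [Units.val_pow_eq_pow_val, ← hacast, h1, Units.val_one]
  have hpa : ¬ p ∣ a := by
    intro hd
    have h0 : ((a:ℕ):ZMod p) = 0 := (ZMod.natCast_eq_zero_iff _ _).mpr hd
    rw [hacast] at h0
    exact Units.ne_zero _ h0
  -- parameters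
  set r := max (padicValNat p b) (padicValNat p n') + 1 with hrdef
  have hr1 : 1 ≤ r := by omega
  have hco : Nat.Coprime a (p^r) :=
    (Nat.coprime_comm.mp ((Nat.Prime.coprime_iff_not_dvd hp).mpr hpa)).pow_right r
  set Qf : ℕ → ℕ := fun m => m * a / (p^r) with hQfdef
  have hQ : ∀ m, m*a % (p^r) + (p^r) * Qf m = m*a := fun m => Nat.mod_add_div _ _
  -- the three estimates
  have hs1 := step p hp5 a r b Qf hQ hco hr1 hb2 hbe' (hpow_ne b hnd) (by omega)
  have hs2 := step p hp5 a r n' Qf hQ hco hr1 hn'2 he' (hpow_ne n' hnd') (by omega)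
  have hmid := midstep p a r Qf b n' k hb2 hn'def (hpow_ne b hnd) (hpow_ne n' hnd')
  -- combine
  have hfin : ‖ (qp (p:=p)) (bernoulli n') / ((n':ℕ):ℚ_[p])
      - (qp (p:=p)) (bernoulli b) / ((b:ℕ):ℚ_[p])‖ ≤ (p:ℝ)^(-1:ℤ) := by
    set X1 : ℚ_[p] := (qp (p:=p)) (bernoulli n') / ((n':ℕ):ℚ_[p])
      - ((a:ℚ_[p]))^(n'-1) * (∑ m ∈ range (p^r), ((m:ℕ):ℚ_[p])^(n'-1) * ((Qf m : ℕ):ℚ_[p]))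
        / (((a:ℚ_[p]))^n' - 1) with hX1
    set X2 : ℚ_[p] := (qp (p:=p)) (bernoulli b) / ((b:ℕ):ℚ_[p])
      - ((a:ℚ_[p]))^(b-1) * (∑ m ∈ range (p^r), ((m:ℕ):ℚ_[p])^(b-1) * ((Qf m : ℕ):ℚ_[p]))
        / (((a:ℚ_[p]))^b - 1) with hX2
    set X3 : ℚ_[p] := ((a:ℚ_[p]))^(n'-1) * (∑ m ∈ range (p^r), ((m:ℕ):ℚ_[p])^(n'-1) * ((Qf m : ℕ):ℚ_[p]))
        / (((a:ℚ_[p]))^n' - 1)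
      - ((a:ℚ_[p]))^(b-1) * (∑ m ∈ range (p^r), ((m:ℕ):ℚ_[p])^(b-1) * ((Qf m : ℕ):ℚ_[p]))
        / (((a:ℚ_[p]))^b - 1) with hX3
    have heq : (qp (p:=p)) (bernoulli n') / ((n':ℕ):ℚ_[p])
        - (qp (p:=p)) (bernoulli b) / ((b:ℕ):ℚ_[p]) = (X1 - X2) + X3 := by
      rw [hX1, hX2, hX3]; ring
    rw [heq]
    refine le_trans (Padic.nonarchimedean _ _) (max_le (le_trans (norm_sub_le_max' _ _) (max_le hs2 hs1)) hmid)
  -- back to ℚ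
  have hcast1 : ((k : ℚ) * ((p:ℚ) - 1) + (b:ℚ)) = ((n' : ℕ) : ℚ) := by
    rw [hn'def]
    push_cast [Nat.cast_sub hp.one_le]
    ring
  set Δq : ℚ := bernoulli n' / ((n':ℕ):ℚ) - bernoulli b / ((b:ℕ):ℚ) with hΔdef
  have hqΔ : (qp (p:=p)) Δq = (qp (p:=p)) (bernoulli n') / ((n':ℕ):ℚ_[p])
      - (qp (p:=p)) (bernoulli b) / ((b:ℕ):ℚ_[p]) := by
    rw [hΔdef, map_sub, map_div₀, map_div₀]
    norm_num
  rw [rcong]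
  by_cases hz : Δq = 0
  · left
    have h0 := sub_eq_zero.mp hz
    rw [hcast1]
    exact h0
  · right
    have hnorm : ‖(qp (p:=p)) Δq‖ ≤ (p:ℝ)^(-1:ℤ) := by rw [hqΔ]; exact hfin
    have hqeq : (qp (p:=p)) Δq = ((Δq : ℚ) : ℚ_[p]) := rfl
    rw [hqeq, Padic.eq_padicNorm, padicNorm.eq_zpow_of_nonzero hz] at hnorm
    set v := padicValRat p Δq with hv
    have hnv : ((p:ℝ))^(-v) ≤ (p:ℝ)^(-1:ℤ) := by
      calc ((p:ℝ))^(-v) = (((p:ℚ)^(-v) : ℚ) : ℝ) := by push_cast; ring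
        _ ≤ (p:ℝ)^(-1:ℤ) := hnorm
    have hvge : 1 ≤ v := by
      by_contra hlt
      push_neg at hlt
      have h1 : ((p:ℝ))^(0:ℤ) ≤ (p:ℝ)^(-v) := pz_mono (by omega)
      have h2 : ((p:ℝ))^(-1:ℤ) < (p:ℝ)^(0:ℤ) := by
        rw [zpow_neg, zpow_one, zpow_zero]
        rw [inv_lt_one_iff₀]
        right
        exact pone_lt (p := p)
      linarith
    have hgoal : bernoulli (k * (p - 1) + b) / ((k : ℚ) * ((p:ℚ) - 1) + (b:ℚ)) - bernoulli b / ((b:ℕ):ℚ) = Δq := by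
      rw [hcast1, hΔdef]
    rw [hgoal]
    exact hvge
end

section
/- For every prime p > 3 and every integer k ≥ 1, p·B_{k(p-1)} ≡ −(k−1)(p−1) + k·p·B_{p-1} (mod p²). -/
open Finset

private def Snat (p n : ℕ) : ℕ := ∑ x ∈ Finset.range p, x ^ n

private lemma geo_dvd (y : ℤ) (k : ℕ) : (y - 1)^2 ∣ y^k - 1 - k * (y - 1) := by
  induction k with
  | zero => simp
  | succ k ih =>
    have : y^(k+1) - 1 - (k+1 : ℕ) * (y - 1)
        = y * (y^k - 1 - k * (y-1)) + k * (y-1)^2 := by push_cast; ring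
    rw [this]
    exact dvd_add (Dvd.dvd.mul_left ih y) (Dvd.dvd.mul_left dvd_rfl (k:ℤ))

private lemma fermat_int (p : ℕ) [Fact p.Prime] (x : ℕ) (hx1 : 1 ≤ x) (hx2 : x < p) :
    (p:ℤ) ∣ (x:ℤ)^(p-1) - 1 := by
  rw [← ZMod.intCast_zmod_eq_zero_iff_dvd]
  push_cast
  rw [sub_eq_zero]
  apply ZMod.pow_card_sub_one_eq_one
  have : (x : ZMod p) = ((x : ℕ) : ZMod p) := by norm_cast
  rw [this, Ne, ZMod.natCast_eq_zero_iff]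
  intro h
  exact absurd (Nat.le_of_dvd (by omega) h) (by omega)

private lemma lemC (p : ℕ) [Fact p.Prime] (k : ℕ) (hk1 : 1 ≤ k) :
    (p:ℤ)^2 ∣ (Snat p (k*(p-1)) : ℤ) - ((p:ℤ) - 1) - k * ((Snat p (p-1) : ℤ) - ((p:ℤ)-1)) := by
  have hp1 : 1 ≤ p := (Fact.out : p.Prime).one_lt.le
  have hppos : 0 < p := hp1
  have hp5 : 2 ≤ p := (Fact.out : p.Prime).two_le
  have hpm : 1 ≤ p - 1 := by omega
  have hS : ∀ n : ℕ, 1 ≤ n → (Snat p n : ℤ) = ∑ x ∈ Finset.Ico 1 p, (x:ℤ)^n := by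
    intro n hn
    unfold Snat
    push_cast
    rw [Finset.range_eq_Ico, Finset.sum_eq_sum_Ico_succ_bot hppos]
    simp [zero_pow (by omega : n ≠ 0)]
  rw [hS _ (Nat.one_le_iff_ne_zero.mpr (Nat.mul_ne_zero (by omega) (by omega))), hS _ hpm]
  have hcard : ((p:ℤ) - 1) = ∑ _x ∈ Finset.Ico 1 p, (1:ℤ) := by
    simp [Nat.card_Ico]; push_cast [Nat.cast_sub hp1]; ring
  rw [hcard, ← Finset.sum_sub_distrib, ← Finset.sum_sub_distrib, Finset.mul_sum,
    ← Finset.sum_sub_distrib]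
  apply Finset.dvd_sum
  intro x hx
  simp only [Finset.mem_Ico] at hx
  have hf : (p:ℤ) ∣ (x:ℤ)^(p-1) - 1 := fermat_int p x hx.1 hx.2
  have hgeo : ((x:ℤ)^(p-1) - 1)^2 ∣ ((x:ℤ)^(p-1))^k - 1 - k * ((x:ℤ)^(p-1) - 1) :=
    geo_dvd _ k
  have : (p:ℤ)^2 ∣ ((x:ℤ)^(p-1))^k - 1 - k * ((x:ℤ)^(p-1) - 1) :=
    dvd_trans (pow_dvd_pow_of_dvd hf 2) hgeo
  rwa [← pow_mul, mul_comm (p-1) k] at this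

private lemma term_eq (p n i : ℕ) (hi : i ≤ n) :
    bernoulli i * (((n+1).choose i : ℕ) : ℚ) * (p:ℚ)^(n+1-i)/((n:ℚ)+1)
      = (p:ℚ) * bernoulli i * (((n.choose i : ℕ):ℚ) * (p:ℚ)^(n-i) / (((n-i : ℕ):ℚ)+1)) := by
  have hnat : (n+1) * n.choose i = (n+1).choose i * ((n-i)+1) := by
    have h1 := Nat.add_one_mul_choose_eq n (n-i)
    rw [Nat.choose_symm hi] at h1
    have h2 : (n+1) - i = (n-i)+1 := by omega
    have hcs : (n+1).choose ((n-i)+1) = (n+1).choose i := by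
      rw [← h2]; exact Nat.choose_symm (by omega)
    rw [← hcs]
    exact h1
  have hpow : (p:ℚ)^(n+1-i) = (p:ℚ)^(n-i) * p := by
    rw [show n+1-i = (n-i)+1 by omega, pow_succ]
  have hq : ((n:ℚ)+1) * (n.choose i : ℚ) = ((n+1).choose i : ℚ) * (((n-i:ℕ):ℚ)+1) := by
    exact_mod_cast congrArg (Nat.cast : ℕ → ℚ) hnat
  have d1 : ((n:ℚ)+1) ≠ 0 := by positivity
  have d2 : (((n-i:ℕ):ℚ)+1) ≠ 0 := by positivity
  rw [hpow, ← mul_div_assoc, div_eq_div_iff d1 d2]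
  linear_combination (-(bernoulli i * (p:ℚ)^(n-i) * (p:ℚ))) * hq

private lemma faul (p n : ℕ) :
    (p:ℚ) * bernoulli n = (Snat p n : ℚ)
      - ∑ i ∈ range n,
          (p:ℚ) * bernoulli i * (((n.choose i : ℕ):ℚ) * (p:ℚ)^(n-i) / (((n-i:ℕ):ℚ)+1)) := by
  have h := sum_range_pow p n
  have hS : (Snat p n : ℚ) = ∑ x ∈ range p, (x:ℚ)^n := by unfold Snat; push_cast; rfl
  rw [sum_range_succ] at h
  have hlast : bernoulli n * (((n+1).choose n : ℕ) : ℚ) * (p:ℚ)^(n+1-n)/((n:ℚ)+1)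
      = (p:ℚ) * bernoulli n := by
    rw [Nat.choose_succ_self_right, Nat.add_sub_cancel_left, pow_one]
    have d1 : ((n:ℚ)+1) ≠ 0 := by positivity
    field_simp
    push_cast
    ring
  rw [hlast] at h
  have hsum : ∑ i ∈ range n, bernoulli i * (((n+1).choose i : ℕ) : ℚ) * (p:ℚ)^(n+1-i)/((n:ℚ)+1)
      = ∑ i ∈ range n,
          (p:ℚ) * bernoulli i * (((n.choose i : ℕ):ℚ) * (p:ℚ)^(n-i) / (((n-i:ℕ):ℚ)+1)) := by
    refine Finset.sum_congr rfl fun i hi => ?_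
    exact term_eq p n i (le_of_lt (Finset.mem_range.mp hi))
  rw [hsum] at h
  rw [hS, h]
  ring

section
variable {p : ℕ} [hp : Fact p.Prime]

private lemma norm_nat_cast (m : ℕ) (hm : m ≠ 0) :
    ‖((m:ℕ):ℚ_[p])‖ = (p:ℝ)^(-(padicValNat p m : ℤ)) := by
  have h1 : ((m:ℚ_[p])) = (((m:ℚ)):ℚ_[p]) := by norm_cast
  rw [h1, Padic.eq_padicNorm,
    padicNorm.eq_zpow_of_nonzero (by exact_mod_cast hm : ((m:ℚ)) ≠ 0),
    padicValRat.of_nat]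
  push_cast
  rfl

private lemma coeff_norm (c m : ℕ) :
    ‖((((c:ℚ) * (p:ℚ)^m / (((m:ℕ):ℚ)+1)) : ℚ) : ℚ_[p])‖
      ≤ (p:ℝ)^(-(m:ℤ) + (padicValNat p (m+1) : ℤ)) := by
  have hcast : ((((c:ℚ) * (p:ℚ)^m / (((m:ℕ):ℚ)+1)) : ℚ) : ℚ_[p])
      = (c:ℚ_[p]) * (p:ℚ_[p])^m / ((m:ℚ_[p])+1) := by push_cast; rfl
  rw [hcast, norm_div, norm_mul]
  have hppow : ‖(p:ℚ_[p])^m‖ = (p:ℝ)^(-(m:ℤ)) := by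
    rw [norm_pow, Padic.norm_p, ← zpow_natCast, inv_zpow, ← zpow_neg]
  have hc1 : ‖(c:ℚ_[p])‖ ≤ 1 := by
    have : ((c:ℚ_[p])) = ((c:ℤ):ℚ_[p]) := by norm_cast
    rw [this]; exact Padic.norm_int_le_one _
  have hden : ‖(m:ℚ_[p])+1‖ = (p:ℝ)^(-(padicValNat p (m+1) : ℤ)) := by
    have : ((m:ℚ_[p])+1) = (((m+1 : ℕ)):ℚ_[p]) := by push_cast; ring
    rw [this, norm_nat_cast (m+1) (by omega)]
  rw [hden, hppow]
  have hp0 : (0:ℝ) < p := by exact_mod_cast hp.out.pos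
  have hd0 : (0:ℝ) < (p:ℝ)^(-(padicValNat p (m+1) : ℤ)) := zpow_pos hp0 _
  calc ‖(c:ℚ_[p])‖ * (p:ℝ)^(-(m:ℤ)) / (p:ℝ)^(-(padicValNat p (m+1) : ℤ))
      ≤ 1 * (p:ℝ)^(-(m:ℤ)) / (p:ℝ)^(-(padicValNat p (m+1) : ℤ)) := by
        apply div_le_div_of_nonneg_right _ hd0.le
        exact mul_le_mul_of_nonneg_right hc1 (zpow_pos hp0 _).le
    _ = (p:ℝ)^(-(m:ℤ) + (padicValNat p (m+1) : ℤ)) := by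
        rw [one_mul, ← zpow_sub₀ (ne_of_gt hp0)]
        ring_nf

private lemma val_le_m (m : ℕ) : (padicValNat p (m+1) : ℤ) ≤ m := by
  have hdvd : p ^ (padicValNat p (m+1)) ∣ (m+1) := pow_padicValNat_dvd
  have hle : p ^ (padicValNat p (m+1)) ≤ m+1 := Nat.le_of_dvd (by omega) hdvd
  have h2 : 2 ^ (padicValNat p (m+1)) ≤ 2 ^ m := by
    calc 2 ^ (padicValNat p (m+1)) ≤ p ^ (padicValNat p (m+1)) :=
          Nat.pow_le_pow_left hp.out.two_le _
      _ ≤ m + 1 := hle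
      _ ≤ 2 ^ m := Nat.lt_two_pow_self (n := m)
  exact_mod_cast (Nat.pow_le_pow_iff_right one_lt_two).mp h2

private lemma aux5 (j : ℕ) : j + 3 < 5 ^ (j+1) := by
  induction j with
  | zero => norm_num
  | succ j ih =>
    have : 5 ^ (j+2) = 5 * 5^(j+1) := by ring
    omega

private lemma val_le_m2 (m : ℕ) (hm : 2 ≤ m) (hp5 : 5 ≤ p) :
    (padicValNat p (m+1) : ℤ) ≤ (m:ℤ) - 2 := by
  have hdvd : p ^ (padicValNat p (m+1)) ∣ (m+1) := pow_padicValNat_dvd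
  have hle : p ^ (padicValNat p (m+1)) ≤ m+1 := Nat.le_of_dvd (by omega) hdvd
  have h5 : m + 1 < 5 ^ (m-1) := by
    have := aux5 (m-2)
    have h : m - 2 + 1 = m - 1 := by omega
    rw [h] at this
    omega
  have hlt : p ^ (padicValNat p (m+1)) < p ^ (m-1) :=
    lt_of_le_of_lt hle (lt_of_lt_of_le h5 (Nat.pow_le_pow_left hp5 _))
  have := (Nat.pow_lt_pow_iff_right (by omega : 1 < p)).mp hlt
  omega

private lemma term_bound (n i : ℕ)
    (hint : ‖(((p:ℚ) * bernoulli i : ℚ) : ℚ_[p])‖ ≤ 1) :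
    ‖((((p:ℚ) * bernoulli i
        * (((n.choose i : ℕ):ℚ) * (p:ℚ)^(n-i) / (((n-i:ℕ):ℚ)+1))) : ℚ) : ℚ_[p])‖
      ≤ (p:ℝ)^(-((n-i:ℕ):ℤ) + (padicValNat p ((n-i)+1) : ℤ)) := by
  rw [Rat.cast_mul, norm_mul]
  calc ‖(((p:ℚ) * bernoulli i : ℚ) : ℚ_[p])‖
        * ‖(((((n.choose i : ℕ):ℚ) * (p:ℚ)^(n-i) / (((n-i:ℕ):ℚ)+1)) : ℚ) : ℚ_[p])‖
      ≤ 1 * ((p:ℝ)^(-((n-i:ℕ):ℤ) + (padicValNat p ((n-i)+1) : ℤ))) :=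
        mul_le_mul hint (coeff_norm _ _) (norm_nonneg _) zero_le_one
    _ = _ := one_mul _

private lemma pB_int : ∀ n : ℕ, ‖(((p:ℚ) * bernoulli n : ℚ) : ℚ_[p])‖ ≤ 1 := by
  intro n
  induction n using Nat.strong_induction_on with
  | _ n ih =>
  rw [faul p n, Rat.cast_sub]
  have h1 : ‖(((Snat p n : ℚ)) : ℚ_[p])‖ ≤ 1 := by
    have : (((Snat p n : ℚ)) : ℚ_[p]) = ((Snat p n : ℤ) : ℚ_[p]) := by push_cast; rfl
    rw [this]; exact Padic.norm_int_le_one _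
  have hp1 : (1:ℝ) ≤ p := by exact_mod_cast hp.out.one_lt.le
  refine le_trans (by rw [sub_eq_add_neg]; exact Padic.nonarchimedean _ _)
    (max_le h1 ?_)
  rw [norm_neg, Rat.cast_sum]
  apply IsUltrametricDist.norm_sum_le_of_forall_le_of_nonneg zero_le_one
  intro i hi
  refine le_trans (term_bound n i (ih i (Finset.mem_range.mp hi))) ?_
  calc (p:ℝ)^(-((n-i:ℕ):ℤ) + (padicValNat p ((n-i)+1) : ℤ))
      ≤ (p:ℝ)^(0:ℤ) := zpow_le_zpow_right₀ hp1 (by have := val_le_m (p := p) (n-i); omega)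
    _ = 1 := zpow_zero _

private lemma pB_S (n : ℕ) (hev : Even n) (h4 : 4 ≤ n) (hp5 : 5 ≤ p) :
    ‖(((p:ℚ) * bernoulli n - (Snat p n : ℚ) : ℚ) : ℚ_[p])‖ ≤ (p:ℝ)^(-2:ℤ) := by
  have hfa : (p:ℚ) * bernoulli n - (Snat p n : ℚ)
      = -∑ i ∈ range n,
          (p:ℚ) * bernoulli i * (((n.choose i : ℕ):ℚ) * (p:ℚ)^(n-i) / (((n-i:ℕ):ℚ)+1)) := by
    rw [faul p n]; ring
  rw [hfa, Rat.cast_neg, norm_neg, Rat.cast_sum]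
  have hp1 : (1:ℝ) ≤ p := by exact_mod_cast hp.out.one_lt.le
  have hp0 : (0:ℝ) < p := by exact_mod_cast hp.out.pos
  apply IsUltrametricDist.norm_sum_le_of_forall_le_of_nonneg (zpow_pos hp0 _).le
  intro i hi
  rcases eq_or_ne i (n-1) with rfl | hne
  · have hb : bernoulli (n-1) = 0 := by
      rw [bernoulli_eq_bernoulli'_of_ne_one (by omega),
        bernoulli'_eq_zero_of_odd (Nat.Even.sub_odd (by omega) hev odd_one) (by omega)]
    simp [hb]
  · have hm2 : 2 ≤ n - i := by
      have := Finset.mem_range.mp hi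
      omega
    refine le_trans (term_bound n i (pB_int i)) ?_
    apply zpow_le_zpow_right₀ hp1
    have := val_le_m2 (p := p) (n-i) hm2 hp5
    omega

end
theorem sun_S2 (p : ℕ) (hp : p.Prime) (hgt : 3 < p) (k : ℕ) (hk : 1 ≤ k) :
    rcong p 2 ((p : ℚ) * bernoulli (k * (p - 1)))
      (-((k : ℚ) - 1) * ((p : ℚ) - 1) + (k : ℚ) * (p : ℚ) * bernoulli (p - 1)) := by
  haveI : Fact p.Prime := ⟨hp⟩
  have hp5 : 5 ≤ p := by
    have h4 : p ≠ 4 := by rintro rfl; norm_num at hp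
    omega
  have hodd : Odd p := hp.odd_of_ne_two (by omega)
  have hev : Even (p - 1) := Nat.Odd.sub_odd hodd odd_one
  have hev2 : Even (k * (p - 1)) := hev.mul_left k
  have h4 : 4 ≤ p - 1 := by omega
  have h4' : 4 ≤ k * (p - 1) := le_trans h4 (Nat.le_mul_of_pos_left _ hk)
  set A : ℚ := (p : ℚ) * bernoulli (k * (p - 1)) with hA
  set B : ℚ := -((k : ℚ) - 1) * ((p : ℚ) - 1) + (k : ℚ) * (p : ℚ) * bernoulli (p - 1) with hB
  set z : ℤ := (Snat p (k*(p-1)) : ℤ) - ((p:ℤ) - 1) - k * ((Snat p (p-1) : ℤ) - ((p:ℤ)-1)) with hz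
  have hp1R : (1:ℝ) < p := by exact_mod_cast hp.one_lt
  have hkey : ((A - B : ℚ) : ℚ_[p])
      = (((p:ℚ) * bernoulli (k*(p-1)) - (Snat p (k*(p-1)) : ℚ) : ℚ) : ℚ_[p])
        - (k : ℚ_[p]) * (((p:ℚ) * bernoulli (p-1) - (Snat p (p-1) : ℚ) : ℚ) : ℚ_[p])
        + ((z : ℤ) : ℚ_[p]) := by
    rw [hA, hB, hz]
    push_cast [Nat.cast_sub (by omega : 1 ≤ p)]
    ring
  have hX1 : ‖(((p:ℚ) * bernoulli (k*(p-1)) - (Snat p (k*(p-1)) : ℚ) : ℚ) : ℚ_[p])‖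
      ≤ (p:ℝ)^(-2:ℤ) := pB_S _ hev2 h4' hp5
  have hX2 : ‖(((p:ℚ) * bernoulli (p-1) - (Snat p (p-1) : ℚ) : ℚ) : ℚ_[p])‖
      ≤ (p:ℝ)^(-2:ℤ) := pB_S _ hev h4 hp5
  have hkX2 : ‖(k : ℚ_[p]) * (((p:ℚ) * bernoulli (p-1) - (Snat p (p-1) : ℚ) : ℚ) : ℚ_[p])‖
      ≤ (p:ℝ)^(-2:ℤ) := by
    rw [norm_mul]
    have hk1 : ‖(k:ℚ_[p])‖ ≤ 1 := by
      have : ((k:ℚ_[p])) = ((k:ℤ):ℚ_[p]) := by norm_cast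
      rw [this]; exact Padic.norm_int_le_one _
    calc ‖(k:ℚ_[p])‖ * _ ≤ 1 * (p:ℝ)^(-2:ℤ) :=
          mul_le_mul hk1 hX2 (norm_nonneg _) zero_le_one
      _ = _ := one_mul _
  have hzn : ‖((z : ℤ) : ℚ_[p])‖ ≤ (p:ℝ)^(-2:ℤ) := by
    have h := (Padic.norm_int_le_pow_iff_dvd (p := p) z 2).mpr (lemC p k hk)
    simpa using h
  have hD : ‖((A - B : ℚ) : ℚ_[p])‖ ≤ (p:ℝ)^(-2:ℤ) := by
    rw [hkey]
    refine le_trans (Padic.nonarchimedean _ _) (max_le ?_ hzn)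
    refine le_trans (by rw [sub_eq_add_neg]; exact Padic.nonarchimedean _ _) (max_le hX1 ?_)
    rwa [norm_neg]
  rcases eq_or_ne A B with h | h
  · exact Or.inl h
  · right
    have hAB : A - B ≠ 0 := sub_ne_zero.mpr h
    have hnorm : ‖((A - B : ℚ) : ℚ_[p])‖ = (p:ℝ)^(-(padicValRat p (A - B))) := by
      rw [Padic.eq_padicNorm, padicNorm.eq_zpow_of_nonzero hAB]
      push_cast
      rfl
    rw [hnorm] at hD
    have := (zpow_le_zpow_iff_right₀ hp1R).mp hD
    omega
end
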